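/- arXiv:1202.4355 — 4 statements merged into one kernel-verified Lean document; each statement's English description precedes it below -/
import Mathlib

section
/- Let K = ℚ(α, τ) with α³ + α² − 2α − 1 = 0 and τ² − τ − 1 = 0 (α = 2cos(2π/7), τ the golden ratio). Define b = (6τ−3)α² + (14τ−8)α + 5τ−3 and c = τα² + 2τα + 1, and let E be the curve y² + (1−c)xy − by = x³ − bx² over K. Then E is a nonsingular (elliptic) curve, i.e. its discriminant is nonzero. -/
/-- α = 2cos(2π/7) -/
noncomputable def alpha : ℝ := 2 * Real.cos (2 * Real.pi / 7)

/-- τ = (1+√5)/2, the golden ratio -/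
noncomputable def tau : ℝ := (1 + Real.sqrt 5) / 2

/-- K = ℚ(α, τ) as a subfield of ℝ -/
noncomputable def K : IntermediateField ℚ ℝ :=
  IntermediateField.adjoin ℚ ({alpha, tau} : Set ℝ)

/-- α as an element of K -/
noncomputable def alphaK : K :=
  ⟨alpha, IntermediateField.subset_adjoin ℚ _ (Set.mem_insert _ _)⟩

/-- τ as an element of K -/
noncomputable def tauK : K :=
  ⟨tau, IntermediateField.subset_adjoin ℚ _ (Set.mem_insert_of_mem _ rfl)⟩

/-- b = (6τ−3)α² + (14τ−8)α + 5τ−3 -/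
noncomputable def b : K :=
  (6 * tauK - 3) * alphaK ^ 2 + (14 * tauK - 8) * alphaK + 5 * tauK - 3

/-- c = τα² + 2τα + 1 -/
noncomputable def c : K := tauK * alphaK ^ 2 + 2 * tauK * alphaK + 1

/-- The Tate normal form curve E_{b,c} : y² + (1−c)xy − by = x³ − bx² -/
noncomputable def E : WeierstrassCurve K :=
  { a₁ := 1 - c, a₂ := -b, a₃ := -b, a₄ := 0, a₆ := 0 }

lemma alpha_cubic : alpha^3 + alpha^2 - 2*alpha - 1 = 0 := by
  have hpi := Real.pi_pos
  have e1 : Real.cos (2*(2*(2*Real.pi/7))) = Real.cos (3*(2*Real.pi/7)) := by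
    rw [show (3:ℝ)*(2*Real.pi/7) = 2*Real.pi - 2*(2*(2*Real.pi/7)) by ring,
      Real.cos_two_pi_sub]
  rw [Real.cos_two_mul, Real.cos_two_mul, Real.cos_three_mul] at e1
  have hx1 : Real.cos (2*Real.pi/7) < 1 := by
    have := Real.cos_lt_cos_of_nonneg_of_le_pi (le_refl 0)
      (by linarith : 2*Real.pi/7 ≤ Real.pi) (by linarith : (0:ℝ) < 2*Real.pi/7)
    rwa [Real.cos_zero] at this
  have h4 : (Real.cos (2*Real.pi/7) - 1) * (8*Real.cos (2*Real.pi/7)^3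
      + 4*Real.cos (2*Real.pi/7)^2 - 4*Real.cos (2*Real.pi/7) - 1) = 0 := by
    linear_combination e1
  rcases mul_eq_zero.mp h4 with h | h
  · linarith
  · unfold alpha; linear_combination h

lemma tau_quad : tau^2 - tau - 1 = 0 := by
  have h5 : Real.sqrt 5 ^ 2 = 5 := Real.sq_sqrt (by norm_num)
  unfold tau
  linear_combination h5/4

lemma alphaK_coe : ((alphaK : K) : ℝ) = alpha := rfl
lemma tauK_coe : ((tauK : K) : ℝ) = tau := rfl

lemma alphaK_cubic : alphaK^3 + alphaK^2 - 2*alphaK - 1 = 0 := by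
  have hr := alpha_cubic
  apply Subtype.coe_injective
  push_cast [alphaK_coe]
  norm_cast

lemma tauK_quad : tauK^2 - tauK - 1 = 0 := by
  have hr := tau_quad
  apply Subtype.coe_injective
  push_cast [tauK_coe]
  norm_cast

set_option maxHeartbeats 1000000 in
set_option maxRecDepth 100000 in
lemma delta_eq_K : E.Δ
    = (tauK - 13/8) * (78259400 + 219277968*alphaK + 97587880*alphaK^2) := by
  have h1 : E.Δ = -((1-c)^2+4*(-b))^2
        * ((1-c)^2*0 + 4*(-b)*0 - (1-c)*(-b)*0 + (-b)*(-b)^2 - 0^2)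
      - 8*(2*0+(1-c)*(-b))^3 - 27*((-b)^2+4*0)^2
      + 9*((1-c)^2+4*(-b))*(2*0+(1-c)*(-b))*((-b)^2+4*0) := rfl
  rw [h1, b, c]
  linear_combination ((-127057750 : K) + (78166495 : K)*tauK + (-100773590 : K)*alphaK + (61747466 : K)*alphaK*tauK + (-76275859 : K)*alphaK^2 + (45638355 : K)*alphaK^2*tauK + (-51255926 : K)*alphaK^3 + (28113291 : K)*alphaK^3*tauK + (-28199509 : K)*alphaK^4 + (12041525 : K)*alphaK^4*tauK + (-11969285 : K)*alphaK^5 + (2453640 : K)*alphaK^5*tauK + (-3732178 : K)*alphaK^6 + (-293446 : K)*alphaK^6*tauK + (-750108 : K)*alphaK^7 + (-146191 : K)*alphaK^7*tauK + (-36540 : K)*alphaK^8 + (93608 : K)*alphaK^8*tauK + (27846 : K)*alphaK^9 + (61533 : K)*alphaK^9*tauK + (7290 : K)*alphaK^10 + (12825 : K)*alphaK^10*tauK + (540 : K)*alphaK^11 + (945 : K)*alphaK^11*tauK) * alphaK_cubic + ((-107700 : K) + (153625 : K)*tauK + (-116875 : K)*tauK^2 + (50000 : K)*tauK^3 + (-1362440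 : K)*alphaK + (1972000 : K)*alphaK*tauK + (-1506000 : K)*alphaK*tauK^2 + (655000 : K)*alphaK*tauK^3 + (-7417036 : K)*alphaK^2 + (10885820 : K)*alphaK^2*tauK + (-8373300 : K)*alphaK^2*tauK^2 + (3721500 : K)*alphaK^2*tauK^3 + (-20000 : K)*alphaK^2*tauK^4 + (-22843184 : K)*alphaK^3 + (33884576 : K)*alphaK^3*tauK + (-26415440 : K)*alphaK^3*tauK^2 + (12085600 : K)*alphaK^3*tauK^3 + (-243000 : K)*alphaK^3*tauK^4 + (-44176390 : K)*alphaK^4 + (65655012 : K)*alphaK^4*tauK + (-52465032 : K)*alphaK^4*tauK^2 + (24963480 : K)*alphaK^4*tauK^3 + (-1257500 : K)*alphaK^4*tauK^4 + (2000 : K)*alphaK^4*tauK^5 + (-56617722 : K)*alphaK^5 + (82692046 : K)*alphaK^5*tauK + (-69122960 : K)*alphaK^5*tauK^2 + (34672184 : K)*alphaK^5*tauK^3 + (-3631050 : K)*alphaK^5*tauK^4 + (20800 : K)*alphaK^5*tauK^5 + (-49831267 : K)*alphaK^6 + (68834677 : K)*alphaK^6*tauK + (-62349432 : K)*alphaK^6*tauK^2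 + (33527500 : K)*alphaK^6*tauK^3 + (-6460879 : K)*alphaK^6*tauK^4 + (90840 : K)*alphaK^6*tauK^5 + (-30986362 : K)*alphaK^7 + (37847994 : K)*alphaK^7*tauK + (-39383204 : K)*alphaK^7*tauK^2 + (23142052 : K)*alphaK^7*tauK^3 + (-7417282 : K)*alphaK^7*tauK^4 + (218904 : K)*alphaK^7*tauK^5 + (-13866600 : K)*alphaK^8 + (13591880 : K)*alphaK^8*tauK + (-17721864 : K)*alphaK^8*tauK^2 + (11628813 : K)*alphaK^8*tauK^3 + (-5612078 : K)*alphaK^8*tauK^4 + (323421 : K)*alphaK^8*tauK^5 + (-4385212 : K)*alphaK^9 + (3228322 : K)*alphaK^9*tauK + (-5712830 : K)*alphaK^9*tauK^2 + (4319150 : K)*alphaK^9*tauK^3 + (-2804506 : K)*alphaK^9*tauK^4 + (308874 : K)*alphaK^9*tauK^5 + (-845742 : K)*alphaK^10 + (621304 : K)*alphaK^10*tauK + (-1274374 : K)*alphaK^10*tauK^2 + (1194659 : K)*alphaK^10*tauK^3 + (-909359 : K)*alphaK^10*tauK^4 + (194974 : K)*alphaK^10*tauK^5 + (-23814 : K)*alphaK^11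 + (152360 : K)*alphaK^11*tauK + (-166670 : K)*alphaK^11*tauK^2 + (245104 : K)*alphaK^11*tauK^3 + (-184012 : K)*alphaK^11*tauK^4 + (81008 : K)*alphaK^11*tauK^5 + (34056 : K)*alphaK^12 + (38412 : K)*alphaK^12*tauK + (-3708 : K)*alphaK^12*tauK^2 + (36963 : K)*alphaK^12*tauK^3 + (-22248 : K)*alphaK^12*tauK^4 + (21348 : K)*alphaK^12*tauK^5 + (7830 : K)*alphaK^13 + (5940 : K)*alphaK^13*tauK + (1890 : K)*alphaK^13*tauK^2 + (4050 : K)*alphaK^13*tauK^3 + (-1728 : K)*alphaK^13*tauK^4 + (3240 : K)*alphaK^13*tauK^5 + (540 : K)*alphaK^14 + (405 : K)*alphaK^14*tauK + (135 : K)*alphaK^14*tauK^2 + (270 : K)*alphaK^14*tauK^3 + (-108 : K)*alphaK^14*tauK^4 + (216 : K)*alphaK^14*tauK^5) * tauK_quad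

theorem stmt_3 : E.Δ ≠ 0 := by
  intro h
  have hK : (tauK - 13/8) * (78259400 + 219277968*alphaK + 97587880*alphaK^2) = 0 := by
    rw [← delta_eq_K]; exact h
  have h0' : (tau - 13/8) * (78259400 + 219277968*alpha + 97587880*alpha^2) = 0 := by
    have h2 := congrArg (Subtype.val) hK
    push_cast [alphaK_coe, tauK_coe] at h2
    exact_mod_cast h2
  have hpi := Real.pi_pos
  have halpha : 0 < alpha := by
    have : 0 < Real.cos (2 * Real.pi / 7) :=
      Real.cos_pos_of_mem_Ioo ⟨by linarith, by linarith⟩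
    unfold alpha; linarith
  have hs5 : Real.sqrt 5 < 9/4 := by
    nlinarith [Real.sq_sqrt (show (0:ℝ) ≤ 5 by norm_num), Real.sqrt_nonneg 5]
  have htau : tau < 13/8 := by unfold tau; linarith
  nlinarith [sq_nonneg alpha, halpha, htau, h0']
end

section
/- Let K = ℚ(a) where a⁹ − a⁸ − 5a⁷ + 5a⁶ + 7a⁵ − 8a⁴ − 2a³ + 4a² − a − 1 = 0. Set b = a⁷ − 5a⁶ − 3a⁵ + 22a⁴ − 3a³ − 28a² + 9a + 8 and c = −2a⁸ + 2a⁷ + 10a⁶ − 10a⁵ − 16a⁴ + 15a³ + 10a² − 6a − 3. Then the curve E: y² + (1−c)xy − by = x³ − bx² is an elliptic curve over K and the point (0,0) has order exactly 29 in E(K). -/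
open WeierstrassCurve WeierstrassCurve.Affine WeierstrassCurve.Affine.Point in
private lemma some_eq_some' {K : Type} [Field K] {W : WeierstrassCurve.Affine K}
    {x₁ y₁ x₂ y₂ : K} (h₁ : W.Nonsingular x₁ y₁) (h₂ : W.Nonsingular x₂ y₂)
    (hx : x₁ = x₂) (hy : y₁ = y₂) :
    WeierstrassCurve.Affine.Point.some _ _ h₁ = WeierstrassCurve.Affine.Point.some _ _ h₂ := by
  subst hx; subst hy; rfl

set_option maxHeartbeats 4000000 in
open scoped Classical in
private lemma aux_7 (K : Type) [Field K] [CharZero K] (a : K)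
    (hpoly : a^9 - a^8 - 5*a^7 + 5*a^6 + 7*a^5 - 8*a^4 - 2*a^3 + 4*a^2 - a - 1 = 0)
    (W : WeierstrassCurve.Affine K)
    (ha1 : W.a₁ = 1 - (-2*a^8 + 2*a^7 + 10*a^6 - 10*a^5 - 16*a^4 + 15*a^3 + 10*a^2 - 6*a - 3))
    (ha2 : W.a₂ = -(a^7 - 5*a^6 - 3*a^5 + 22*a^4 - 3*a^3 - 28*a^2 + 9*a + 8))
    (ha3 : W.a₃ = -(a^7 - 5*a^6 - 3*a^5 + 22*a^4 - 3*a^3 - 28*a^2 + 9*a + 8))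
    (ha4 : W.a₄ = 0)
    (ha6 : W.a₆ = 0) :
    W.Δ ≠ 0 ∧
    ∃ h : W.Nonsingular 0 0,
      addOrderOf (WeierstrassCurve.Affine.Point.some _ _ h) = 29 := by
  have hDelta : W.Δ ≠ 0 := by
    intro hz
    have hcert : W.Δ * (((2162414080 : K)/59) * a ^ 8 + ((-3086554033 : K)/59) * a ^ 7 + ((-9481955832 : K)/59) * a ^ 6 + ((14853576296 : K)/59) * a ^ 5 + ((8728685138 : K)/59) * a ^ 4 + ((-20988075415 : K)/59) * a ^ 3 + ((4733832160 : K)/59) * a ^ 2 + ((6583112243 : K)/59) * a + ((-4984564868 : K)/59)) = 1 := by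
      simp only [WeierstrassCurve.Δ, WeierstrassCurve.b₂, WeierstrassCurve.b₄,
        WeierstrassCurve.b₆, WeierstrassCurve.b₈, ha1, ha2, ha3, ha4, ha6]
      linear_combination ((((34598625280 : K)/59) * a ^ 52 + ((-672160119568 : K)/59) * a ^ 51 + ((4162480170912 : K)/59) * a ^ 50 + ((51480553040 : K)/59) * a ^ 49 + ((-103521486111984 : K)/59) * a ^ 48 + ((306648495117472 : K)/59) * a ^ 47 + ((837490242073680 : K)/59) * a ^ 46 + ((-5396008641743600 : K)/59) * a ^ 45 + ((80594195927008 : K)/59) * a ^ 44 + ((47409975007182728 : K)/59) * a ^ 43 + ((-58103641345172568 : K)/59) * a ^ 42 + ((-252462108495118384 : K)/59) * a ^ 41 + ((581890174199446208 : K)/59) * a ^ 40 + ((806209594566826384 : K)/59) * a ^ 39 + ((-3329356803722658604 : K)/59) * a ^ 38 + ((-952931112736226152 : K)/59) * a ^ 37 + ((13099716767658013592 : K)/59) * a ^ 36 + ((-4787876205404923980 : K)/59) * a ^ 35 + ((-37548312698411641540 : K)/59) * a ^ 34 + ((33204304698222437254 : K)/59) * a ^ 33 + ((79403356440842892682 :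 K)/59) * a ^ 32 + ((-113862306857408196073 : K)/59) * a ^ 31 + ((-120210154745773305772 : K)/59) * a ^ 30 + ((270877127863709285137 : K)/59) * a ^ 29 + ((112481403733514103546 : K)/59) * a ^ 28 + ((-485301322053281297031 : K)/59) * a ^ 27 + ((-6360759436664625417 : K)/59) * a ^ 26 + ((674474962097925913124 : K)/59) * a ^ 25 + ((-195011650730312502986 : K)/59) * a ^ 24 + ((-731946368850825975625 : K)/59) * a ^ 23 + ((408314340648635391340 : K)/59) * a ^ 22 + ((611785747148898086954 : K)/59) * a ^ 21 + ((-519498225678202610456 : K)/59) * a ^ 20 + ((-375331109840427540461 : K)/59) * a ^ 19 + ((474752880665457606089 : K)/59) * a ^ 18 + ((144724059023914348435 : K)/59) * a ^ 17 + ((-321170177203424963489 : K)/59) * a ^ 16 + ((-7768581328420120374 : K)/59) * a ^ 15 + ((157147951954468980909 : K)/59) * a ^ 14 + ((-31485681120507825435 : K)/59) * a ^ 13 + ((-50786451080655001344 : K)/59) * a ^ 12 + ((21908328045952203919 : K)/59) * a ^ 11 + ((7519263350902762439 : K)/59) * a ^ 10 + ((-7024878910452259720 : K)/59) * a ^ 9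 + ((1508578803436731351 : K)/59) * a ^ 8 + ((749051159022266669 : K)/59) * a ^ 7 + ((-1060847625476714981 : K)/59) * a ^ 6 + ((212369108508247389 : K)/59) * a ^ 5 + ((257984733088585975 : K)/59) * a ^ 4 + ((-79882374086096777 : K)/59) * a ^ 3 + ((-36520558745293017 : K)/59) * a ^ 2 + ((8417457140674501 : K)/59) * a + ((2878765655605307 : K)/59))) * hpoly
    rw [hz, zero_mul] at hcert
    exact zero_ne_one hcert
  have heq1 : W.Equation (0 : K) (0 : K) := by
    rw [W.equation_iff, ha1, ha2, ha3, ha4, ha6]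
    linear_combination ((0 : K)) * hpoly
  have hns1 : W.Nonsingular (0 : K) (0 : K) := (W.equation_iff_nonsingular_of_Δ_ne_zero hDelta).mp heq1
  have heq2 : W.Equation ((1 : K) * a ^ 7 + (-5 : K) * a ^ 6 + (-3 : K) * a ^ 5 + (22 : K) * a ^ 4 + (-3 : K) * a ^ 3 + (-28 : K) * a ^ 2 + (9 : K) * a + (8 : K)) ((-26 : K) * a ^ 8 + (16 : K) * a ^ 7 + (153 : K) * a ^ 6 + (-65 : K) * a ^ 5 + (-281 : K) * a ^ 4 + (87 : K) * a ^ 3 + (193 : K) * a ^ 2 + (-16 : K) * a + (-28 : K)) := by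
    rw [W.equation_iff, ha1, ha2, ha3, ha4, ha6]
    linear_combination (((-52 : K) * a ^ 14 + (292 : K) * a ^ 13 + (302 : K) * a ^ 12 + (-2900 : K) * a ^ 11 + (-22 : K) * a ^ 10 + (11680 : K) * a ^ 9 + (-3382 : K) * a ^ 8 + (-24163 : K) * a ^ 7 + (8605 : K) * a ^ 6 + (25963 : K) * a ^ 5 + (-7913 : K) * a ^ 4 + (-12979 : K) * a ^ 3 + (1892 : K) * a ^ 2 + (1700 : K) * a + (-112 : K))) * hpoly
  have hns2 : W.Nonsingular ((1 : K) * a ^ 7 + (-5 : K) * a ^ 6 + (-3 : K) * a ^ 5 + (22 : K) * a ^ 4 + (-3 : K) * a ^ 3 + (-28 : K) * a ^ 2 + (9 : K) * a + (8 : K)) ((-26 : K) * a ^ 8 + (16 : K) * a ^ 7 + (153 : K) * a ^ 6 + (-65 : K) * a ^ 5 + (-281 : K) * a ^ 4 + (87 : K) * a ^ 3 + (193 : K) * a ^ 2 + (-16 : K) * a + (-28 : K)) := (W.equation_iff_nonsingular_of_Δ_ne_zero hDelta).mp heq2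
  have heq3 : W.Equation ((-2 : K) * a ^ 8 + (2 : K) * a ^ 7 + (10 : K) * a ^ 6 + (-10 : K) * a ^ 5 + (-16 : K) * a ^ 4 + (15 : K) * a ^ 3 + (10 : K) * a ^ 2 + (-6 : K) * a + (-3 : K)) ((2 : K) * a ^ 8 + (-1 : K) * a ^ 7 + (-15 : K) * a ^ 6 + (7 : K) * a ^ 5 + (38 : K) * a ^ 4 + (-18 : K) * a ^ 3 + (-38 : K) * a ^ 2 + (15 : K) * a + (11 : K)) := by
    rw [W.equation_iff, ha1, ha2, ha3, ha4, ha6]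
    linear_combination ((0 : K)) * hpoly
  have hns3 : W.Nonsingular ((-2 : K) * a ^ 8 + (2 : K) * a ^ 7 + (10 : K) * a ^ 6 + (-10 : K) * a ^ 5 + (-16 : K) * a ^ 4 + (15 : K) * a ^ 3 + (10 : K) * a ^ 2 + (-6 : K) * a + (-3 : K)) ((2 : K) * a ^ 8 + (-1 : K) * a ^ 7 + (-15 : K) * a ^ 6 + (7 : K) * a ^ 5 + (38 : K) * a ^ 4 + (-18 : K) * a ^ 3 + (-38 : K) * a ^ 2 + (15 : K) * a + (11 : K)) := (W.equation_iff_nonsingular_of_Δ_ne_zero hDelta).mp heq3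
  have heq6 : W.Equation ((-3 : K) * a ^ 8 + (3 : K) * a ^ 7 + (14 : K) * a ^ 6 + (-14 : K) * a ^ 5 + (-15 : K) * a ^ 4 + (16 : K) * a ^ 3 + (-1 : K) * a ^ 2 + (1 : K) * a + (2 : K)) ((3 : K) * a ^ 8 + (-3 : K) * a ^ 7 + (-10 : K) * a ^ 6 + (8 : K) * a ^ 5 + (2 : K) * a ^ 4 + (1 : K) * a ^ 3 + (14 : K) * a ^ 2 + (-13 : K) * a + (-8 : K)) := by
    rw [W.equation_iff, ha1, ha2, ha3, ha4, ha6]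
    linear_combination (((9 : K) * a ^ 15 + (-9 : K) * a ^ 14 + (-144 : K) * a ^ 13 + (189 : K) * a ^ 12 + (713 : K) * a ^ 11 + (-1100 : K) * a ^ 10 + (-1448 : K) * a ^ 9 + (2690 : K) * a ^ 8 + (1133 : K) * a ^ 7 + (-2907 : K) * a ^ 6 + (-137 : K) * a ^ 5 + (1101 : K) * a ^ 4 + (24 : K) * a ^ 3 + (88 : K) * a ^ 2 + (-120 : K) * a + (-88 : K))) * hpoly
  have hns6 : W.Nonsingular ((-3 : K) * a ^ 8 + (3 : K) * a ^ 7 + (14 : K) * a ^ 6 + (-14 : K) * a ^ 5 + (-15 : K) * a ^ 4 + (16 : K) * a ^ 3 + (-1 : K) * a ^ 2 + (1 : K) * a + (2 : K)) ((3 : K) * a ^ 8 + (-3 : K) * a ^ 7 + (-10 : K) * a ^ 6 + (8 : K) * a ^ 5 + (2 : K) * a ^ 4 + (1 : K) * a ^ 3 + (14 : K) * a ^ 2 + (-13 : K) * a + (-8 : K)) := (W.equation_iff_nonsingular_of_Δ_ne_zero hDelta).mp heq6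
  have heq7 : W.Equation ((-2 : K) * a ^ 8 + (9 : K) * a ^ 6 + (-12 : K) * a ^ 4 + (-2 : K) * a ^ 3 + (4 : K) * a ^ 2 + (4 : K) * a + (1 : K)) ((4 : K) * a ^ 8 + (12 : K) * a ^ 7 + (-16 : K) * a ^ 6 + (-47 : K) * a ^ 5 + (29 : K) * a ^ 4 + (61 : K) * a ^ 3 + (-19 : K) * a ^ 2 + (-23 : K) * a + (-3 : K)) := by
    rw [W.equation_iff, ha1, ha2, ha3, ha4, ha6]
    linear_combination (((-8 : K) * a ^ 15 + (-36 : K) * a ^ 14 + (60 : K) * a ^ 13 + (300 : K) * a ^ 12 + (-218 : K) * a ^ 11 + (-1079 : K) * a ^ 10 + (401 : K) * a ^ 9 + (2075 : K) * a ^ 8 + (-223 : K) * a ^ 7 + (-2239 : K) * a ^ 6 + (-389 : K) * a ^ 5 + (1300 : K) * a ^ 4 + (620 : K) * a ^ 3 + (-310 : K) * a ^ 2 + (-224 : K) * a + (-28 : K))) * hpoly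
  have hns7 : W.Nonsingular ((-2 : K) * a ^ 8 + (9 : K) * a ^ 6 + (-12 : K) * a ^ 4 + (-2 : K) * a ^ 3 + (4 : K) * a ^ 2 + (4 : K) * a + (1 : K)) ((4 : K) * a ^ 8 + (12 : K) * a ^ 7 + (-16 : K) * a ^ 6 + (-47 : K) * a ^ 5 + (29 : K) * a ^ 4 + (61 : K) * a ^ 3 + (-19 : K) * a ^ 2 + (-23 : K) * a + (-3 : K)) := (W.equation_iff_nonsingular_of_Δ_ne_zero hDelta).mp heq7
  have heq14 : W.Equation ((2 : K) * a ^ 7 + (-2 : K) * a ^ 6 + (-8 : K) * a ^ 5 + (10 : K) * a ^ 4 + (8 : K) * a ^ 3 + (-13 : K) * a ^ 2 + (3 : K)) ((-3 : K) * a ^ 8 + (-6 : K) * a ^ 7 + (12 : K) * a ^ 6 + (17 : K) * a ^ 5 + (-25 : K) * a ^ 4 + (-12 : K) * a ^ 3 + (23 : K) * a ^ 2 + (-5 : K) * a + (-7 : K)) := by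
    rw [W.equation_iff, ha1, ha2, ha3, ha4, ha6]
    linear_combination (((-12 : K) * a ^ 14 + (-12 : K) * a ^ 13 + (116 : K) * a ^ 12 + (48 : K) * a ^ 11 + (-496 : K) * a ^ 10 + (16 : K) * a ^ 9 + (1068 : K) * a ^ 8 + (-403 : K) * a ^ 7 + (-1114 : K) * a ^ 6 + (744 : K) * a ^ 5 + (369 : K) * a ^ 4 + (-433 : K) * a ^ 3 + (135 : K) * a ^ 2 + (-2 : K) * a + (-66 : K))) * hpoly
  have hns14 : W.Nonsingular ((2 : K) * a ^ 7 + (-2 : K) * a ^ 6 + (-8 : K) * a ^ 5 + (10 : K) * a ^ 4 + (8 : K) * a ^ 3 + (-13 : K) * a ^ 2 + (3 : K)) ((-3 : K) * a ^ 8 + (-6 : K) * a ^ 7 + (12 : K) * a ^ 6 + (17 : K) * a ^ 5 + (-25 : K) * a ^ 4 + (-12 : K) * a ^ 3 + (23 : K) * a ^ 2 + (-5 : K) * a + (-7 : K)) := (W.equation_iff_nonsingular_of_Δ_ne_zero hDelta).mp heq14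
  have heq28 : W.Equation (0 : K) ((1 : K) * a ^ 7 + (-5 : K) * a ^ 6 + (-3 : K) * a ^ 5 + (22 : K) * a ^ 4 + (-3 : K) * a ^ 3 + (-28 : K) * a ^ 2 + (9 : K) * a + (8 : K)) := by
    rw [W.equation_iff, ha1, ha2, ha3, ha4, ha6]
    linear_combination ((0 : K)) * hpoly
  have hns28 : W.Nonsingular (0 : K) ((1 : K) * a ^ 7 + (-5 : K) * a ^ 6 + (-3 : K) * a ^ 5 + (22 : K) * a ^ 4 + (-3 : K) * a ^ 3 + (-28 : K) * a ^ 2 + (9 : K) * a + (8 : K)) := (W.equation_iff_nonsingular_of_Δ_ne_zero hDelta).mp heq28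
  have hnegY1 : W.negY (0 : K) (0 : K) = ((1 : K) * a ^ 7 + (-5 : K) * a ^ 6 + (-3 : K) * a ^ 5 + (22 : K) * a ^ 4 + (-3 : K) * a ^ 3 + (-28 : K) * a ^ 2 + (9 : K) * a + (8 : K)) := by
    rw [WeierstrassCurve.Affine.negY, ha1, ha3]
    linear_combination ((0 : K)) * hpoly
  have hsub1 : ((-1 : K) * a ^ 7 + (5 : K) * a ^ 6 + (3 : K) * a ^ 5 + (-22 : K) * a ^ 4 + (3 : K) * a ^ 3 + (28 : K) * a ^ 2 + (-9 : K) * a + (-8 : K)) ≠ 0 := by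
    intro hz
    have hcert : (((-1 : K) * a ^ 7 + (5 : K) * a ^ 6 + (3 : K) * a ^ 5 + (-22 : K) * a ^ 4 + (3 : K) * a ^ 3 + (28 : K) * a ^ 2 + (-9 : K) * a + (-8 : K))) * ((-6 : K) * a ^ 8 + (4 : K) * a ^ 7 + (26 : K) * a ^ 6 + (-23 : K) * a ^ 5 + (-23 : K) * a ^ 4 + (43 : K) * a ^ 3 + (-6 : K) * a ^ 2 + (-14 : K) * a + (10 : K)) = 1 := by linear_combination (((6 : K) * a ^ 6 + (-28 : K) * a ^ 5 + (-22 : K) * a ^ 4 + (105 : K) * a ^ 3 + (-27 : K) * a ^ 2 + (-103 : K) * a + (81 : K))) * hpoly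
    rw [hz, zero_mul] at hcert
    exact zero_ne_one hcert
  have hyne1 : (0 : K) ≠ W.negY (0 : K) (0 : K) := by
    rw [hnegY1]
    intro hz
    exact hsub1 (by linear_combination hz)
  have hden1 : (0 : K) - W.negY (0 : K) (0 : K) ≠ 0 := by
    rw [hnegY1]
    intro hz
    exact hsub1 (by linear_combination hz)
  have hL1 : W.slope (0 : K) (0 : K) (0 : K) (0 : K) = (0 : K) := by
    rw [WeierstrassCurve.Affine.slope_of_Y_ne rfl hyne1, div_eq_iff hden1, hnegY1,
      ha1, ha2, ha4]
    linear_combination ((0 : K)) * hpoly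
  have hop1_2 : WeierstrassCurve.Affine.Point.some _ _ hns1 + WeierstrassCurve.Affine.Point.some _ _ hns1 = WeierstrassCurve.Affine.Point.some _ _ hns2 := by
    rw [WeierstrassCurve.Affine.Point.add_self_of_Y_ne hyne1]
    refine some_eq_some' _ _ ?_ ?_
    · rw [hL1]
      simp only [WeierstrassCurve.Affine.addX, ha1, ha2]
      linear_combination ((0 : K)) * hpoly
    · rw [hL1]
      simp only [WeierstrassCurve.Affine.addY, WeierstrassCurve.Affine.negAddY,
        WeierstrassCurve.Affine.addX, WeierstrassCurve.Affine.negY, ha1, ha2, ha3]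
      linear_combination (((-2 : K) * a ^ 6 + (10 : K) * a ^ 5 + (6 : K) * a ^ 4 + (-44 : K) * a ^ 3 + (4 : K) * a ^ 2 + (63 : K) * a + (-4 : K))) * hpoly
  have hsubA2 : ((1 : K) * a ^ 7 + (-5 : K) * a ^ 6 + (-3 : K) * a ^ 5 + (22 : K) * a ^ 4 + (-3 : K) * a ^ 3 + (-28 : K) * a ^ 2 + (9 : K) * a + (8 : K)) ≠ 0 := by
    intro hz
    have hcert : (((1 : K) * a ^ 7 + (-5 : K) * a ^ 6 + (-3 : K) * a ^ 5 + (22 : K) * a ^ 4 + (-3 : K) * a ^ 3 + (-28 : K) * a ^ 2 + (9 : K) * a + (8 : K))) * ((6 : K) * a ^ 8 + (-4 : K) * a ^ 7 + (-26 : K) * a ^ 6 + (23 : K) * a ^ 5 + (23 : K) * a ^ 4 + (-43 : K) * a ^ 3 + (6 : K) * a ^ 2 + (14 : K) * a + (-10 : K)) = 1 := by linear_combination (((6 : K) * a ^ 6 + (-28 : K) * a ^ 5 + (-22 : K) * a ^ 4 + (105 : K) * a ^ 3 + (-27 : K) * a ^ 2 + (-103 : K) * a + (81 : K))) * hpoly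
    rw [hz, zero_mul] at hcert
    exact zero_ne_one hcert
  have hxne2 : ((1 : K) * a ^ 7 + (-5 : K) * a ^ 6 + (-3 : K) * a ^ 5 + (22 : K) * a ^ 4 + (-3 : K) * a ^ 3 + (-28 : K) * a ^ 2 + (9 : K) * a + (8 : K)) ≠ (0 : K) := by
    intro hz
    exact hsubA2 (by linear_combination hz)
  have hdenA2 : ((1 : K) * a ^ 7 + (-5 : K) * a ^ 6 + (-3 : K) * a ^ 5 + (22 : K) * a ^ 4 + (-3 : K) * a ^ 3 + (-28 : K) * a ^ 2 + (9 : K) * a + (8 : K)) - (0 : K) ≠ 0 := by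
    intro hz
    exact hsubA2 (by linear_combination hz)
  have hLA2 : W.slope ((1 : K) * a ^ 7 + (-5 : K) * a ^ 6 + (-3 : K) * a ^ 5 + (22 : K) * a ^ 4 + (-3 : K) * a ^ 3 + (-28 : K) * a ^ 2 + (9 : K) * a + (8 : K)) (0 : K) ((-26 : K) * a ^ 8 + (16 : K) * a ^ 7 + (153 : K) * a ^ 6 + (-65 : K) * a ^ 5 + (-281 : K) * a ^ 4 + (87 : K) * a ^ 3 + (193 : K) * a ^ 2 + (-16 : K) * a + (-28 : K)) (0 : K) = ((-2 : K) * a ^ 8 + (2 : K) * a ^ 7 + (10 : K) * a ^ 6 + (-10 : K) * a ^ 5 + (-16 : K) * a ^ 4 + (15 : K) * a ^ 3 + (10 : K) * a ^ 2 + (-6 : K) * a + (-3 : K)) := by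
    rw [WeierstrassCurve.Affine.slope_of_X_ne hxne2, div_eq_iff hdenA2]
    linear_combination (((2 : K) * a ^ 6 + (-10 : K) * a ^ 5 + (-6 : K) * a ^ 4 + (44 : K) * a ^ 3 + (-4 : K) * a ^ 2 + (-63 : K) * a + (4 : K))) * hpoly
  have hop2_3 : WeierstrassCurve.Affine.Point.some _ _ hns2 + WeierstrassCurve.Affine.Point.some _ _ hns1 = WeierstrassCurve.Affine.Point.some _ _ hns3 := by
    rw [WeierstrassCurve.Affine.Point.add_of_X_ne hxne2]
    refine some_eq_some' _ _ ?_ ?_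
    · rw [hLA2]
      simp only [WeierstrassCurve.Affine.addX, ha1, ha2]
      linear_combination ((0 : K)) * hpoly
    · rw [hLA2]
      simp only [WeierstrassCurve.Affine.addY, WeierstrassCurve.Affine.negAddY,
        WeierstrassCurve.Affine.addX, WeierstrassCurve.Affine.negY, ha1, ha2, ha3]
      linear_combination (((-2 : K) * a ^ 6 + (10 : K) * a ^ 5 + (6 : K) * a ^ 4 + (-44 : K) * a ^ 3 + (4 : K) * a ^ 2 + (63 : K) * a + (-4 : K))) * hpoly
  have hnegY3 : W.negY ((-2 : K) * a ^ 8 + (2 : K) * a ^ 7 + (10 : K) * a ^ 6 + (-10 : K) * a ^ 5 + (-16 : K) * a ^ 4 + (15 : K) * a ^ 3 + (10 : K) * a ^ 2 + (-6 : K) * a + (-3 : K)) ((2 : K) * a ^ 8 + (-1 : K) * a ^ 7 + (-15 : K) * a ^ 6 + (7 : K) * a ^ 5 + (38 : K) * a ^ 4 + (-18 : K) * a ^ 3 + (-38 : K) * a ^ 2 + (15 : K) * a + (11 : K)) = ((20 : K) * a ^ 8 + (-8 : K) * a ^ 7 + (-107 : K) * a ^ 6 + (40 : K) * a ^ 5 +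 (184 : K) * a ^ 4 + (-58 : K) * a ^ 3 + (-116 : K) * a ^ 2 + (12 : K) * a + (17 : K)) := by
    rw [WeierstrassCurve.Affine.negY, ha1, ha3]
    linear_combination (((4 : K) * a ^ 7 + (-4 : K) * a ^ 6 + (-20 : K) * a ^ 5 + (20 : K) * a ^ 4 + (36 : K) * a ^ 3 + (-28 : K) * a ^ 2 + (-32 : K) * a + (8 : K))) * hpoly
  have hsub3 : ((-18 : K) * a ^ 8 + (7 : K) * a ^ 7 + (92 : K) * a ^ 6 + (-33 : K) * a ^ 5 + (-146 : K) * a ^ 4 + (40 : K) * a ^ 3 + (78 : K) * a ^ 2 + (3 : K) * a + (-6 : K)) ≠ 0 := by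
    intro hz
    have hcert : (((-18 : K) * a ^ 8 + (7 : K) * a ^ 7 + (92 : K) * a ^ 6 + (-33 : K) * a ^ 5 + (-146 : K) * a ^ 4 + (40 : K) * a ^ 3 + (78 : K) * a ^ 2 + (3 : K) * a + (-6 : K))) * ((-224 : K) * a ^ 8 + (319 : K) * a ^ 7 + (983 : K) * a ^ 6 + (-1537 : K) * a ^ 5 + (-908 : K) * a ^ 4 + (2179 : K) * a ^ 3 + (-490 : K) * a ^ 2 + (-684 : K) * a + (518 : K)) = 1 := by linear_combination (((4032 : K) * a ^ 7 + (-3278 : K) * a ^ 6 + (-19187 : K) * a ^ 5 + (15550 : K) * a ^ 4 + (25979 : K) * a ^ 3 + (-20089 : K) * a ^ 2 + (-8767 : K) * a + (3109 : K))) * hpoly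
    rw [hz, zero_mul] at hcert
    exact zero_ne_one hcert
  have hyne3 : ((2 : K) * a ^ 8 + (-1 : K) * a ^ 7 + (-15 : K) * a ^ 6 + (7 : K) * a ^ 5 + (38 : K) * a ^ 4 + (-18 : K) * a ^ 3 + (-38 : K) * a ^ 2 + (15 : K) * a + (11 : K)) ≠ W.negY ((-2 : K) * a ^ 8 + (2 : K) * a ^ 7 + (10 : K) * a ^ 6 + (-10 : K) * a ^ 5 + (-16 : K) * a ^ 4 + (15 : K) * a ^ 3 + (10 : K) * a ^ 2 + (-6 : K) * a + (-3 : K)) ((2 : K) * a ^ 8 + (-1 : K) * a ^ 7 + (-15 : K) * a ^ 6 + (7 : K) * a ^ 5 + (38 : K) * a ^ 4 + (-18 : K) * a ^ 3 + (-38 : K) * a ^ 2 + (15 : K) * a + (11 : K)) := by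
    rw [hnegY3]
    intro hz
    exact hsub3 (by linear_combination hz)
  have hden3 : ((2 : K) * a ^ 8 + (-1 : K) * a ^ 7 + (-15 : K) * a ^ 6 + (7 : K) * a ^ 5 + (38 : K) * a ^ 4 + (-18 : K) * a ^ 3 + (-38 : K) * a ^ 2 + (15 : K) * a + (11 : K)) - W.negY ((-2 : K) * a ^ 8 + (2 : K) * a ^ 7 + (10 : K) * a ^ 6 + (-10 : K) * a ^ 5 + (-16 : K) * a ^ 4 + (15 : K) * a ^ 3 + (10 : K) * a ^ 2 + (-6 : K) * a + (-3 : K)) ((2 : K) * a ^ 8 + (-1 : K) * a ^ 7 + (-15 : K) * a ^ 6 + (7 : K) * a ^ 5 + (38 : K) * a ^ 4 + (-18 : K) * a ^ 3 + (-38 : K) * a ^ 2 + (15 : K) * a + (11 : K)) ≠ 0 := by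
    rw [hnegY3]
    intro hz
    exact hsub3 (by linear_combination hz)
  have hL3 : W.slope ((-2 : K) * a ^ 8 + (2 : K) * a ^ 7 + (10 : K) * a ^ 6 + (-10 : K) * a ^ 5 + (-16 : K) * a ^ 4 + (15 : K) * a ^ 3 + (10 : K) * a ^ 2 + (-6 : K) * a + (-3 : K)) ((-2 : K) * a ^ 8 + (2 : K) * a ^ 7 + (10 : K) * a ^ 6 + (-10 : K) * a ^ 5 + (-16 : K) * a ^ 4 + (15 : K) * a ^ 3 + (10 : K) * a ^ 2 + (-6 : K) * a + (-3 : K)) ((2 : K) * a ^ 8 + (-1 : K) * a ^ 7 + (-15 : K) * a ^ 6 + (7 : K) * a ^ 5 + (38 : K) * a ^ 4 + (-18 : K) * a ^ 3 + (-38 : K) * a ^ 2 + (15 : K) * a + (11 : K)) ((2 : K) * a ^ 8 + (-1 : K) * a ^ 7 + (-15 : K) * a ^ 6 + (7 : K) * a ^ 5 + (38 : K) * a ^ 4 + (-18 : K) * a ^ 3 + (-38 : K) * a ^ 2 + (15 : K) * a + (11 : K)) = ((1 : K) * a ^ 7 + (-1 : K) * a ^ 6 + (-4 : K) * a ^ 5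 + (3 : K) * a ^ 4 + (5 : K) * a ^ 3 + (-2 : K) * a ^ 2 + (-3 : K) * a + (-1 : K)) := by
    rw [WeierstrassCurve.Affine.slope_of_Y_ne rfl hyne3, div_eq_iff hden3, hnegY3,
      ha1, ha2, ha4]
    linear_combination (((8 : K) * a ^ 7 + (12 : K) * a ^ 6 + (-57 : K) * a ^ 5 + (-40 : K) * a ^ 4 + (124 : K) * a ^ 3 + (37 : K) * a ^ 2 + (-92 : K) * a + (-25 : K))) * hpoly
  have hop3_6 : WeierstrassCurve.Affine.Point.some _ _ hns3 + WeierstrassCurve.Affine.Point.some _ _ hns3 = WeierstrassCurve.Affine.Point.some _ _ hns6 := by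
    rw [WeierstrassCurve.Affine.Point.add_self_of_Y_ne hyne3]
    refine some_eq_some' _ _ ?_ ?_
    · rw [hL3]
      simp only [WeierstrassCurve.Affine.addX, ha1, ha2]
      linear_combination (((2 : K) * a ^ 6 + (-1 : K) * a ^ 5 + (-9 : K) * a ^ 4 + (3 : K) * a ^ 3 + (13 : K) * a ^ 2 + (1 : K) * a + (-9 : K))) * hpoly
    · rw [hL3]
      simp only [WeierstrassCurve.Affine.addY, WeierstrassCurve.Affine.negAddY,
        WeierstrassCurve.Affine.addX, WeierstrassCurve.Affine.negY, ha1, ha2, ha3]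
      linear_combination (((-4 : K) * a ^ 14 + (4 : K) * a ^ 13 + (39 : K) * a ^ 12 + (-38 : K) * a ^ 11 + (-154 : K) * a ^ 10 + (137 : K) * a ^ 9 + (329 : K) * a ^ 8 + (-235 : K) * a ^ 7 + (-438 : K) * a ^ 6 + (202 : K) * a ^ 5 + (380 : K) * a ^ 4 + (-88 : K) * a ^ 3 + (-181 : K) * a ^ 2 + (13 : K) * a + (25 : K))) * hpoly
  have hsubA6 : ((-3 : K) * a ^ 8 + (3 : K) * a ^ 7 + (14 : K) * a ^ 6 + (-14 : K) * a ^ 5 + (-15 : K) * a ^ 4 + (16 : K) * a ^ 3 + (-1 : K) * a ^ 2 + (1 : K) * a + (2 : K)) ≠ 0 := by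
    intro hz
    have hcert : (((-3 : K) * a ^ 8 + (3 : K) * a ^ 7 + (14 : K) * a ^ 6 + (-14 : K) * a ^ 5 + (-15 : K) * a ^ 4 + (16 : K) * a ^ 3 + (-1 : K) * a ^ 2 + (1 : K) * a + (2 : K))) * ((4 : K) * a ^ 8 + (-3 : K) * a ^ 7 + (-18 : K) * a ^ 6 + (16 : K) * a ^ 5 + (18 : K) * a ^ 4 + (-28 : K) * a ^ 3 + (3 : K) * a ^ 2 + (10 : K) * a + (-6 : K)) = 1 := by linear_combination (((-12 : K) * a ^ 7 + (9 : K) * a ^ 6 + (50 : K) * a ^ 5 + (-45 : K) * a ^ 4 + (-32 : K) * a ^ 3 + (57 : K) * a ^ 2 + (-27 : K) * a + (13 : K))) * hpoly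
    rw [hz, zero_mul] at hcert
    exact zero_ne_one hcert
  have hxne6 : ((-3 : K) * a ^ 8 + (3 : K) * a ^ 7 + (14 : K) * a ^ 6 + (-14 : K) * a ^ 5 + (-15 : K) * a ^ 4 + (16 : K) * a ^ 3 + (-1 : K) * a ^ 2 + (1 : K) * a + (2 : K)) ≠ (0 : K) := by
    intro hz
    exact hsubA6 (by linear_combination hz)
  have hdenA6 : ((-3 : K) * a ^ 8 + (3 : K) * a ^ 7 + (14 : K) * a ^ 6 + (-14 : K) * a ^ 5 + (-15 : K) * a ^ 4 + (16 : K) * a ^ 3 + (-1 : K) * a ^ 2 + (1 : K) * a + (2 : K)) - (0 : K) ≠ 0 := by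
    intro hz
    exact hsubA6 (by linear_combination hz)
  have hLA6 : W.slope ((-3 : K) * a ^ 8 + (3 : K) * a ^ 7 + (14 : K) * a ^ 6 + (-14 : K) * a ^ 5 + (-15 : K) * a ^ 4 + (16 : K) * a ^ 3 + (-1 : K) * a ^ 2 + (1 : K) * a + (2 : K)) (0 : K) ((3 : K) * a ^ 8 + (-3 : K) * a ^ 7 + (-10 : K) * a ^ 6 + (8 : K) * a ^ 5 + (2 : K) * a ^ 4 + (1 : K) * a ^ 3 + (14 : K) * a ^ 2 + (-13 : K) * a + (-8 : K)) (0 : K) = ((-1 : K) * a ^ 8 + (1 : K) * a ^ 7 + (5 : K) * a ^ 6 + (-5 : K) * a ^ 5 + (-7 : K) * a ^ 4 + (7 : K) * a ^ 3 + (3 : K) * a ^ 2 + (-2 : K) * a + (-1 : K)) := by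
    rw [WeierstrassCurve.Affine.slope_of_X_ne hxne6, div_eq_iff hdenA6]
    linear_combination (((-3 : K) * a ^ 7 + (3 : K) * a ^ 6 + (14 : K) * a ^ 5 + (-14 : K) * a ^ 4 + (-15 : K) * a ^ 3 + (13 : K) * a ^ 2 + (2 : K) * a + (6 : K))) * hpoly
  have hop6_7 : WeierstrassCurve.Affine.Point.some _ _ hns6 + WeierstrassCurve.Affine.Point.some _ _ hns1 = WeierstrassCurve.Affine.Point.some _ _ hns7 := by
    rw [WeierstrassCurve.Affine.Point.add_of_X_ne hxne6]
    refine some_eq_some' _ _ ?_ ?_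
    · rw [hLA6]
      simp only [WeierstrassCurve.Affine.addX, ha1, ha2]
      linear_combination (((-1 : K) * a ^ 7 + (1 : K) * a ^ 6 + (5 : K) * a ^ 5 + (-5 : K) * a ^ 4 + (-9 : K) * a ^ 3 + (7 : K) * a ^ 2 + (8 : K) * a + (-2 : K))) * hpoly
    · rw [hLA6]
      simp only [WeierstrassCurve.Affine.addY, WeierstrassCurve.Affine.negAddY,
        WeierstrassCurve.Affine.addX, WeierstrassCurve.Affine.negY, ha1, ha2, ha3]
      linear_combination (((1 : K) * a ^ 15 + (-2 : K) * a ^ 14 + (-9 : K) * a ^ 13 + (20 : K) * a ^ 12 + (33 : K) * a ^ 11 + (-83 : K) * a ^ 10 + (-65 : K) * a ^ 9 + (186 : K) * a ^ 8 + (83 : K) * a ^ 7 + (-246 : K) * a ^ 6 + (-87 : K) * a ^ 5 + (196 : K) * a ^ 4 + (70 : K) * a ^ 3 + (-74 : K) * a ^ 2 + (-26 : K) * a + (-8 : K))) * hpoly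
  have hnegY7 : W.negY ((-2 : K) * a ^ 8 + (9 : K) * a ^ 6 + (-12 : K) * a ^ 4 + (-2 : K) * a ^ 3 + (4 : K) * a ^ 2 + (4 : K) * a + (1 : K)) ((4 : K) * a ^ 8 + (12 : K) * a ^ 7 + (-16 : K) * a ^ 6 + (-47 : K) * a ^ 5 + (29 : K) * a ^ 4 + (61 : K) * a ^ 3 + (-19 : K) * a ^ 2 + (-23 : K) * a + (-3 : K)) = ((-1 : K) * a ^ 8 + (4 : K) * a ^ 7 + (8 : K) * a ^ 6 + (-19 : K) * a ^ 5 + (-19 : K) * a ^ 4 + (31 : K) * a ^ 3 + (19 : K) * a ^ 2 + (-17 : K) * a + (-8 : K)) := by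
    rw [WeierstrassCurve.Affine.negY, ha1, ha3]
    linear_combination (((4 : K) * a ^ 7 + (-18 : K) * a ^ 5 + (28 : K) * a ^ 3 + (10 : K) * a ^ 2 + (-12 : K) * a + (-15 : K))) * hpoly
  have hsub7 : ((5 : K) * a ^ 8 + (8 : K) * a ^ 7 + (-24 : K) * a ^ 6 + (-28 : K) * a ^ 5 + (48 : K) * a ^ 4 + (30 : K) * a ^ 3 + (-38 : K) * a ^ 2 + (-6 : K) * a + (5 : K)) ≠ 0 := by
    intro hz
    have hcert : (((5 : K) * a ^ 8 + (8 : K) * a ^ 7 + (-24 : K) * a ^ 6 + (-28 : K) * a ^ 5 + (48 : K) * a ^ 4 + (30 : K) * a ^ 3 + (-38 : K) * a ^ 2 + (-6 : K) * a + (5 : K))) * ((-45 : K) * a ^ 8 + (67 : K) * a ^ 7 + (200 : K) * a ^ 6 + (-327 : K) * a ^ 5 + (-187 : K) * a ^ 4 + (465 : K) * a ^ 3 + (-107 : K) * a ^ 2 + (-145 : K) * a + (112 : K)) = 1 := by linear_combination (((-225 : K) * a ^ 7 + (-250 : K) * a ^ 6 + (1241 : K) * a ^ 5 + (733 : K) *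 a ^ 4 + (-2624 : K) * a ^ 3 + (-271 : K) * a ^ 2 + (1956 : K) * a + (-559 : K))) * hpoly
    rw [hz, zero_mul] at hcert
    exact zero_ne_one hcert
  have hyne7 : ((4 : K) * a ^ 8 + (12 : K) * a ^ 7 + (-16 : K) * a ^ 6 + (-47 : K) * a ^ 5 + (29 : K) * a ^ 4 + (61 : K) * a ^ 3 + (-19 : K) * a ^ 2 + (-23 : K) * a + (-3 : K)) ≠ W.negY ((-2 : K) * a ^ 8 + (9 : K) * a ^ 6 + (-12 : K) * a ^ 4 + (-2 : K) * a ^ 3 + (4 : K) * a ^ 2 + (4 : K) * a + (1 : K)) ((4 : K) * a ^ 8 + (12 : K) * a ^ 7 + (-16 : K) * a ^ 6 + (-47 : K) * a ^ 5 + (29 : K) * a ^ 4 + (61 : K) * a ^ 3 + (-19 : K) * a ^ 2 + (-23 : K) * a + (-3 : K)) := by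
    rw [hnegY7]
    intro hz
    exact hsub7 (by linear_combination hz)
  have hden7 : ((4 : K) * a ^ 8 + (12 : K) * a ^ 7 + (-16 : K) * a ^ 6 + (-47 : K) * a ^ 5 + (29 : K) * a ^ 4 + (61 : K) * a ^ 3 + (-19 : K) * a ^ 2 + (-23 : K) * a + (-3 : K)) - W.negY ((-2 : K) * a ^ 8 + (9 : K) * a ^ 6 + (-12 : K) * a ^ 4 + (-2 : K) * a ^ 3 + (4 : K) * a ^ 2 + (4 : K) * a + (1 : K)) ((4 : K) * a ^ 8 + (12 : K) * a ^ 7 + (-16 : K) * a ^ 6 + (-47 : K) * a ^ 5 + (29 : K) * a ^ 4 + (61 : K) * a ^ 3 + (-19 : K) * a ^ 2 + (-23 : K) * a + (-3 : K)) ≠ 0 := by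
    rw [hnegY7]
    intro hz
    exact hsub7 (by linear_combination hz)
  have hL7 : W.slope ((-2 : K) * a ^ 8 + (9 : K) * a ^ 6 + (-12 : K) * a ^ 4 + (-2 : K) * a ^ 3 + (4 : K) * a ^ 2 + (4 : K) * a + (1 : K)) ((-2 : K) * a ^ 8 + (9 : K) * a ^ 6 + (-12 : K) * a ^ 4 + (-2 : K) * a ^ 3 + (4 : K) * a ^ 2 + (4 : K) * a + (1 : K)) ((4 : K) * a ^ 8 + (12 : K) * a ^ 7 + (-16 : K) * a ^ 6 + (-47 : K) * a ^ 5 + (29 : K) * a ^ 4 + (61 : K) * a ^ 3 + (-19 : K) * a ^ 2 + (-23 : K) * a + (-3 : K)) ((4 : K) * a ^ 8 + (12 : K) * a ^ 7 + (-16 : K) * a ^ 6 + (-47 : K) * a ^ 5 + (29 : K) * a ^ 4 + (61 : K) * a ^ 3 + (-19 : K) * a ^ 2 + (-23 : K) * a + (-3 : K)) = ((-1 : K) * a ^ 8 + (1 : K) * a ^ 7 + (6 : K) * a ^ 6 + (-6 : K) * a ^ 5 + (-12 : K) * a ^ 4 + (11 : K) * a ^ 3 + (9 : K) * a ^ 2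 + (-6 : K) * a + (-3 : K)) := by
    rw [WeierstrassCurve.Affine.slope_of_Y_ne rfl hyne7, div_eq_iff hden7, hnegY7,
      ha1, ha2, ha4]
    linear_combination (((9 : K) * a ^ 7 + (-49 : K) * a ^ 5 + (-4 : K) * a ^ 4 + (85 : K) * a ^ 3 + (13 : K) * a ^ 2 + (-50 : K) * a + (-14 : K))) * hpoly
  have hop7_14 : WeierstrassCurve.Affine.Point.some _ _ hns7 + WeierstrassCurve.Affine.Point.some _ _ hns7 = WeierstrassCurve.Affine.Point.some _ _ hns14 := by
    rw [WeierstrassCurve.Affine.Point.add_self_of_Y_ne hyne7]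
    refine some_eq_some' _ _ ?_ ?_
    · rw [hL7]
      simp only [WeierstrassCurve.Affine.addX, ha1, ha2]
      linear_combination (((-1 : K) * a ^ 7 + (1 : K) * a ^ 6 + (5 : K) * a ^ 5 + (-5 : K) * a ^ 4 + (-8 : K) * a ^ 3 + (6 : K) * a ^ 2 + (5 : K) * a)) * hpoly
    · rw [hL7]
      simp only [WeierstrassCurve.Affine.addY, WeierstrassCurve.Affine.negAddY,
        WeierstrassCurve.Affine.addX, WeierstrassCurve.Affine.negY, ha1, ha2, ha3]
      linear_combination (((1 : K) * a ^ 15 + (-2 : K) * a ^ 14 + (-8 : K) * a ^ 13 + (18 : K) * a ^ 12 + (23 : K) * a ^ 11 + (-62 : K) * a ^ 10 + (-28 : K) * a ^ 9 + (102 : K) * a ^ 8 + (16 : K) * a ^ 7 + (-84 : K) * a ^ 6 + (-18 : K) * a ^ 5 + (37 : K) * a ^ 4 + (26 : K) * a ^ 3 + (-4 : K) * a ^ 2 + (-12 : K) * a + (-12 : K))) * hpoly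
  have hnegY14 : W.negY ((2 : K) * a ^ 7 + (-2 : K) * a ^ 6 + (-8 : K) * a ^ 5 + (10 : K) * a ^ 4 + (8 : K) * a ^ 3 + (-13 : K) * a ^ 2 + (3 : K)) ((-3 : K) * a ^ 8 + (-6 : K) * a ^ 7 + (12 : K) * a ^ 6 + (17 : K) * a ^ 5 + (-25 : K) * a ^ 4 + (-12 : K) * a ^ 3 + (23 : K) * a ^ 2 + (-5 : K) * a + (-7 : K)) = ((-5 : K) * a ^ 8 + (1 : K) * a ^ 7 + (25 : K) * a ^ 6 + (3 : K) * a ^ 5 + (-31 : K) * a ^ 4 + (-20 : K) * a ^ 3 + (3 : K) * a ^ 2 + (28 : K) * a + (11 : K)) := by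
    rw [WeierstrassCurve.Affine.negY, ha1, ha3]
    linear_combination (((-4 : K) * a ^ 6 + (4 : K) * a ^ 5 + (16 : K) * a ^ 4 + (-20 : K) * a ^ 3 + (-20 : K) * a ^ 2 + (24 : K) * a + (8 : K))) * hpoly
  have hsub14 : ((2 : K) * a ^ 8 + (-7 : K) * a ^ 7 + (-13 : K) * a ^ 6 + (14 : K) * a ^ 5 + (6 : K) * a ^ 4 + (8 : K) * a ^ 3 + (20 : K) * a ^ 2 + (-33 : K) * a + (-18 : K)) ≠ 0 := by
    intro hz
    have hcert : (((2 : K) * a ^ 8 + (-7 : K) * a ^ 7 + (-13 : K) * a ^ 6 + (14 : K) * a ^ 5 + (6 : K) * a ^ 4 + (8 : K) * a ^ 3 + (20 : K) * a ^ 2 + (-33 : K) * a + (-18 : K))) * ((30 : K) * a ^ 8 + (-26 : K) * a ^ 7 + (-105 : K) * a ^ 6 + (76 : K) * a ^ 5 + (62 : K) * a ^ 4 + (-53 : K) * a ^ 3 + (3 : K) * a ^ 2 + (20 : K) * a + (2 : K)) = 1 := by linear_combination (((60 : K) * a ^ 7 + (-202 : K) * a ^ 6 + (-320 : K) * a ^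 5 + (15 : K) * a ^ 4 + (-222 : K) * a ^ 3 + (433 : K) * a ^ 2 + (389 : K) * a + (37 : K))) * hpoly
    rw [hz, zero_mul] at hcert
    exact zero_ne_one hcert
  have hyne14 : ((-3 : K) * a ^ 8 + (-6 : K) * a ^ 7 + (12 : K) * a ^ 6 + (17 : K) * a ^ 5 + (-25 : K) * a ^ 4 + (-12 : K) * a ^ 3 + (23 : K) * a ^ 2 + (-5 : K) * a + (-7 : K)) ≠ W.negY ((2 : K) * a ^ 7 + (-2 : K) * a ^ 6 + (-8 : K) * a ^ 5 + (10 : K) * a ^ 4 + (8 : K) * a ^ 3 + (-13 : K) * a ^ 2 + (3 : K)) ((-3 : K) * a ^ 8 + (-6 : K) * a ^ 7 + (12 : K) * a ^ 6 + (17 : K) * a ^ 5 + (-25 : K) * a ^ 4 + (-12 : K) * a ^ 3 + (23 : K) * a ^ 2 + (-5 : K) * a + (-7 : K)) := by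
    rw [hnegY14]
    intro hz
    exact hsub14 (by linear_combination hz)
  have hden14 : ((-3 : K) * a ^ 8 + (-6 : K) * a ^ 7 + (12 : K) * a ^ 6 + (17 : K) * a ^ 5 + (-25 : K) * a ^ 4 + (-12 : K) * a ^ 3 + (23 : K) * a ^ 2 + (-5 : K) * a + (-7 : K)) - W.negY ((2 : K) * a ^ 7 + (-2 : K) * a ^ 6 + (-8 : K) * a ^ 5 + (10 : K) * a ^ 4 + (8 : K) * a ^ 3 + (-13 : K) * a ^ 2 + (3 : K)) ((-3 : K) * a ^ 8 + (-6 : K) * a ^ 7 + (12 : K) * a ^ 6 + (17 : K) * a ^ 5 + (-25 : K) * a ^ 4 + (-12 : K) * a ^ 3 + (23 : K) * a ^ 2 + (-5 : K) * a + (-7 : K)) ≠ 0 := by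
    rw [hnegY14]
    intro hz
    exact hsub14 (by linear_combination hz)
  have hL14 : W.slope ((2 : K) * a ^ 7 + (-2 : K) * a ^ 6 + (-8 : K) * a ^ 5 + (10 : K) * a ^ 4 + (8 : K) * a ^ 3 + (-13 : K) * a ^ 2 + (3 : K)) ((2 : K) * a ^ 7 + (-2 : K) * a ^ 6 + (-8 : K) * a ^ 5 + (10 : K) * a ^ 4 + (8 : K) * a ^ 3 + (-13 : K) * a ^ 2 + (3 : K)) ((-3 : K) * a ^ 8 + (-6 : K) * a ^ 7 + (12 : K) * a ^ 6 + (17 : K) * a ^ 5 + (-25 : K) * a ^ 4 + (-12 : K) * a ^ 3 + (23 : K) * a ^ 2 + (-5 : K) * a + (-7 : K)) ((-3 : K) * a ^ 8 + (-6 : K) * a ^ 7 + (12 : K) * a ^ 6 + (17 : K) * a ^ 5 + (-25 : K) * a ^ 4 + (-12 : K) * a ^ 3 + (23 : K) * a ^ 2 + (-5 : K) * a + (-7 : K)) = ((-1 : K) * a ^ 6 + (3 : K) * a ^ 4 + (-1 : K) * a ^ 3 + (-2 : K) * a ^ 2 + (1 : K) * a + (-1 : K)) := by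
    rw [WeierstrassCurve.Affine.slope_of_Y_ne rfl hyne14, div_eq_iff hden14, hnegY14,
      ha1, ha2, ha4]
    linear_combination (((6 : K) * a ^ 7 + (12 : K) * a ^ 6 + (-14 : K) * a ^ 5 + (-31 : K) * a ^ 4 + (14 : K) * a ^ 3 + (21 : K) * a ^ 2 + (-4 : K) * a + (11 : K))) * hpoly
  have hop14_28 : WeierstrassCurve.Affine.Point.some _ _ hns14 + WeierstrassCurve.Affine.Point.some _ _ hns14 = WeierstrassCurve.Affine.Point.some _ _ hns28 := by
    rw [WeierstrassCurve.Affine.Point.add_self_of_Y_ne hyne14]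
    refine some_eq_some' _ _ ?_ ?_
    · rw [hL14]
      simp only [WeierstrassCurve.Affine.addX, ha1, ha2]
      linear_combination (((-2 : K) * a ^ 5 + (7 : K) * a ^ 3 + (-1 : K) * a ^ 2 + (-6 : K) * a + (1 : K))) * hpoly
    · rw [hL14]
      simp only [WeierstrassCurve.Affine.addY, WeierstrassCurve.Affine.negAddY,
        WeierstrassCurve.Affine.addX, WeierstrassCurve.Affine.negY, ha1, ha2, ha3]
      linear_combination (((4 : K) * a ^ 13 + (-4 : K) * a ^ 12 + (-36 : K) * a ^ 11 + (36 : K) * a ^ 10 + (125 : K) * a ^ 9 + (-127 : K) * a ^ 8 + (-211 : K) * a ^ 7 + (216 : K) * a ^ 6 + (178 : K) * a ^ 5 + (-178 : K) * a ^ 4 + (-70 : K) * a ^ 3 + (61 : K) * a ^ 2 + (7 : K) * a + (-7 : K))) * hpoly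
  have hyfin : ((1 : K) * a ^ 7 + (-5 : K) * a ^ 6 + (-3 : K) * a ^ 5 + (22 : K) * a ^ 4 + (-3 : K) * a ^ 3 + (-28 : K) * a ^ 2 + (9 : K) * a + (8 : K)) = W.negY (0 : K) (0 : K) := by
    rw [WeierstrassCurve.Affine.negY, ha1, ha3]
    linear_combination ((0 : K)) * hpoly
  have hxfin : (0 : K) = ((0 : K) : K) := by norm_num
  have hop28_0 : WeierstrassCurve.Affine.Point.some _ _ hns28 + WeierstrassCurve.Affine.Point.some _ _ hns1 = 0 :=
    WeierstrassCurve.Affine.Point.add_of_Y_eq hxfin hyfin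
  refine ⟨hDelta, hns1, ?_⟩
  haveI : Fact (Nat.Prime 29) := ⟨by norm_num⟩
  apply addOrderOf_eq_prime (p := 29) ?_ (WeierstrassCurve.Affine.Point.some_ne_zero hns1)
  have e2 : (2 : ℕ) • WeierstrassCurve.Affine.Point.some _ _ hns1 = WeierstrassCurve.Affine.Point.some _ _ hns2 := by
    show (1 + 1 : ℕ) • WeierstrassCurve.Affine.Point.some _ _ hns1 = WeierstrassCurve.Affine.Point.some _ _ hns2
    rw [add_nsmul, one_nsmul]
    exact hop1_2
  have e3 : (3 : ℕ) • WeierstrassCurve.Affine.Point.some _ _ hns1 = WeierstrassCurve.Affine.Point.some _ _ hns3 := by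
    show (2 + 1 : ℕ) • WeierstrassCurve.Affine.Point.some _ _ hns1 = WeierstrassCurve.Affine.Point.some _ _ hns3
    rw [add_nsmul, one_nsmul, e2]
    exact hop2_3
  have e6 : (6 : ℕ) • WeierstrassCurve.Affine.Point.some _ _ hns1 = WeierstrassCurve.Affine.Point.some _ _ hns6 := by
    show (3 + 3 : ℕ) • WeierstrassCurve.Affine.Point.some _ _ hns1 = WeierstrassCurve.Affine.Point.some _ _ hns6
    rw [add_nsmul, e3]
    exact hop3_6
  have e7 : (7 : ℕ) • WeierstrassCurve.Affine.Point.some _ _ hns1 = WeierstrassCurve.Affine.Point.some _ _ hns7 := by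
    show (6 + 1 : ℕ) • WeierstrassCurve.Affine.Point.some _ _ hns1 = WeierstrassCurve.Affine.Point.some _ _ hns7
    rw [add_nsmul, one_nsmul, e6]
    exact hop6_7
  have e14 : (14 : ℕ) • WeierstrassCurve.Affine.Point.some _ _ hns1 = WeierstrassCurve.Affine.Point.some _ _ hns14 := by
    show (7 + 7 : ℕ) • WeierstrassCurve.Affine.Point.some _ _ hns1 = WeierstrassCurve.Affine.Point.some _ _ hns14
    rw [add_nsmul, e7]
    exact hop7_14
  have e28 : (28 : ℕ) • WeierstrassCurve.Affine.Point.some _ _ hns1 = WeierstrassCurve.Affine.Point.some _ _ hns28 := by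
    show (14 + 14 : ℕ) • WeierstrassCurve.Affine.Point.some _ _ hns1 = WeierstrassCurve.Affine.Point.some _ _ hns28
    rw [add_nsmul, e14]
    exact hop14_28
  show (29 : ℕ) • WeierstrassCurve.Affine.Point.some _ _ hns1 = 0
  show (28 + 1 : ℕ) • WeierstrassCurve.Affine.Point.some _ _ hns1 = 0
  rw [add_nsmul, one_nsmul, e28]
  exact hop28_0

open scoped Classical in
/-- The Tate normal form curve E_{b,c} over K = ℚ(a), where a is a root of the stated
polynomial, has the point (0,0) of order exactly 29. -/
theorem stmt_7 (K : Type) [Field K] [CharZero K] (a b c : K)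
    (hpoly : a^9 - a^8 - 5*a^7 + 5*a^6 + 7*a^5 - 8*a^4 - 2*a^3 + 4*a^2 - a - 1 = 0)
    (hgen : IntermediateField.adjoin ℚ {a} = ⊤)
    (hb : b = a^7 - 5*a^6 - 3*a^5 + 22*a^4 - 3*a^3 - 28*a^2 + 9*a + 8)
    (hc : c = -2*a^8 + 2*a^7 + 10*a^6 - 10*a^5 - 16*a^4 + 15*a^3 + 10*a^2 - 6*a - 3) :
    ({ a₁ := 1 - c, a₂ := -b, a₃ := -b, a₄ := 0, a₆ := 0 } :
        WeierstrassCurve K).Δ ≠ 0 ∧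
    ∃ h : ({ a₁ := 1 - c, a₂ := -b, a₃ := -b, a₄ := 0, a₆ := 0 } :
        WeierstrassCurve K).toAffine.Nonsingular 0 0,
      addOrderOf (WeierstrassCurve.Affine.Point.some _ _ h) = 29 := by
  subst hb hc
  exact aux_7 K a hpoly _ rfl rfl rfl rfl rfl
end

section
/- Let K = ℚ(a) where a¹⁰ − 2a⁷ + a⁵ + 2a⁴ + 3a³ − 3a² − 2a + 1 = 0. Set b = (−145a⁹ − 14a⁸ − 66a⁷ + 114a⁶ + 175a⁵ − 137a⁴ − 211a³ − 324a² − 85a + 92)/43 and c = a⁹ + a⁷ − a⁶ − a⁵ + a⁴ + a³ + 3a² + a − 1. Then the point (0,0) on the elliptic curve y² + (1−c)xy − by = x³ − bx² has order exactly 29 in E(K). -/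
namespace Helper29

theorem pt_eq {F : Type} [Field F] {W : WeierstrassCurve.Affine F} {x₁ y₁ x₂ y₂ : F}
    (h₁ : W.Nonsingular x₁ y₁) (h₂ : W.Nonsingular x₂ y₂) (hx : x₁ = x₂) (hy : y₁ = y₂) :
    WeierstrassCurve.Affine.Point.some _ _ h₁ = WeierstrassCurve.Affine.Point.some _ _ h₂ := by
  subst hx; subst hy; rfl

theorem slope_eq_of_X_ne {F : Type} [Field F] [DecidableEq F] {W : WeierstrassCurve.Affine F} {x₁ x₂ y₁ y₂ s : F}
    (hx : x₁ ≠ x₂) (h : y₁ - y₂ = s * (x₁ - x₂)) : W.slope x₁ x₂ y₁ y₂ = s := by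
  rw [WeierstrassCurve.Affine.slope_of_X_ne hx, div_eq_iff (sub_ne_zero.mpr hx)]; exact h

theorem slope_eq_of_Y_ne {F : Type} [Field F] [DecidableEq F] {W : WeierstrassCurve.Affine F} {x y s : F}
    (hy : y ≠ W.negY x y)
    (h : 3 * x ^ 2 + 2 * W.a₂ * x + W.a₄ - W.a₁ * y = s * (y - W.negY x y)) :
    W.slope x x y y = s := by
  rw [WeierstrassCurve.Affine.slope_of_Y_ne rfl hy, div_eq_iff (sub_ne_zero.mpr hy)]; exact h

theorem dbl_eq {F : Type} [Field F] [DecidableEq F] {W : WeierstrassCurve.Affine F} {x y s x' y' : F}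
    (h₁ : W.Nonsingular x y) (hy : y ≠ W.negY x y) (hs : W.slope x x y y = s)
    (hx' : s ^ 2 + W.a₁ * s - W.a₂ - x - x = x')
    (hy' : -(s * (x' - x) + y) - W.a₁ * x' - W.a₃ = y') :
    ∃ h' : W.Nonsingular x' y',
      WeierstrassCurve.Affine.Point.some _ _ h₁ + WeierstrassCurve.Affine.Point.some _ _ h₁ =
        WeierstrassCurve.Affine.Point.some _ _ h' := by
  subst hs; subst hx'; subst hy'
  exact ⟨_, WeierstrassCurve.Affine.Point.add_self_of_Y_ne hy⟩

theorem add_eq {F : Type} [Field F] [DecidableEq F] {W : WeierstrassCurve.Affine F} {x₁ y₁ x₂ y₂ s x' y' : F}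
    (h₁ : W.Nonsingular x₁ y₁) (h₂ : W.Nonsingular x₂ y₂) (hx : x₁ ≠ x₂)
    (hs : W.slope x₁ x₂ y₁ y₂ = s)
    (hx' : s ^ 2 + W.a₁ * s - W.a₂ - x₁ - x₂ = x')
    (hy' : -(s * (x' - x₁) + y₁) - W.a₁ * x' - W.a₃ = y') :
    ∃ h' : W.Nonsingular x' y',
      WeierstrassCurve.Affine.Point.some _ _ h₁ + WeierstrassCurve.Affine.Point.some _ _ h₂ =
        WeierstrassCurve.Affine.Point.some _ _ h' := by
  subst hs; subst hx'; subst hy'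
  exact ⟨_, WeierstrassCurve.Affine.Point.add_of_X_ne hx⟩

end Helper29

set_option maxHeartbeats 4000000 in
open Classical in
/-- The Tate normal form curve E_{b,c} over K = ℚ(a), where a is a root of the stated
polynomial, has the point (0,0) of order exactly 29. -/
theorem stmt_9 (K : Type) [Field K] [CharZero K] (a b c : K)
    (hpoly : a^10 - 2*a^7 + a^5 + 2*a^4 + 3*a^3 - 3*a^2 - 2*a + 1 = 0)
    (hgen : IntermediateField.adjoin ℚ {a} = ⊤)
    (hb : b = (-145*a^9 - 14*a^8 - 66*a^7 + 114*a^6 + 175*a^5 - 137*a^4 - 211*a^3 - 324*a^2 - 85*a + 92)/43)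
    (hc : c = a^9 + a^7 - a^6 - a^5 + a^4 + a^3 + 3*a^2 + a - 1) :
    ∃ h : ({ a₁ := 1 - c, a₂ := -b, a₃ := -b, a₄ := 0, a₆ := 0 } :
        WeierstrassCurve K).toAffine.Nonsingular 0 0,
      addOrderOf (WeierstrassCurve.Affine.Point.some 0 0 h) = 29 := by
  subst hb; subst hc

  have keyb : (-((-145*a^9 - 14*a^8 - 66*a^7 + 114*a^6 + 175*a^5 - 137*a^4 - 211*a^3 - 324*a^2 - 85*a + 92)/43)) * (((-100/43)*a^9 + (-195/43)*a^8 + (39/43)*a^7 + (132/43)*a^6 + (438/43)*a^5 + (-179/43)*a^4 + (-233/43)*a^3 + (-735/43)*a^2 + (-241/43)*a + (790/43))) = 1 := by linear_combination (((-14500/1849)*a^8 + (-29675/1849)*a^7 + (-3675/1849)*a^6 + (-10784/1849)*a^5 + (48312/1849)*a^4 + (12018/1849)*a^3 + (-39964/1849)*a^2 + (-59736/1849)*a + (-74529/1849))) * hpoly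
  have hP : (({ a₁ := 1 - (a^9 + a^7 - a^6 - a^5 + a^4 + a^3 + 3*a^2 + a - 1), a₂ := -((-145*a^9 - 14*a^8 - 66*a^7 + 114*a^6 + 175*a^5 - 137*a^4 - 211*a^3 - 324*a^2 - 85*a + 92)/43), a₃ := -((-145*a^9 - 14*a^8 - 66*a^7 + 114*a^6 + 175*a^5 - 137*a^4 - 211*a^3 - 324*a^2 - 85*a + 92)/43), a₄ := 0, a₆ := 0 } : WeierstrassCurve K).toAffine).Nonsingular 0 0 :=
    WeierstrassCurve.Affine.nonsingular_zero.mpr ⟨rfl, Or.inl (left_ne_zero_of_mul_eq_one keyb)⟩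
  have key0 : ((0) - (-(0) - (1 - (a^9 + a^7 - a^6 - a^5 + a^4 + a^3 + 3*a^2 + a - 1))*(0) - (-((-145*a^9 - 14*a^8 - 66*a^7 + 114*a^6 + 175*a^5 - 137*a^4 - 211*a^3 - 324*a^2 - 85*a + 92)/43)))) * (((-100/43)*a^9 + (-195/43)*a^8 + (39/43)*a^7 + (132/43)*a^6 + (438/43)*a^5 + (-179/43)*a^4 + (-233/43)*a^3 + (-735/43)*a^2 + (-241/43)*a + (790/43))) = 1 := by
    linear_combination (((-14500/1849)*a^8 + (-29675/1849)*a^7 + (-3675/1849)*a^6 + (-10784/1849)*a^5 + (48312/1849)*a^4 + (12018/1849)*a^3 + (-39964/1849)*a^2 + (-59736/1849)*a + (-74529/1849))) * hpoly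
  have hne0 : (0) ≠ -(0) - (1 - (a^9 + a^7 - a^6 - a^5 + a^4 + a^3 + 3*a^2 + a - 1))*(0) - (-((-145*a^9 - 14*a^8 - 66*a^7 + 114*a^6 + 175*a^5 - 137*a^4 - 211*a^3 - 324*a^2 - 85*a + 92)/43)) := sub_ne_zero.mp (left_ne_zero_of_mul_eq_one key0)
  obtain ⟨h2, e0⟩ := Helper29.dbl_eq hP hne0
    (Helper29.slope_eq_of_Y_ne hne0 (show 3*(0)^2 + 2*(-((-145*a^9 - 14*a^8 - 66*a^7 + 114*a^6 + 175*a^5 - 137*a^4 - 211*a^3 - 324*a^2 - 85*a + 92)/43))*(0) + 0 - (1 - (a^9 + a^7 - a^6 - a^5 + a^4 + a^3 + 3*a^2 + a - 1))*(0) = (0) * ((0) - (-(0) - (1 - (a^9 + a^7 - a^6 - a^5 + a^4 + a^3 + 3*a^2 + a - 1))*(0) - (-((-145*a^9 - 14*a^8 - 66*a^7 + 114*a^6 + 175*a^5 - 137*a^4 - 211*a^3 - 324*a^2 - 85*a + 92)/43)))) by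
      linear_combination (0) * hpoly))
    (show (0)^2 + (1 - (a^9 + a^7 - a^6 - a^5 + a^4 + a^3 + 3*a^2 + a - 1))*(0) - (-((-145*a^9 - 14*a^8 - 66*a^7 + 114*a^6 + 175*a^5 - 137*a^4 - 211*a^3 - 324*a^2 - 85*a + 92)/43)) - (0) - (0) = (((-145/43)*a^9 + (-14/43)*a^8 + (-66/43)*a^7 + (114/43)*a^6 + (175/43)*a^5 + (-137/43)*a^4 + (-211/43)*a^3 + (-324/43)*a^2 + (-85/43)*a + (92/43))) by linear_combination (0) * hpoly)
    (show -((0)*((((-145/43)*a^9 + (-14/43)*a^8 + (-66/43)*a^7 + (114/43)*a^6 + (175/43)*a^5 + (-137/43)*a^4 + (-211/43)*a^3 + (-324/43)*a^2 + (-85/43)*a + (92/43))) - (0)) + (0)) - (1 - (a^9 + a^7 - a^6 - a^5 + a^4 + a^3 + 3*a^2 + a - 1))*(((-145/43)*a^9 + (-14/43)*a^8 + (-66/43)*a^7 + (114/43)*a^6 + (175/43)*a^5 + (-137/43)*a^4 + (-211/43)*a^3 + (-324/43)*a^2 + (-85/43)*a + (92/43))) - (-((-145*a^9 - 14*a^8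 - 66*a^7 + 114*a^6 + 175*a^5 - 137*a^4 - 211*a^3 - 324*a^2 - 85*a + 92)/43)) = (((431/43)*a^9 + (60/43)*a^8 + (-1904/43)*a^7 + (1213/43)*a^6 + (-578/43)*a^5 + (495/43)*a^4 + (3085/43)*a^3 + (-3065/43)*a^2 + (-1970/43)*a + (1037/43))) by linear_combination (((-145/43)*a^8 + (-14/43)*a^7 + (-211/43)*a^6 + (-45/43)*a^5 + (240/43)*a^4 + (-365/43)*a^3 + (-29/43)*a^2 + (-111/43)*a + (-1129/43))) * hpoly)
  have key1 : ((((431/43)*a^9 + (60/43)*a^8 + (-1904/43)*a^7 + (1213/43)*a^6 + (-578/43)*a^5 + (495/43)*a^4 + (3085/43)*a^3 + (-3065/43)*a^2 + (-1970/43)*a + (1037/43))) - (-(((431/43)*a^9 + (60/43)*a^8 + (-1904/43)*a^7 + (1213/43)*a^6 + (-578/43)*a^5 + (495/43)*a^4 + (3085/43)*a^3 + (-3065/43)*a^2 + (-1970/43)*a + (1037/43))) - (1 - (a^9 + a^7 - a^6 - a^5 + a^4 + a^3 + 3*a^2 + a - 1))*(((-145/43)*a^9 + (-14/43)*a^8 +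 (-66/43)*a^7 + (114/43)*a^6 + (175/43)*a^5 + (-137/43)*a^4 + (-211/43)*a^3 + (-324/43)*a^2 + (-85/43)*a + (92/43))) - (-((-145*a^9 - 14*a^8 - 66*a^7 + 114*a^6 + 175*a^5 - 137*a^4 - 211*a^3 - 324*a^2 - 85*a + 92)/43)))) * (((-1514/43)*a^9 + (-1830/43)*a^8 + (280/43)*a^7 + (2370/43)*a^6 + (3998/43)*a^5 + (-2348/43)*a^4 + (-3341/43)*a^3 + (-8750/43)*a^2 + (-416/43)*a + (7953/43))) = 1 := by
    linear_combination (((-219530/1849)*a^17 + (-286546/1849)*a^16 + (-304474/1849)*a^15 + (-106690/1849)*a^14 + (952980/1849)*a^13 + (114772/1849)*a^12 + (-346145/1849)*a^11 + (-2318766/1849)*a^10 + (-2992217/1849)*a^9 + (-1445238/1849)*a^8 + (-609802/1849)*a^7 + (8484850/1849)*a^6 + (2801240/1849)*a^5 + (-7107673/1849)*a^4 + (-49490/1849)*a^3 + (-16804184/1849)*a^2 + (805141/1849)*a + (17224349/1849))) * hpoly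
  have hne1 : (((431/43)*a^9 + (60/43)*a^8 + (-1904/43)*a^7 + (1213/43)*a^6 + (-578/43)*a^5 + (495/43)*a^4 + (3085/43)*a^3 + (-3065/43)*a^2 + (-1970/43)*a + (1037/43))) ≠ -(((431/43)*a^9 + (60/43)*a^8 + (-1904/43)*a^7 + (1213/43)*a^6 + (-578/43)*a^5 + (495/43)*a^4 + (3085/43)*a^3 + (-3065/43)*a^2 + (-1970/43)*a + (1037/43))) - (1 - (a^9 + a^7 - a^6 - a^5 + a^4 + a^3 + 3*a^2 + a - 1))*(((-145/43)*a^9 + (-14/43)*a^8 + (-66/43)*a^7 + (114/43)*a^6 + (175/43)*a^5 + (-137/43)*a^4 + (-211/43)*a^3 + (-324/43)*a^2 + (-85/43)*a + (92/43))) - (-((-145*a^9 - 14*a^8 - 66*a^7 + 114*a^6 + 175*a^5 - 137*a^4 - 211*a^3 - 324*a^2 - 85*a + 92)/43)) := sub_ne_zero.mp (left_ne_zero_of_mul_eq_one key1)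
  obtain ⟨h4, e1⟩ := Helper29.dbl_eq h2 hne1
    (Helper29.slope_eq_of_Y_ne hne1 (show 3*(((-145/43)*a^9 + (-14/43)*a^8 + (-66/43)*a^7 + (114/43)*a^6 + (175/43)*a^5 + (-137/43)*a^4 + (-211/43)*a^3 + (-324/43)*a^2 + (-85/43)*a + (92/43)))^2 + 2*(-((-145*a^9 - 14*a^8 - 66*a^7 + 114*a^6 + 175*a^5 - 137*a^4 - 211*a^3 - 324*a^2 - 85*a + 92)/43))*(((-145/43)*a^9 + (-14/43)*a^8 + (-66/43)*a^7 + (114/43)*a^6 + (175/43)*a^5 + (-137/43)*a^4 + (-211/43)*a^3 + (-324/43)*a^2 + (-85/43)*a + (92/43))) + 0 - (1 - (a^9 + a^7 - a^6 - a^5 + a^4 + a^3 + 3*a^2 + a - 1))*(((431/43)*a^9 + (60/43)*a^8 + (-1904/43)*a^7 + (1213/43)*a^6 + (-578/43)*a^5 + (495/43)*a^4 + (3085/43)*a^3 + (-3065/43)*a^2 + (-1970/43)*a + (1037/43))) = (((-2/43)*a^9 + (-34/43)*a^8 + (24/43)*a^7 + (25/43)*a^6 + (-5/43)*a^5 + (42/43)*a^4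 + (-64/43)*a^3 + (-62/43)*a^2 + (27/43)*a + (-10/43))) * ((((431/43)*a^9 + (60/43)*a^8 + (-1904/43)*a^7 + (1213/43)*a^6 + (-578/43)*a^5 + (495/43)*a^4 + (3085/43)*a^3 + (-3065/43)*a^2 + (-1970/43)*a + (1037/43))) - (-(((431/43)*a^9 + (60/43)*a^8 + (-1904/43)*a^7 + (1213/43)*a^6 + (-578/43)*a^5 + (495/43)*a^4 + (3085/43)*a^3 + (-3065/43)*a^2 + (-1970/43)*a + (1037/43))) - (1 - (a^9 + a^7 - a^6 - a^5 + a^4 + a^3 + 3*a^2 + a - 1))*(((-145/43)*a^9 + (-14/43)*a^8 + (-66/43)*a^7 + (114/43)*a^6 + (175/43)*a^5 + (-137/43)*a^4 + (-211/43)*a^3 + (-324/43)*a^2 + (-85/43)*a + (92/43))) - (-((-145*a^9 - 14*a^8 - 66*a^7 + 114*a^6 + 175*a^5 - 137*a^4 - 211*a^3 - 324*a^2 - 85*a + 92)/43)))) by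
      linear_combination (((290/1849)*a^17 + (4958/1849)*a^16 + (-2582/1849)*a^15 + (3303/1849)*a^14 + (-3639/1849)*a^13 + (-19805/1849)*a^12 + (26850/1849)*a^11 + (-303/1849)*a^10 + (3578/1849)*a^9 + (104356/1849)*a^8 + (-41769/1849)*a^7 + (-75628/1849)*a^6 + (43708/1849)*a^5 + (-98931/1849)*a^4 + (102430/1849)*a^3 + (223295/1849)*a^2 + (-19397/1849)*a + (-59058/1849))) * hpoly))
    (show (((-2/43)*a^9 + (-34/43)*a^8 + (24/43)*a^7 + (25/43)*a^6 + (-5/43)*a^5 + (42/43)*a^4 + (-64/43)*a^3 + (-62/43)*a^2 + (27/43)*a + (-10/43)))^2 + (1 - (a^9 + a^7 - a^6 - a^5 + a^4 + a^3 + 3*a^2 + a - 1))*(((-2/43)*a^9 + (-34/43)*a^8 + (24/43)*a^7 + (25/43)*a^6 + (-5/43)*a^5 + (42/43)*a^4 + (-64/43)*a^3 + (-62/43)*a^2 + (27/43)*a + (-10/43))) - (-((-145*a^9 - 14*a^8 - 66*a^7 + 114*a^6 + 175*a^5 - 137*a^4 - 211*a^3 - 324*a^2 - 85*a + 92)/43))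 - (((-145/43)*a^9 + (-14/43)*a^8 + (-66/43)*a^7 + (114/43)*a^6 + (175/43)*a^5 + (-137/43)*a^4 + (-211/43)*a^3 + (-324/43)*a^2 + (-85/43)*a + (92/43))) - (((-145/43)*a^9 + (-14/43)*a^8 + (-66/43)*a^7 + (114/43)*a^6 + (175/43)*a^5 + (-137/43)*a^4 + (-211/43)*a^3 + (-324/43)*a^2 + (-85/43)*a + (92/43))) = (((116/43)*a^9 + (123/43)*a^8 + (70/43)*a^7 + (-160/43)*a^6 + (-140/43)*a^5 + (-28/43)*a^4 + (272/43)*a^3 + (586/43)*a^2 + (111/43)*a + (-151/43))) by linear_combination (((90/1849)*a^8 + (1598/1849)*a^7 + (114/1849)*a^6 + (-1251/1849)*a^5 + (-273/1849)*a^4 + (-1715/1849)*a^3 + (127/1849)*a^2 + (4648/1849)*a + (1777/1849))) * hpoly)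
    (show -((((-2/43)*a^9 + (-34/43)*a^8 + (24/43)*a^7 + (25/43)*a^6 + (-5/43)*a^5 + (42/43)*a^4 + (-64/43)*a^3 + (-62/43)*a^2 + (27/43)*a + (-10/43)))*((((116/43)*a^9 + (123/43)*a^8 + (70/43)*a^7 + (-160/43)*a^6 + (-140/43)*a^5 + (-28/43)*a^4 + (272/43)*a^3 + (586/43)*a^2 + (111/43)*a + (-151/43))) - (((-145/43)*a^9 + (-14/43)*a^8 + (-66/43)*a^7 + (114/43)*a^6 + (175/43)*a^5 + (-137/43)*a^4 + (-211/43)*a^3 + (-324/43)*a^2 + (-85/43)*a + (92/43)))) + (((431/43)*a^9 + (60/43)*a^8 + (-1904/43)*a^7 + (1213/43)*a^6 + (-578/43)*a^5 + (495/43)*a^4 + (3085/43)*a^3 + (-3065/43)*a^2 + (-1970/43)*a + (1037/43)))) - (1 - (a^9 + a^7 - a^6 - a^5 + a^4 + a^3 + 3*a^2 + a - 1))*(((116/43)*a^9 + (123/43)*a^8 + (70/43)*a^7 + (-160/43)*a^6 + (-140/43)*a^5 + (-28/43)*a^4 + (272/43)*a^3 + (586/43)*a^2 + (111/43)*a + (-151/43)))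 - (-((-145*a^9 - 14*a^8 - 66*a^7 + 114*a^6 + 175*a^5 - 137*a^4 - 211*a^3 - 324*a^2 - 85*a + 92)/43)) = (((753/43)*a^9 + (460/43)*a^8 + (252/43)*a^7 + (-748/43)*a^6 + (-891/43)*a^5 + (226/43)*a^4 + (1650/43)*a^3 + (2531/43)*a^2 + (391/43)*a + (-621/43))) by linear_combination (((5510/1849)*a^8 + (14437/1849)*a^7 + (6664/1849)*a^6 + (-1296/1849)*a^5 + (257/1849)*a^4 + (-21170/1849)*a^3 + (22486/1849)*a^2 + (49972/1849)*a + (-3376/1849))) * hpoly)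
  have key2 : ((((753/43)*a^9 + (460/43)*a^8 + (252/43)*a^7 + (-748/43)*a^6 + (-891/43)*a^5 + (226/43)*a^4 + (1650/43)*a^3 + (2531/43)*a^2 + (391/43)*a + (-621/43))) - (-(((753/43)*a^9 + (460/43)*a^8 + (252/43)*a^7 + (-748/43)*a^6 + (-891/43)*a^5 + (226/43)*a^4 + (1650/43)*a^3 + (2531/43)*a^2 + (391/43)*a + (-621/43))) - (1 - (a^9 + a^7 - a^6 - a^5 + a^4 + a^3 + 3*a^2 + a - 1))*(((116/43)*a^9 + (123/43)*a^8 + (70/43)*a^7 + (-160/43)*a^6 + (-140/43)*a^5 + (-28/43)*a^4 + (272/43)*a^3 + (586/43)*a^2 + (111/43)*a + (-151/43))) - (-((-145*a^9 - 14*a^8 - 66*a^7 + 114*a^6 + 175*a^5 - 137*a^4 - 211*a^3 - 324*a^2 - 85*a + 92)/43)))) * (((-368/43)*a^9 + (-279/43)*a^8 + (-56/43)*a^7 + (773/43)*a^6 + (499/43)*a^5 + (-141/43)*a^4 + (-1198/43)*a^3 + (-1475/43)*a^2 + (-192/43)*a + (1686/43))) = 1 := by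
    linear_combination (((42688/1849)*a^17 + (77628/1849)*a^16 + (109261/1849)*a^15 + (-1814/1849)*a^14 + (-143690/1849)*a^13 + (-205264/1849)*a^12 + (93543/1849)*a^11 + (608534/1849)*a^10 + (796197/1849)*a^9 + (-291944/1849)*a^8 + (-1292574/1849)*a^7 + (-1493465/1849)*a^6 + (349536/1849)*a^5 + (1988979/1849)*a^4 + (1875649/1849)*a^3 + (-703091/1849)*a^2 + (-3115538/1849)*a + (-2760145/1849))) * hpoly
  have hne2 : (((753/43)*a^9 + (460/43)*a^8 + (252/43)*a^7 + (-748/43)*a^6 + (-891/43)*a^5 + (226/43)*a^4 + (1650/43)*a^3 + (2531/43)*a^2 + (391/43)*a + (-621/43))) ≠ -(((753/43)*a^9 + (460/43)*a^8 + (252/43)*a^7 + (-748/43)*a^6 + (-891/43)*a^5 + (226/43)*a^4 + (1650/43)*a^3 + (2531/43)*a^2 + (391/43)*a + (-621/43))) - (1 - (a^9 + a^7 - a^6 - a^5 + a^4 + a^3 + 3*a^2 + a - 1))*(((116/43)*a^9 + (123/43)*a^8 + (70/43)*a^7 + (-160/43)*a^6 + (-140/43)*a^5 + (-28/43)*a^4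 + (272/43)*a^3 + (586/43)*a^2 + (111/43)*a + (-151/43))) - (-((-145*a^9 - 14*a^8 - 66*a^7 + 114*a^6 + 175*a^5 - 137*a^4 - 211*a^3 - 324*a^2 - 85*a + 92)/43)) := sub_ne_zero.mp (left_ne_zero_of_mul_eq_one key2)
  obtain ⟨h8, e2⟩ := Helper29.dbl_eq h4 hne2
    (Helper29.slope_eq_of_Y_ne hne2 (show 3*(((116/43)*a^9 + (123/43)*a^8 + (70/43)*a^7 + (-160/43)*a^6 + (-140/43)*a^5 + (-28/43)*a^4 + (272/43)*a^3 + (586/43)*a^2 + (111/43)*a + (-151/43)))^2 + 2*(-((-145*a^9 - 14*a^8 - 66*a^7 + 114*a^6 + 175*a^5 - 137*a^4 - 211*a^3 - 324*a^2 - 85*a + 92)/43))*(((116/43)*a^9 + (123/43)*a^8 + (70/43)*a^7 + (-160/43)*a^6 + (-140/43)*a^5 + (-28/43)*a^4 + (272/43)*a^3 + (586/43)*a^2 + (111/43)*a + (-151/43))) + 0 - (1 - (a^9 + a^7 - a^6 - a^5 + a^4 + a^3 + 3*a^2 + a - 1))*(((753/43)*a^9 + (460/43)*a^8 + (252/43)*a^7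 + (-748/43)*a^6 + (-891/43)*a^5 + (226/43)*a^4 + (1650/43)*a^3 + (2531/43)*a^2 + (391/43)*a + (-621/43))) = (((118/43)*a^9 + (28/43)*a^8 + (89/43)*a^7 + (-185/43)*a^6 + (-49/43)*a^5 + (16/43)*a^4 + (207/43)*a^3 + (390/43)*a^2 + (-2/43)*a + (-98/43))) * ((((753/43)*a^9 + (460/43)*a^8 + (252/43)*a^7 + (-748/43)*a^6 + (-891/43)*a^5 + (226/43)*a^4 + (1650/43)*a^3 + (2531/43)*a^2 + (391/43)*a + (-621/43))) - (-(((753/43)*a^9 + (460/43)*a^8 + (252/43)*a^7 + (-748/43)*a^6 + (-891/43)*a^5 + (226/43)*a^4 + (1650/43)*a^3 + (2531/43)*a^2 + (391/43)*a + (-621/43))) - (1 - (a^9 + a^7 - a^6 - a^5 + a^4 + a^3 + 3*a^2 + a - 1))*(((116/43)*a^9 + (123/43)*a^8 + (70/43)*a^7 + (-160/43)*a^6 + (-140/43)*a^5 + (-28/43)*a^4 + (272/43)*a^3 + (586/43)*a^2 + (111/43)*a + (-151/43))) - (-((-145*a^9 - 14*a^8 - 66*a^7 + 114*a^6 + 175*a^5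 - 137*a^4 - 211*a^3 - 324*a^2 - 85*a + 92)/43)))) by
      linear_combination (((13688/1849)*a^17 + (17762/1849)*a^16 + (35716/1849)*a^15 + (4017/1849)*a^14 + (-17107/1849)*a^13 + (-34376/1849)*a^12 + (27544/1849)*a^11 + (146226/1849)*a^10 + (183364/1849)*a^9 + (51310/1849)*a^8 + (-57270/1849)*a^7 + (-169399/1849)*a^6 + (88245/1849)*a^5 + (222120/1849)*a^4 + (289593/1849)*a^3 + (102376/1849)*a^2 + (-110211/1849)*a + (-10735/1849))) * hpoly))
    (show (((118/43)*a^9 + (28/43)*a^8 + (89/43)*a^7 + (-185/43)*a^6 + (-49/43)*a^5 + (16/43)*a^4 + (207/43)*a^3 + (390/43)*a^2 + (-2/43)*a + (-98/43)))^2 + (1 - (a^9 + a^7 - a^6 - a^5 + a^4 + a^3 + 3*a^2 + a - 1))*(((118/43)*a^9 + (28/43)*a^8 + (89/43)*a^7 + (-185/43)*a^6 + (-49/43)*a^5 + (16/43)*a^4 + (207/43)*a^3 + (390/43)*a^2 + (-2/43)*a + (-98/43))) - (-((-145*a^9 - 14*a^8 - 66*a^7 + 114*a^6 + 175*a^5 -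 137*a^4 - 211*a^3 - 324*a^2 - 85*a + 92)/43)) - (((116/43)*a^9 + (123/43)*a^8 + (70/43)*a^7 + (-160/43)*a^6 + (-140/43)*a^5 + (-28/43)*a^4 + (272/43)*a^3 + (586/43)*a^2 + (111/43)*a + (-151/43))) - (((116/43)*a^9 + (123/43)*a^8 + (70/43)*a^7 + (-160/43)*a^6 + (-140/43)*a^5 + (-28/43)*a^4 + (272/43)*a^3 + (586/43)*a^2 + (111/43)*a + (-151/43))) = (((1)*a^9 + (-1)*a^6 + (3)*a^3 + (1)*a^2 + (-1)*a)) by linear_combination (((8850/1849)*a^8 + (5404/1849)*a^7 + (12887/1849)*a^6 + (-9151/1849)*a^5 + (1363/1849)*a^4 + (-7750/1849)*a^3 + (16645/1849)*a^2 + (29318/1849)*a + (18118/1849))) * hpoly)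
    (show -((((118/43)*a^9 + (28/43)*a^8 + (89/43)*a^7 + (-185/43)*a^6 + (-49/43)*a^5 + (16/43)*a^4 + (207/43)*a^3 + (390/43)*a^2 + (-2/43)*a + (-98/43)))*((((1)*a^9 + (-1)*a^6 + (3)*a^3 + (1)*a^2 + (-1)*a)) - (((116/43)*a^9 + (123/43)*a^8 + (70/43)*a^7 + (-160/43)*a^6 + (-140/43)*a^5 + (-28/43)*a^4 + (272/43)*a^3 + (586/43)*a^2 + (111/43)*a + (-151/43)))) + (((753/43)*a^9 + (460/43)*a^8 + (252/43)*a^7 + (-748/43)*a^6 + (-891/43)*a^5 + (226/43)*a^4 + (1650/43)*a^3 + (2531/43)*a^2 + (391/43)*a + (-621/43)))) - (1 - (a^9 + a^7 - a^6 - a^5 + a^4 + a^3 + 3*a^2 + a - 1))*(((1)*a^9 + (-1)*a^6 + (3)*a^3 + (1)*a^2 + (-1)*a)) - (-((-145*a^9 - 14*a^8 - 66*a^7 + 114*a^6 + 175*a^5 - 137*a^4 - 211*a^3 - 324*a^2 - 85*a + 92)/43)) = (((33/43)*a^9 + (-84/43)*a^8 + (206/43)*a^7 + (-133/43)*a^6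 + (-25/43)*a^5 + (124/43)*a^4 + (-277/43)*a^3 + (249/43)*a^2 + (178/43)*a + (-93/43))) by linear_combination (((10463/1849)*a^8 + (16558/1849)*a^7 + (20050/1849)*a^6 + (2824/1849)*a^5 + (-8631/1849)*a^4 + (-5809/1849)*a^3 + (16333/1849)*a^2 + (59698/1849)*a + (49456/1849))) * hpoly)
  have key3 : ((((33/43)*a^9 + (-84/43)*a^8 + (206/43)*a^7 + (-133/43)*a^6 + (-25/43)*a^5 + (124/43)*a^4 + (-277/43)*a^3 + (249/43)*a^2 + (178/43)*a + (-93/43))) - (-(((33/43)*a^9 + (-84/43)*a^8 + (206/43)*a^7 + (-133/43)*a^6 + (-25/43)*a^5 + (124/43)*a^4 + (-277/43)*a^3 + (249/43)*a^2 + (178/43)*a + (-93/43))) - (1 - (a^9 + a^7 - a^6 - a^5 + a^4 + a^3 + 3*a^2 + a - 1))*(((1)*a^9 + (-1)*a^6 + (3)*a^3 + (1)*a^2 + (-1)*a)) - (-((-145*a^9 - 14*a^8 - 66*a^7 + 114*a^6 + 175*a^5 - 137*a^4 - 211*a^3 - 324*a^2 - 85*a + 92)/43)))) * (((1330/43)*a^9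 + (508/43)*a^8 + (165/43)*a^7 + (-2607/43)*a^6 + (-975/43)*a^5 + (1052/43)*a^4 + (3086/43)*a^3 + (5153/43)*a^2 + (-2045/43)*a + (-3455/43))) = 1 := by
    linear_combination (((-1330/43)*a^17 + (-508/43)*a^16 + (-1495/43)*a^15 + (2099/43)*a^14 + (2140/43)*a^13 + (733/43)*a^12 + (-6444/43)*a^11 + (-9171/43)*a^10 + (-6046/43)*a^9 + (471765/1849)*a^8 + (434450/1849)*a^7 + (672174/1849)*a^6 + (-658342/1849)*a^5 + (-1079130/1849)*a^4 + (-174479/1849)*a^3 + (-49757/1849)*a^2 + (1259267/1849)*a + (958641/1849))) * hpoly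
  have hne3 : (((33/43)*a^9 + (-84/43)*a^8 + (206/43)*a^7 + (-133/43)*a^6 + (-25/43)*a^5 + (124/43)*a^4 + (-277/43)*a^3 + (249/43)*a^2 + (178/43)*a + (-93/43))) ≠ -(((33/43)*a^9 + (-84/43)*a^8 + (206/43)*a^7 + (-133/43)*a^6 + (-25/43)*a^5 + (124/43)*a^4 + (-277/43)*a^3 + (249/43)*a^2 + (178/43)*a + (-93/43))) - (1 - (a^9 + a^7 - a^6 - a^5 + a^4 + a^3 + 3*a^2 + a - 1))*(((1)*a^9 + (-1)*a^6 + (3)*a^3 + (1)*a^2 + (-1)*a)) - (-((-145*a^9 - 14*a^8 - 66*a^7 + 114*a^6 + 175*a^5 - 137*a^4 - 211*a^3 - 324*a^2 - 85*a + 92)/43)) := sub_ne_zero.mp (left_ne_zero_of_mul_eq_one key3)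
  obtain ⟨h16, e3⟩ := Helper29.dbl_eq h8 hne3
    (Helper29.slope_eq_of_Y_ne hne3 (show 3*(((1)*a^9 + (-1)*a^6 + (3)*a^3 + (1)*a^2 + (-1)*a))^2 + 2*(-((-145*a^9 - 14*a^8 - 66*a^7 + 114*a^6 + 175*a^5 - 137*a^4 - 211*a^3 - 324*a^2 - 85*a + 92)/43))*(((1)*a^9 + (-1)*a^6 + (3)*a^3 + (1)*a^2 + (-1)*a)) + 0 - (1 - (a^9 + a^7 - a^6 - a^5 + a^4 + a^3 + 3*a^2 + a - 1))*(((33/43)*a^9 + (-84/43)*a^8 + (206/43)*a^7 + (-133/43)*a^6 + (-25/43)*a^5 + (124/43)*a^4 + (-277/43)*a^3 + (249/43)*a^2 + (178/43)*a + (-93/43))) = (((16/43)*a^9 + (57/43)*a^8 + (23/43)*a^7 + (15/43)*a^6 + (-132/43)*a^5 + (51/43)*a^4 + (-4/43)*a^3 + (195/43)*a^2 + (171/43)*a + (-135/43))) * ((((33/43)*a^9 + (-84/43)*a^8 + (206/43)*a^7 + (-133/43)*a^6 + (-25/43)*a^5 + (124/43)*a^4 + (-277/43)*a^3 + (249/43)*a^2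 + (178/43)*a + (-93/43))) - (-(((33/43)*a^9 + (-84/43)*a^8 + (206/43)*a^7 + (-133/43)*a^6 + (-25/43)*a^5 + (124/43)*a^4 + (-277/43)*a^3 + (249/43)*a^2 + (178/43)*a + (-93/43))) - (1 - (a^9 + a^7 - a^6 - a^5 + a^4 + a^3 + 3*a^2 + a - 1))*(((1)*a^9 + (-1)*a^6 + (3)*a^3 + (1)*a^2 + (-1)*a)) - (-((-145*a^9 - 14*a^8 - 66*a^7 + 114*a^6 + 175*a^5 - 137*a^4 - 211*a^3 - 324*a^2 - 85*a + 92)/43)))) by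
      linear_combination (((16/43)*a^17 + (57/43)*a^16 + (39/43)*a^15 + (72/43)*a^14 + (-125/43)*a^13 + (25/43)*a^12 + (-54/43)*a^11 + (409/43)*a^10 + (406/43)*a^9 + (24660/1849)*a^8 + (-17346/1849)*a^7 + (5436/1849)*a^6 + (-41774/1849)*a^5 + (46974/1849)*a^4 + (24633/1849)*a^3 + (47870/1849)*a^2 + (25004/1849)*a + (-29532/1849))) * hpoly))
    (show (((16/43)*a^9 + (57/43)*a^8 + (23/43)*a^7 + (15/43)*a^6 + (-132/43)*a^5 + (51/43)*a^4 + (-4/43)*a^3 + (195/43)*a^2 + (171/43)*a + (-135/43)))^2 + (1 - (a^9 + a^7 - a^6 - a^5 + a^4 + a^3 + 3*a^2 + a - 1))*(((16/43)*a^9 + (57/43)*a^8 + (23/43)*a^7 + (15/43)*a^6 + (-132/43)*a^5 + (51/43)*a^4 + (-4/43)*a^3 + (195/43)*a^2 + (171/43)*a + (-135/43))) - (-((-145*a^9 - 14*a^8 - 66*a^7 + 114*a^6 + 175*a^5 - 137*a^4 - 211*a^3 - 324*a^2 - 85*a + 92)/43)) - (((1)*a^9 + (-1)*a^6 + (3)*a^3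 + (1)*a^2 + (-1)*a)) - (((1)*a^9 + (-1)*a^6 + (3)*a^3 + (1)*a^2 + (-1)*a)) = (((-51/43)*a^9 + (-50/43)*a^8 + (-76/43)*a^7 + (100/43)*a^6 + (66/43)*a^5 + (-4/43)*a^4 + (-41/43)*a^3 + (-334/43)*a^2 + (-107/43)*a + (89/43))) by linear_combination (((-432/1849)*a^8 + (-627/1849)*a^7 + (2308/1849)*a^6 + (-170/1849)*a^5 + (4587/1849)*a^4 + (-7764/1849)*a^3 + (5333/1849)*a^2 + (-7527/1849)*a + (6744/1849))) * hpoly)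
    (show -((((16/43)*a^9 + (57/43)*a^8 + (23/43)*a^7 + (15/43)*a^6 + (-132/43)*a^5 + (51/43)*a^4 + (-4/43)*a^3 + (195/43)*a^2 + (171/43)*a + (-135/43)))*((((-51/43)*a^9 + (-50/43)*a^8 + (-76/43)*a^7 + (100/43)*a^6 + (66/43)*a^5 + (-4/43)*a^4 + (-41/43)*a^3 + (-334/43)*a^2 + (-107/43)*a + (89/43))) - (((1)*a^9 + (-1)*a^6 + (3)*a^3 + (1)*a^2 + (-1)*a))) + (((33/43)*a^9 + (-84/43)*a^8 + (206/43)*a^7 + (-133/43)*a^6 + (-25/43)*a^5 + (124/43)*a^4 + (-277/43)*a^3 + (249/43)*a^2 + (178/43)*a + (-93/43)))) - (1 - (a^9 + a^7 - a^6 - a^5 + a^4 + a^3 + 3*a^2 + a - 1))*(((-51/43)*a^9 + (-50/43)*a^8 + (-76/43)*a^7 + (100/43)*a^6 + (66/43)*a^5 + (-4/43)*a^4 + (-41/43)*a^3 + (-334/43)*a^2 + (-107/43)*a + (89/43))) - (-((-145*a^9 - 14*a^8 - 66*a^7 + 114*a^6 + 175*a^5 - 137*a^4 - 211*a^3 - 324*a^2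 - 85*a + 92)/43)) = (((88/43)*a^9 + (-181/43)*a^8 + (277/43)*a^7 + (-154/43)*a^6 + (-81/43)*a^5 + (302/43)*a^4 + (-366/43)*a^3 + (191/43)*a^2 + (274/43)*a + (-119/43))) by linear_combination (((-689/1849)*a^8 + (4008/1849)*a^7 + (767/1849)*a^6 + (7569/1849)*a^5 + (-7188/1849)*a^4 + (1923/1849)*a^3 + (-365/1849)*a^2 + (945/1849)*a + (17433/1849))) * hpoly)
  have key4 : ((((-51/43)*a^9 + (-50/43)*a^8 + (-76/43)*a^7 + (100/43)*a^6 + (66/43)*a^5 + (-4/43)*a^4 + (-41/43)*a^3 + (-334/43)*a^2 + (-107/43)*a + (89/43))) - (((1)*a^9 + (-1)*a^6 + (3)*a^3 + (1)*a^2 + (-1)*a))) * (((520/43)*a^9 + (154/43)*a^8 + (81/43)*a^7 + (-1039/43)*a^6 + (-291/43)*a^5 + (346/43)*a^4 + (1203/43)*a^3 + (1930/43)*a^2 + (-871/43)*a + (-1227/43))) = 1 := by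
    linear_combination (((-48880/1849)*a^8 + (-40476/1849)*a^7 + (-54834/1849)*a^6 + (58512/1849)*a^5 + (48538/1849)*a^4 + (19869/1849)*a^3 + (-85253/1849)*a^2 + (-221095/1849)*a + (-111052/1849))) * hpoly
  have hne4 : (((-51/43)*a^9 + (-50/43)*a^8 + (-76/43)*a^7 + (100/43)*a^6 + (66/43)*a^5 + (-4/43)*a^4 + (-41/43)*a^3 + (-334/43)*a^2 + (-107/43)*a + (89/43))) ≠ (((1)*a^9 + (-1)*a^6 + (3)*a^3 + (1)*a^2 + (-1)*a)) := sub_ne_zero.mp (left_ne_zero_of_mul_eq_one key4)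
  obtain ⟨h24, e4⟩ := Helper29.add_eq h16 h8 hne4
    (Helper29.slope_eq_of_X_ne hne4 (show (((88/43)*a^9 + (-181/43)*a^8 + (277/43)*a^7 + (-154/43)*a^6 + (-81/43)*a^5 + (302/43)*a^4 + (-366/43)*a^3 + (191/43)*a^2 + (274/43)*a + (-119/43))) - (((33/43)*a^9 + (-84/43)*a^8 + (206/43)*a^7 + (-133/43)*a^6 + (-25/43)*a^5 + (124/43)*a^4 + (-277/43)*a^3 + (249/43)*a^2 + (178/43)*a + (-93/43))) = (((-22/43)*a^9 + (13/43)*a^8 + (6/43)*a^7 + (60/43)*a^6 + (-55/43)*a^5 + (32/43)*a^4 + (-102/43)*a^3 + (6/43)*a^2 + (125/43)*a + (-67/43))) * ((((-51/43)*a^9 + (-50/43)*a^8 + (-76/43)*a^7 + (100/43)*a^6 + (66/43)*a^5 + (-4/43)*a^4 + (-41/43)*a^3 + (-334/43)*a^2 + (-107/43)*a + (89/43))) - (((1)*a^9 + (-1)*a^6 + (3)*a^3 + (1)*a^2 + (-1)*a))) by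
      linear_combination (((-2068/1849)*a^8 + (122/1849)*a^7 + (-458/1849)*a^6 + (5938/1849)*a^5 + (-1877/1849)*a^4 + (4166/1849)*a^3 + (-8942/1849)*a^2 + (-1595/1849)*a + (4845/1849))) * hpoly))
    (show (((-22/43)*a^9 + (13/43)*a^8 + (6/43)*a^7 + (60/43)*a^6 + (-55/43)*a^5 + (32/43)*a^4 + (-102/43)*a^3 + (6/43)*a^2 + (125/43)*a + (-67/43)))^2 + (1 - (a^9 + a^7 - a^6 - a^5 + a^4 + a^3 + 3*a^2 + a - 1))*(((-22/43)*a^9 + (13/43)*a^8 + (6/43)*a^7 + (60/43)*a^6 + (-55/43)*a^5 + (32/43)*a^4 + (-102/43)*a^3 + (6/43)*a^2 + (125/43)*a + (-67/43))) - (-((-145*a^9 - 14*a^8 - 66*a^7 + 114*a^6 + 175*a^5 - 137*a^4 - 211*a^3 - 324*a^2 - 85*a + 92)/43)) - (((-51/43)*a^9 + (-50/43)*a^8 + (-76/43)*a^7 + (100/43)*a^6 + (66/43)*a^5 + (-4/43)*a^4 + (-41/43)*a^3 + (-334/43)*a^2 + (-107/43)*a + (89/43))) - (((1)*a^9 + (-1)*a^6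 + (3)*a^3 + (1)*a^2 + (-1)*a)) = (((14/43)*a^9 + (-63/43)*a^8 + (-82/43)*a^7 + (83/43)*a^6 + (-8/43)*a^5 + (93/43)*a^4 + (61/43)*a^3 + (-297/43)*a^2 + (-103/43)*a + (70/43))) by linear_combination (((1430/1849)*a^8 + (-1131/1849)*a^7 + (593/1849)*a^6 + (-3709/1849)*a^5 + (3474/1849)*a^4 + (-4555/1849)*a^3 + (9089/1849)*a^2 + (-4203/1849)*a + (-4154/1849))) * hpoly)
    (show -((((-22/43)*a^9 + (13/43)*a^8 + (6/43)*a^7 + (60/43)*a^6 + (-55/43)*a^5 + (32/43)*a^4 + (-102/43)*a^3 + (6/43)*a^2 + (125/43)*a + (-67/43)))*((((14/43)*a^9 + (-63/43)*a^8 + (-82/43)*a^7 + (83/43)*a^6 + (-8/43)*a^5 + (93/43)*a^4 + (61/43)*a^3 + (-297/43)*a^2 + (-103/43)*a + (70/43))) - (((-51/43)*a^9 + (-50/43)*a^8 + (-76/43)*a^7 + (100/43)*a^6 + (66/43)*a^5 + (-4/43)*a^4 + (-41/43)*a^3 + (-334/43)*a^2 + (-107/43)*a + (89/43)))) + (((88/43)*a^9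 + (-181/43)*a^8 + (277/43)*a^7 + (-154/43)*a^6 + (-81/43)*a^5 + (302/43)*a^4 + (-366/43)*a^3 + (191/43)*a^2 + (274/43)*a + (-119/43)))) - (1 - (a^9 + a^7 - a^6 - a^5 + a^4 + a^3 + 3*a^2 + a - 1))*(((14/43)*a^9 + (-63/43)*a^8 + (-82/43)*a^7 + (83/43)*a^6 + (-8/43)*a^5 + (93/43)*a^4 + (61/43)*a^3 + (-297/43)*a^2 + (-103/43)*a + (70/43))) - (-((-145*a^9 - 14*a^8 - 66*a^7 + 114*a^6 + 175*a^5 - 137*a^4 - 211*a^3 - 324*a^2 - 85*a + 92)/43)) = (((-119/43)*a^9 + (-905/43)*a^8 + (869/43)*a^7 + (-125/43)*a^6 + (197/43)*a^5 + (908/43)*a^4 + (-2217/43)*a^3 + (-722/43)*a^2 + (768/43)*a + (-79/43))) by linear_combination (((2032/1849)*a^8 + (-3840/1849)*a^7 + (-3277/1849)*a^6 + (204/1849)*a^5 + (-6459/1849)*a^4 + (6582/1849)*a^3 + (9476/1849)*a^2 + (-23596/1849)*a + (5177/1849))) * hpoly)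
  have key5 : ((((14/43)*a^9 + (-63/43)*a^8 + (-82/43)*a^7 + (83/43)*a^6 + (-8/43)*a^5 + (93/43)*a^4 + (61/43)*a^3 + (-297/43)*a^2 + (-103/43)*a + (70/43))) - (((116/43)*a^9 + (123/43)*a^8 + (70/43)*a^7 + (-160/43)*a^6 + (-140/43)*a^5 + (-28/43)*a^4 + (272/43)*a^3 + (586/43)*a^2 + (111/43)*a + (-151/43)))) * (((133/43)*a^9 + (283/43)*a^8 + (-91/43)*a^7 + (-136/43)*a^6 + (-678/43)*a^5 + (389/43)*a^4 + (171/43)*a^3 + (1113/43)*a^2 + (161/43)*a + (-969/43))) = 1 := by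
    linear_combination (((-13566/1849)*a^8 + (-53604/1849)*a^7 + (-63572/1849)*a^6 + (-7031/1849)*a^5 + (87401/1849)*a^4 + (24860/1849)*a^3 + (41054/1849)*a^2 + (-189049/1849)*a + (-215998/1849))) * hpoly
  have hne5 : (((14/43)*a^9 + (-63/43)*a^8 + (-82/43)*a^7 + (83/43)*a^6 + (-8/43)*a^5 + (93/43)*a^4 + (61/43)*a^3 + (-297/43)*a^2 + (-103/43)*a + (70/43))) ≠ (((116/43)*a^9 + (123/43)*a^8 + (70/43)*a^7 + (-160/43)*a^6 + (-140/43)*a^5 + (-28/43)*a^4 + (272/43)*a^3 + (586/43)*a^2 + (111/43)*a + (-151/43))) := sub_ne_zero.mp (left_ne_zero_of_mul_eq_one key5)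
  obtain ⟨h28, e5⟩ := Helper29.add_eq h24 h4 hne5
    (Helper29.slope_eq_of_X_ne hne5 (show (((-119/43)*a^9 + (-905/43)*a^8 + (869/43)*a^7 + (-125/43)*a^6 + (197/43)*a^5 + (908/43)*a^4 + (-2217/43)*a^3 + (-722/43)*a^2 + (768/43)*a + (-79/43))) - (((753/43)*a^9 + (460/43)*a^8 + (252/43)*a^7 + (-748/43)*a^6 + (-891/43)*a^5 + (226/43)*a^4 + (1650/43)*a^3 + (2531/43)*a^2 + (391/43)*a + (-621/43))) = (((68/43)*a^9 + (38/43)*a^8 + (44/43)*a^7 + (-76/43)*a^6 + (-88/43)*a^5 + (34/43)*a^4 + (112/43)*a^3 + (259/43)*a^2 + (71/43)*a + (-90/43))) * ((((14/43)*a^9 + (-63/43)*a^8 + (-82/43)*a^7 + (83/43)*a^6 + (-8/43)*a^5 + (93/43)*a^4 + (61/43)*a^3 + (-297/43)*a^2 + (-103/43)*a + (70/43))) - (((116/43)*a^9 + (123/43)*a^8 + (70/43)*a^7 + (-160/43)*a^6 + (-140/43)*a^5 + (-28/43)*a^4 + (272/43)*a^3 + (586/43)*a^2 + (111/43)*a +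 (-151/43)))) by
      linear_combination (((6936/1849)*a^8 + (16524/1849)*a^7 + (21892/1849)*a^6 + (3556/1849)*a^5 + (-1586/1849)*a^4 + (-11540/1849)*a^3 + (3498/1849)*a^2 + (67652/1849)*a + (43196/1849))) * hpoly))
    (show (((68/43)*a^9 + (38/43)*a^8 + (44/43)*a^7 + (-76/43)*a^6 + (-88/43)*a^5 + (34/43)*a^4 + (112/43)*a^3 + (259/43)*a^2 + (71/43)*a + (-90/43)))^2 + (1 - (a^9 + a^7 - a^6 - a^5 + a^4 + a^3 + 3*a^2 + a - 1))*(((68/43)*a^9 + (38/43)*a^8 + (44/43)*a^7 + (-76/43)*a^6 + (-88/43)*a^5 + (34/43)*a^4 + (112/43)*a^3 + (259/43)*a^2 + (71/43)*a + (-90/43))) - (-((-145*a^9 - 14*a^8 - 66*a^7 + 114*a^6 + 175*a^5 - 137*a^4 - 211*a^3 - 324*a^2 - 85*a + 92)/43)) - (((14/43)*a^9 + (-63/43)*a^8 + (-82/43)*a^7 + (83/43)*a^6 + (-8/43)*a^5 + (93/43)*a^4 + (61/43)*a^3 + (-297/43)*a^2 + (-103/43)*a + (70/43))) - (((116/43)*a^9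 + (123/43)*a^8 + (70/43)*a^7 + (-160/43)*a^6 + (-140/43)*a^5 + (-28/43)*a^4 + (272/43)*a^3 + (586/43)*a^2 + (111/43)*a + (-151/43))) = (0) by linear_combination (((1700/1849)*a^8 + (3534/1849)*a^7 + (2612/1849)*a^6 + (966/1849)*a^5 + (-2290/1849)*a^4 + (-2820/1849)*a^3 + (3880/1849)*a^2 + (8795/1849)*a + (7799/1849))) * hpoly)
    (show -((((68/43)*a^9 + (38/43)*a^8 + (44/43)*a^7 + (-76/43)*a^6 + (-88/43)*a^5 + (34/43)*a^4 + (112/43)*a^3 + (259/43)*a^2 + (71/43)*a + (-90/43)))*((0) - (((14/43)*a^9 + (-63/43)*a^8 + (-82/43)*a^7 + (83/43)*a^6 + (-8/43)*a^5 + (93/43)*a^4 + (61/43)*a^3 + (-297/43)*a^2 + (-103/43)*a + (70/43)))) + (((-119/43)*a^9 + (-905/43)*a^8 + (869/43)*a^7 + (-125/43)*a^6 + (197/43)*a^5 + (908/43)*a^4 + (-2217/43)*a^3 + (-722/43)*a^2 + (768/43)*a + (-79/43)))) - (1 - (a^9 + a^7 - a^6 - a^5 + a^4 + a^3 + 3*a^2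 + a - 1))*(0) - (-((-145*a^9 - 14*a^8 - 66*a^7 + 114*a^6 + 175*a^5 - 137*a^4 - 211*a^3 - 324*a^2 - 85*a + 92)/43)) = (((-145*a^9 - 14*a^8 - 66*a^7 + 114*a^6 + 175*a^5 - 137*a^4 - 211*a^3 - 324*a^2 - 85*a + 92)/43)) by linear_combination (((952/1849)*a^8 + (-3752/1849)*a^7 + (-7354/1849)*a^6 + (596/1849)*a^5 + (-4946/1849)*a^4 + (6264/1849)*a^3 + (10704/1849)*a^2 + (-24590/1849)*a + (-2903/1849))) * hpoly)
  have hneg : WeierstrassCurve.Affine.Point.some _ _ h28 = -WeierstrassCurve.Affine.Point.some _ _ hP := by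
    rw [WeierstrassCurve.Affine.Point.neg_some]
    exact Helper29.pt_eq h28 _ rfl (show ((-145*a^9 - 14*a^8 - 66*a^7 + 114*a^6 + 175*a^5 - 137*a^4 - 211*a^3 - 324*a^2 - 85*a + 92)/43) = -(0:K) - (1 - (a^9 + a^7 - a^6 - a^5 + a^4 + a^3 + 3*a^2 + a - 1))*(0:K) - -((-145*a^9 - 14*a^8 - 66*a^7 + 114*a^6 + 175*a^5 - 137*a^4 - 211*a^3 - 324*a^2 - 85*a + 92)/43) by ring)
  have h29 : (29 : ℕ) • WeierstrassCurve.Affine.Point.some _ _ hP = 0 := by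
    have s2 : (2 : ℕ) • WeierstrassCurve.Affine.Point.some _ _ hP = WeierstrassCurve.Affine.Point.some _ _ h2 := by
      rw [two_nsmul]; exact e0
    have s4 : (4 : ℕ) • WeierstrassCurve.Affine.Point.some _ _ hP = WeierstrassCurve.Affine.Point.some _ _ h4 := by
      calc (4 : ℕ) • WeierstrassCurve.Affine.Point.some _ _ hP = (2 : ℕ) • WeierstrassCurve.Affine.Point.some _ _ hP + (2 : ℕ) • WeierstrassCurve.Affine.Point.some _ _ hP := by
            rw [← add_nsmul]
        _ = WeierstrassCurve.Affine.Point.some _ _ h2 + WeierstrassCurve.Affine.Point.some _ _ h2 := by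
            rw [s2]
        _ = WeierstrassCurve.Affine.Point.some _ _ h4 := e1
    have s8 : (8 : ℕ) • WeierstrassCurve.Affine.Point.some _ _ hP = WeierstrassCurve.Affine.Point.some _ _ h8 := by
      calc (8 : ℕ) • WeierstrassCurve.Affine.Point.some _ _ hP = (4 : ℕ) • WeierstrassCurve.Affine.Point.some _ _ hP + (4 : ℕ) • WeierstrassCurve.Affine.Point.some _ _ hP := by
            rw [← add_nsmul]
        _ = WeierstrassCurve.Affine.Point.some _ _ h4 + WeierstrassCurve.Affine.Point.some _ _ h4 := by
            rw [s4]
        _ = WeierstrassCurve.Affine.Point.some _ _ h8 := e2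
    have s16 : (16 : ℕ) • WeierstrassCurve.Affine.Point.some _ _ hP = WeierstrassCurve.Affine.Point.some _ _ h16 := by
      calc (16 : ℕ) • WeierstrassCurve.Affine.Point.some _ _ hP = (8 : ℕ) • WeierstrassCurve.Affine.Point.some _ _ hP + (8 : ℕ) • WeierstrassCurve.Affine.Point.some _ _ hP := by
            rw [← add_nsmul]
        _ = WeierstrassCurve.Affine.Point.some _ _ h8 + WeierstrassCurve.Affine.Point.some _ _ h8 := by
            rw [s8]
        _ = WeierstrassCurve.Affine.Point.some _ _ h16 := e3
    have s24 : (24 : ℕ) • WeierstrassCurve.Affine.Point.some _ _ hP = WeierstrassCurve.Affine.Point.some _ _ h24 := by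
      calc (24 : ℕ) • WeierstrassCurve.Affine.Point.some _ _ hP = (16 : ℕ) • WeierstrassCurve.Affine.Point.some _ _ hP + (8 : ℕ) • WeierstrassCurve.Affine.Point.some _ _ hP := by
            rw [← add_nsmul]
        _ = WeierstrassCurve.Affine.Point.some _ _ h16 + WeierstrassCurve.Affine.Point.some _ _ h8 := by
            rw [s16, s8]
        _ = WeierstrassCurve.Affine.Point.some _ _ h24 := e4
    have s28 : (28 : ℕ) • WeierstrassCurve.Affine.Point.some _ _ hP = WeierstrassCurve.Affine.Point.some _ _ h28 := by
      calc (28 : ℕ) • WeierstrassCurve.Affine.Point.some _ _ hP = (24 : ℕ) • WeierstrassCurve.Affine.Point.some _ _ hP + (4 : ℕ) • WeierstrassCurve.Affine.Point.some _ _ hP := by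
            rw [← add_nsmul]
        _ = WeierstrassCurve.Affine.Point.some _ _ h24 + WeierstrassCurve.Affine.Point.some _ _ h4 := by
            rw [s24, s4]
        _ = WeierstrassCurve.Affine.Point.some _ _ h28 := e5
    calc (29 : ℕ) • WeierstrassCurve.Affine.Point.some _ _ hP = (28 : ℕ) • WeierstrassCurve.Affine.Point.some _ _ hP + (1 : ℕ) • WeierstrassCurve.Affine.Point.some _ _ hP := by
          rw [← add_nsmul]
      _ = 0 := by rw [s28, one_nsmul, hneg, neg_add_cancel]
  haveI : Fact (Nat.Prime 29) := ⟨by norm_num⟩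
  exact ⟨hP, addOrderOf_eq_prime h29 (WeierstrassCurve.Affine.Point.some_ne_zero hP)⟩
end

section
/- Let K = ℚ(a) where a¹⁰ − 2a⁹ + 2a⁸ − 5a⁷ + 7a⁶ − 4a⁵ + 4a⁴ − 8a³ + 5a² − 1 = 0. Set b = (−23a⁹ + 21a⁸ + 19a⁷ − 71a⁶ + 95a⁵ − 159a⁴ + 178a³ − 78a² − 10a + 6)/97 and c = (60a⁹ − 59a⁸ + 39a⁷ − 207a⁶ + 98a⁵ + 31a⁴ + 8a³ − 58a² + 5a − 3)/97. Then the point (0,0) on the elliptic curve y² + (1−c)xy − by = x³ − bx² over K has order exactly 29. -/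
private lemma some_congr' {F : Type*} [Field F] {W : WeierstrassCurve.Affine F}
    {x₁ y₁ x₂ y₂ : F} {h₁ : W.Nonsingular x₁ y₁} {h₂ : W.Nonsingular x₂ y₂}
    (hx : x₁ = x₂) (hy : y₁ = y₂) :
    WeierstrassCurve.Affine.Point.some _ _ h₁ = WeierstrassCurve.Affine.Point.some _ _ h₂ := by
  subst hx; subst hy; rfl

open Classical in
set_option maxHeartbeats 2000000 in
private theorem aux29 (K : Type) [Field K] [CharZero K] (a : K)
    (hpoly : a^10 - 2*a^9 + 2*a^8 - 5*a^7 + 7*a^6 - 4*a^5 + 4*a^4 - 8*a^3 + 5*a^2 - 1 = 0) :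
    ∃ h : (({ a₁ := 1 - (60*a^9 - 59*a^8 + 39*a^7 - 207*a^6 + 98*a^5 + 31*a^4 + 8*a^3 - 58*a^2 + 5*a - 3)/97, a₂ := -((-23*a^9 + 21*a^8 + 19*a^7 - 71*a^6 + 95*a^5 - 159*a^4 + 178*a^3 - 78*a^2 - 10*a + 6)/97), a₃ := -((-23*a^9 + 21*a^8 + 19*a^7 - 71*a^6 + 95*a^5 - 159*a^4 + 178*a^3 - 78*a^2 - 10*a + 6)/97), a₄ := 0, a₆ := 0 } :
        WeierstrassCurve K)).toAffine.Nonsingular 0 0,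
      addOrderOf (WeierstrassCurve.Affine.Point.some _ _ h) = 29 := by
  set E : WeierstrassCurve.Affine K := (({ a₁ := 1 - (60*a^9 - 59*a^8 + 39*a^7 - 207*a^6 + 98*a^5 + 31*a^4 + 8*a^3 - 58*a^2 + 5*a - 3)/97, a₂ := -((-23*a^9 + 21*a^8 + 19*a^7 - 71*a^6 + 95*a^5 - 159*a^4 + 178*a^3 - 78*a^2 - 10*a + 6)/97), a₃ := -((-23*a^9 + 21*a^8 + 19*a^7 - 71*a^6 + 95*a^5 - 159*a^4 + 178*a^3 - 78*a^2 - 10*a + 6)/97), a₄ := 0, a₆ := 0 } : WeierstrassCurve K)).toAffine with hE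
  have ha1 : E.a₁ = 1 - (60*a^9 - 59*a^8 + 39*a^7 - 207*a^6 + 98*a^5 + 31*a^4 + 8*a^3 - 58*a^2 + 5*a - 3)/97 := by rw [hE]
  have ha2 : E.a₂ = -((-23*a^9 + 21*a^8 + 19*a^7 - 71*a^6 + 95*a^5 - 159*a^4 + 178*a^3 - 78*a^2 - 10*a + 6)/97) := by rw [hE]
  have ha3 : E.a₃ = -((-23*a^9 + 21*a^8 + 19*a^7 - 71*a^6 + 95*a^5 - 159*a^4 + 178*a^3 - 78*a^2 - 10*a + 6)/97) := by rw [hE]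
  have ha4 : E.a₄ = 0 := by rw [hE]
  have hbne : (((-23*a^9 + 21*a^8 + 19*a^7 - 71*a^6 + 95*a^5 - 159*a^4 + 178*a^3 - 78*a^2 - 10*a + 6)/97 : K)) ≠ 0 := fun h => one_ne_zero (α := K)
    (by linear_combination ((256/97)*a^9 + (-103/97)*a^8 + (244/97)*a^7 + (-1116/97)*a^6 + (250/97)*a^5 + (-495/97)*a^4 + (1321/97)*a^3 + (-823/97)*a^2 + (-108/97)*a + (-847/97) : K) * h + ((5888/9409)*a^8 + (4031/9409)*a^7 + (-803/9409)*a^6 + (9113/9409)*a^5 + (-8312/9409)*a^4 + (28852/9409)*a^3 + (-10247/9409)*a^2 + (7822/9409)*a + (-14491/9409) : K) * hpoly)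
  have h1 : E.Nonsingular 0 0 :=
    (WeierstrassCurve.Affine.nonsingular_zero (W := E)).mpr
      ⟨by rw [hE], Or.inl (by rw [ha3]; exact neg_ne_zero.mpr hbne)⟩
  refine ⟨h1, ?_⟩
  set P : _ := WeierstrassCurve.Affine.Point.some _ _ h1 with hP
  haveI : Fact (Nat.Prime 29) := ⟨by norm_num⟩
  have hyne : (0:K) ≠ E.negY 0 0 := by
    simp only [WeierstrassCurve.Affine.negY, ha1, ha3]
    intro hcon
    exact hbne (by linear_combination -hcon)
  have hL1 : E.slope 0 0 0 0 = 0 := by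
    rw [WeierstrassCurve.Affine.slope_of_Y_ne rfl hyne, ha1, ha2, ha4]
    rw [div_eq_zero_iff]; left; ring
  have hX1 : E.addX 0 0 (0:K) = ((-23/97)*a^9 + (21/97)*a^8 + (19/97)*a^7 + (-71/97)*a^6 + (95/97)*a^5 + (-159/97)*a^4 + (178/97)*a^3 + (-78/97)*a^2 + (-10/97)*a + (6/97) : K) := by
    simp only [WeierstrassCurve.Affine.addX, ha1, ha2]
    ring1
  have hY1 : E.addY 0 0 0 (0:K) = ((116/97)*a^9 + (-224/97)*a^8 + (56/97)*a^7 + (46/97)*a^6 + (-108/97)*a^5 + (532/97)*a^4 + (-767/97)*a^3 + (347/97)*a^2 + (42/97)*a + (-64/97) : K) := by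
    simp only [WeierstrassCurve.Affine.addY, WeierstrassCurve.Affine.negAddY,
      WeierstrassCurve.Affine.addX, WeierstrassCurve.Affine.negY, ha1, ha2, ha3]
    linear_combination ((-1380/9409)*a^8 + (-143/9409)*a^7 + (1478/9409)*a^6 + (-3459/9409)*a^5 + (3100/9409)*a^4 + (-4513/9409)*a^3 + (2873/9409)*a^2 + (4014/9409)*a + (-6190/9409) : K) * hpoly
  have h2 : E.Nonsingular ((-23/97)*a^9 + (21/97)*a^8 + (19/97)*a^7 + (-71/97)*a^6 + (95/97)*a^5 + (-159/97)*a^4 + (178/97)*a^3 + (-78/97)*a^2 + (-10/97)*a + (6/97) : K) ((116/97)*a^9 + (-224/97)*a^8 + (56/97)*a^7 + (46/97)*a^6 + (-108/97)*a^5 + (532/97)*a^4 + (-767/97)*a^3 + (347/97)*a^2 + (42/97)*a + (-64/97) : K) := by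
    have hh := WeierstrassCurve.Affine.nonsingular_add h1 h1 (fun hxy => hyne hxy.2)
    rwa [hL1, hX1, hY1] at hh
  have P2 : (2:ℕ) • P = WeierstrassCurve.Affine.Point.some _ _ h2 := by
    rw [two_nsmul, hP, WeierstrassCurve.Affine.Point.add_self_of_Y_ne hyne]
    exact some_congr' (by rw [hL1]; exact hX1) (by rw [hL1]; exact hY1)
  -- step 2 -> 3
  have hx2 : ((-23/97)*a^9 + (21/97)*a^8 + (19/97)*a^7 + (-71/97)*a^6 + (95/97)*a^5 + (-159/97)*a^4 + (178/97)*a^3 + (-78/97)*a^2 + (-10/97)*a + (6/97) : K) ≠ 0 := fun h => one_ne_zero (α := K)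
    (by linear_combination ((256/97)*a^9 + (-103/97)*a^8 + (244/97)*a^7 + (-1116/97)*a^6 + (250/97)*a^5 + (-495/97)*a^4 + (1321/97)*a^3 + (-823/97)*a^2 + (-108/97)*a + (-847/97) : K) * h + ((5888/9409)*a^8 + (4031/9409)*a^7 + (-803/9409)*a^6 + (9113/9409)*a^5 + (-8312/9409)*a^4 + (28852/9409)*a^3 + (-10247/9409)*a^2 + (7822/9409)*a + (-14491/9409) : K) * hpoly)
  have hL2 : E.slope ((-23/97)*a^9 + (21/97)*a^8 + (19/97)*a^7 + (-71/97)*a^6 + (95/97)*a^5 + (-159/97)*a^4 + (178/97)*a^3 + (-78/97)*a^2 + (-10/97)*a + (6/97) : K) 0 ((116/97)*a^9 + (-224/97)*a^8 + (56/97)*a^7 + (46/97)*a^6 + (-108/97)*a^5 + (532/97)*a^4 + (-767/97)*a^3 + (347/97)*a^2 + (42/97)*a + (-64/97) : K) 0 = ((60/97)*a^9 + (-59/97)*a^8 + (39/97)*a^7 + (-207/97)*a^6 + (98/97)*a^5 + (31/97)*a^4 + (8/97)*a^3 + (-58/97)*a^2 + (5/97)*a + (-3/97) : K) := by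
    rw [WeierstrassCurve.Affine.slope_of_X_ne hx2, sub_zero, sub_zero, div_eq_iff hx2]
    linear_combination ((1380/9409)*a^8 + (143/9409)*a^7 + (-1478/9409)*a^6 + (3459/9409)*a^5 + (-3100/9409)*a^4 + (4513/9409)*a^3 + (-2873/9409)*a^2 + (-4014/9409)*a + (6190/9409) : K) * hpoly
  have hX2 : E.addX ((-23/97)*a^9 + (21/97)*a^8 + (19/97)*a^7 + (-71/97)*a^6 + (95/97)*a^5 + (-159/97)*a^4 + (178/97)*a^3 + (-78/97)*a^2 + (-10/97)*a + (6/97) : K) 0 ((60/97)*a^9 + (-59/97)*a^8 + (39/97)*a^7 + (-207/97)*a^6 + (98/97)*a^5 + (31/97)*a^4 + (8/97)*a^3 + (-58/97)*a^2 + (5/97)*a + (-3/97) : K) = ((60/97)*a^9 + (-59/97)*a^8 + (39/97)*a^7 + (-207/97)*a^6 + (98/97)*a^5 + (31/97)*a^4 + (8/97)*a^3 + (-58/97)*a^2 + (5/97)*a + (-3/97) : K) := by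
    simp only [WeierstrassCurve.Affine.addX, ha1, ha2]
    ring1
  have hY2 : E.addY ((-23/97)*a^9 + (21/97)*a^8 + (19/97)*a^7 + (-71/97)*a^6 + (95/97)*a^5 + (-159/97)*a^4 + (178/97)*a^3 + (-78/97)*a^2 + (-10/97)*a + (6/97) : K) 0 ((116/97)*a^9 + (-224/97)*a^8 + (56/97)*a^7 + (46/97)*a^6 + (-108/97)*a^5 + (532/97)*a^4 + (-767/97)*a^3 + (347/97)*a^2 + (42/97)*a + (-64/97) : K) ((60/97)*a^9 + (-59/97)*a^8 + (39/97)*a^7 + (-207/97)*a^6 + (98/97)*a^5 + (31/97)*a^4 + (8/97)*a^3 + (-58/97)*a^2 + (5/97)*a + (-3/97) : K) = ((-83/97)*a^9 + (80/97)*a^8 + (-20/97)*a^7 + (136/97)*a^6 + (-3/97)*a^5 + (-190/97)*a^4 + (170/97)*a^3 + (-20/97)*a^2 + (-15/97)*a + (9/97) : K) := by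
    simp only [WeierstrassCurve.Affine.addY, WeierstrassCurve.Affine.negAddY,
      WeierstrassCurve.Affine.addX, WeierstrassCurve.Affine.negY, ha1, ha2, ha3]
    linear_combination ((-1380/9409)*a^8 + (-143/9409)*a^7 + (1478/9409)*a^6 + (-3459/9409)*a^5 + (3100/9409)*a^4 + (-4513/9409)*a^3 + (2873/9409)*a^2 + (4014/9409)*a + (-6190/9409) : K) * hpoly
  have h3 : E.Nonsingular ((60/97)*a^9 + (-59/97)*a^8 + (39/97)*a^7 + (-207/97)*a^6 + (98/97)*a^5 + (31/97)*a^4 + (8/97)*a^3 + (-58/97)*a^2 + (5/97)*a + (-3/97) : K) ((-83/97)*a^9 + (80/97)*a^8 + (-20/97)*a^7 + (136/97)*a^6 + (-3/97)*a^5 + (-190/97)*a^4 + (170/97)*a^3 + (-20/97)*a^2 + (-15/97)*a + (9/97) : K) := by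
    have hh := WeierstrassCurve.Affine.nonsingular_add h2 h1 (fun hq => absurd hq.1 hx2)
    rwa [hL2, hX2, hY2] at hh
  have P3 : (3:ℕ) • P = WeierstrassCurve.Affine.Point.some _ _ h3 := by
    have e : (3:ℕ) • P = (2:ℕ) • P + P := by rw [← succ_nsmul]
    rw [e, P2, hP, WeierstrassCurve.Affine.Point.add_of_X_ne hx2]
    exact some_congr' (by rw [hL2]; exact hX2) (by rw [hL2]; exact hY2)
  -- step 3 -> 4
  have hx3 : ((60/97)*a^9 + (-59/97)*a^8 + (39/97)*a^7 + (-207/97)*a^6 + (98/97)*a^5 + (31/97)*a^4 + (8/97)*a^3 + (-58/97)*a^2 + (5/97)*a + (-3/97) : K) ≠ 0 := fun h => one_ne_zero (α := K)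
    (by linear_combination ((208/97)*a^9 + (-114/97)*a^8 + (174/97)*a^7 + (-931/97)*a^6 + (288/97)*a^5 + (-287/97)*a^4 + (1140/97)*a^3 + (-699/97)*a^2 + (-112/97)*a + (-670/97) : K) * h + ((-12480/9409)*a^8 + (-5848/9409)*a^7 + (-12014/9409)*a^6 + (38896/9409)*a^5 + (36963/9409)*a^4 + (38343/9409)*a^3 + (3402/9409)*a^2 + (-3014/9409)*a + (-7399/9409) : K) * hpoly)
  have hL3 : E.slope ((60/97)*a^9 + (-59/97)*a^8 + (39/97)*a^7 + (-207/97)*a^6 + (98/97)*a^5 + (31/97)*a^4 + (8/97)*a^3 + (-58/97)*a^2 + (5/97)*a + (-3/97) : K) 0 ((-83/97)*a^9 + (80/97)*a^8 + (-20/97)*a^7 + (136/97)*a^6 + (-3/97)*a^5 + (-190/97)*a^4 + (170/97)*a^3 + (-20/97)*a^2 + (-15/97)*a + (9/97) : K) 0 = ((9/97)*a^9 + (-4/97)*a^8 + (1/97)*a^7 + (32/97)*a^6 + (5/97)*a^5 + (58/97)*a^4 + (-57/97)*a^3 + (1/97)*a^2 + (25/97)*a + (-15/97) : K) := by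
    rw [WeierstrassCurve.Affine.slope_of_X_ne hx3, sub_zero, sub_zero, div_eq_iff hx3]
    linear_combination ((-540/9409)*a^8 + (-309/9409)*a^7 + (-185/9409)*a^6 + (-2294/9409)*a^5 + (-2144/9409)*a^4 + (-4735/9409)*a^3 + (-1208/9409)*a^2 + (1305/9409)*a + (-828/9409) : K) * hpoly
  have hX3 : E.addX ((60/97)*a^9 + (-59/97)*a^8 + (39/97)*a^7 + (-207/97)*a^6 + (98/97)*a^5 + (31/97)*a^4 + (8/97)*a^3 + (-58/97)*a^2 + (5/97)*a + (-3/97) : K) 0 ((9/97)*a^9 + (-4/97)*a^8 + (1/97)*a^7 + (32/97)*a^6 + (5/97)*a^5 + (58/97)*a^4 + (-57/97)*a^3 + (1/97)*a^2 + (25/97)*a + (-15/97) : K) = ((230/97)*a^9 + (-113/97)*a^8 + (295/97)*a^7 + (-745/97)*a^6 + (602/97)*a^5 + (-156/97)*a^4 + (742/97)*a^3 + (-675/97)*a^2 + (100/97)*a + (134/97) : K) := by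
    simp only [WeierstrassCurve.Affine.addX, ha1, ha2]
    linear_combination ((-459/9409)*a^8 + (-219/9409)*a^7 + (-133/9409)*a^6 + (-1397/9409)*a^5 + (-736/9409)*a^4 + (-2691/9409)*a^3 + (3765/9409)*a^2 + (9330/9409)*a + (13400/9409) : K) * hpoly
  have hY3 : E.addY ((60/97)*a^9 + (-59/97)*a^8 + (39/97)*a^7 + (-207/97)*a^6 + (98/97)*a^5 + (31/97)*a^4 + (8/97)*a^3 + (-58/97)*a^2 + (5/97)*a + (-3/97) : K) 0 ((-83/97)*a^9 + (80/97)*a^8 + (-20/97)*a^7 + (136/97)*a^6 + (-3/97)*a^5 + (-190/97)*a^4 + (170/97)*a^3 + (-20/97)*a^2 + (-15/97)*a + (9/97) : K) ((9/97)*a^9 + (-4/97)*a^8 + (1/97)*a^7 + (32/97)*a^6 + (5/97)*a^5 + (58/97)*a^4 + (-57/97)*a^3 + (1/97)*a^2 + (25/97)*a + (-15/97) : K) = ((-2334/97)*a^9 + (1102/97)*a^8 + (-2943/97)*a^7 + (7286/97)*a^6 + (-5597/97)*a^5 + (1190/97)*a^4 + (-7722/97)*a^3 + (7048/97)*a^2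 + (-1019/97)*a + (-1542/97) : K) := by
    simp only [WeierstrassCurve.Affine.addY, WeierstrassCurve.Affine.negAddY,
      WeierstrassCurve.Affine.addX, WeierstrassCurve.Affine.negY, ha1, ha2, ha3]
    linear_combination ((-23409/912673)*a^17 + (14076/912673)*a^16 + (-12180/912673)*a^15 + (37447/912673)*a^14 + (43899/912673)*a^13 + (-126034/912673)*a^12 + (609644/912673)*a^11 + (228917/912673)*a^10 + (939196/912673)*a^9 + (-362059/912673)*a^8 + (-722478/912673)*a^7 + (-897368/912673)*a^6 + (-1317253/912673)*a^5 + (-1804500/912673)*a^4 + (-3225809/912673)*a^3 + (-6037518/912673)*a^2 + (-9596856/912673)*a + (-14518986/912673) : K) * hpoly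
  have h4 : E.Nonsingular ((230/97)*a^9 + (-113/97)*a^8 + (295/97)*a^7 + (-745/97)*a^6 + (602/97)*a^5 + (-156/97)*a^4 + (742/97)*a^3 + (-675/97)*a^2 + (100/97)*a + (134/97) : K) ((-2334/97)*a^9 + (1102/97)*a^8 + (-2943/97)*a^7 + (7286/97)*a^6 + (-5597/97)*a^5 + (1190/97)*a^4 + (-7722/97)*a^3 + (7048/97)*a^2 + (-1019/97)*a + (-1542/97) : K) := by
    have hh := WeierstrassCurve.Affine.nonsingular_add h3 h1 (fun hq => absurd hq.1 hx3)
    rwa [hL3, hX3, hY3] at hh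
  have P4 : (4:ℕ) • P = WeierstrassCurve.Affine.Point.some _ _ h4 := by
    have e : (4:ℕ) • P = (3:ℕ) • P + P := by rw [← succ_nsmul]
    rw [e, P3, hP, WeierstrassCurve.Affine.Point.add_of_X_ne hx3]
    exact some_congr' (by rw [hL3]; exact hX3) (by rw [hL3]; exact hY3)
  -- step 4 -> 5
  have hx4 : ((230/97)*a^9 + (-113/97)*a^8 + (295/97)*a^7 + (-745/97)*a^6 + (602/97)*a^5 + (-156/97)*a^4 + (742/97)*a^3 + (-675/97)*a^2 + (100/97)*a + (134/97) : K) ≠ 0 := fun h => one_ne_zero (α := K)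
    (by linear_combination ((105/97)*a^9 + (-79/97)*a^8 + (44/97)*a^7 + (-532/97)*a^6 + (220/97)*a^5 + (30/97)*a^4 + (887/97)*a^3 + (-344/97)*a^2 + (-161/97)*a + (-563/97) : K) * h + ((-24150/9409)*a^8 + (-18265/9409)*a^7 + (-38252/9409)*a^6 + (68138/9409)*a^5 + (44744/9409)*a^4 + (64825/9409)*a^3 + (-106426/9409)*a^2 + (-77874/9409)*a + (-84851/9409) : K) * hpoly)
  have hL4 : E.slope ((230/97)*a^9 + (-113/97)*a^8 + (295/97)*a^7 + (-745/97)*a^6 + (602/97)*a^5 + (-156/97)*a^4 + (742/97)*a^3 + (-675/97)*a^2 + (100/97)*a + (134/97) : K) 0 ((-2334/97)*a^9 + (1102/97)*a^8 + (-2943/97)*a^7 + (7286/97)*a^6 + (-5597/97)*a^5 + (1190/97)*a^4 + (-7722/97)*a^3 + (7048/97)*a^2 + (-1019/97)*a + (-1542/97) : K) 0 = ((-13/97)*a^9 + (-5/97)*a^8 + (-23/97)*a^7 + (40/97)*a^6 + (-18/97)*a^5 + (24/97)*a^4 + (-144/97)*a^3 + (74/97)*a^2 + (7/97)*a + (-43/97)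 : K) := by
    rw [WeierstrassCurve.Affine.slope_of_X_ne hx4, sub_zero, sub_zero, div_eq_iff hx4]
    linear_combination ((2990/9409)*a^8 + (5661/9409)*a^7 + (13902/9409)*a^6 + (11423/9409)*a^5 + (21963/9409)*a^4 + (27416/9409)*a^3 + (75045/9409)*a^2 + (95481/9409)*a + (143812/9409) : K) * hpoly
  have hX4 : E.addX ((230/97)*a^9 + (-113/97)*a^8 + (295/97)*a^7 + (-745/97)*a^6 + (602/97)*a^5 + (-156/97)*a^4 + (742/97)*a^3 + (-675/97)*a^2 + (100/97)*a + (134/97) : K) 0 ((-13/97)*a^9 + (-5/97)*a^8 + (-23/97)*a^7 + (40/97)*a^6 + (-18/97)*a^5 + (24/97)*a^4 + (-144/97)*a^3 + (74/97)*a^2 + (7/97)*a + (-43/97) : K) = ((34/97)*a^9 + (-69/97)*a^8 + (90/97)*a^7 + (-224/97)*a^6 + (256/97)*a^5 + (-115/97)*a^4 + (108/97)*a^3 + (-104/97)*a^2 + (19/97)*a + (8/97) : K) := by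
    simp only [WeierstrassCurve.Affine.addX, ha1, ha2]
    linear_combination ((949/9409)*a^8 + (1561/9409)*a^7 + (3439/9409)*a^6 + (1438/9409)*a^5 + (2333/9409)*a^4 + (1640/9409)*a^3 + (11662/9409)*a^2 + (12200/9409)*a + (15643/9409) : K) * hpoly
  have hY4 : E.addY ((230/97)*a^9 + (-113/97)*a^8 + (295/97)*a^7 + (-745/97)*a^6 + (602/97)*a^5 + (-156/97)*a^4 + (742/97)*a^3 + (-675/97)*a^2 + (100/97)*a + (134/97) : K) 0 ((-2334/97)*a^9 + (1102/97)*a^8 + (-2943/97)*a^7 + (7286/97)*a^6 + (-5597/97)*a^5 + (1190/97)*a^4 + (-7722/97)*a^3 + (7048/97)*a^2 + (-1019/97)*a + (-1542/97) : K) ((-13/97)*a^9 + (-5/97)*a^8 + (-23/97)*a^7 + (40/97)*a^6 + (-18/97)*a^5 + (24/97)*a^4 + (-144/97)*a^3 + (74/97)*a^2 + (7/97)*a + (-43/97) : K) = ((-41/97)*a^9 + (126/97)*a^8 + (-177/97)*a^7 + (253/97)*a^6 + (-400/97)*a^5 + (307/97)*a^4 + (98/97)*a^3 + (-177/97)*a^2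 + (37/97)*a + (36/97) : K) := by
    simp only [WeierstrassCurve.Affine.addY, WeierstrassCurve.Affine.negAddY,
      WeierstrassCurve.Affine.addX, WeierstrassCurve.Affine.negY, ha1, ha2, ha3]
    linear_combination ((69277/912673)*a^17 + (62707/912673)*a^16 + (225591/912673)*a^15 + (-218353/912673)*a^14 + (30392/912673)*a^13 + (-578820/912673)*a^12 + (1106325/912673)*a^11 + (89166/912673)*a^10 + (1396575/912673)*a^9 + (-3104128/912673)*a^8 + (-1344607/912673)*a^7 + (-3621722/912673)*a^6 + (1251117/912673)*a^5 + (-1613623/912673)*a^4 + (-1927146/912673)*a^3 + (-9801254/912673)*a^2 + (-9439517/912673)*a + (-14514913/912673) : K) * hpoly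
  have h5 : E.Nonsingular ((34/97)*a^9 + (-69/97)*a^8 + (90/97)*a^7 + (-224/97)*a^6 + (256/97)*a^5 + (-115/97)*a^4 + (108/97)*a^3 + (-104/97)*a^2 + (19/97)*a + (8/97) : K) ((-41/97)*a^9 + (126/97)*a^8 + (-177/97)*a^7 + (253/97)*a^6 + (-400/97)*a^5 + (307/97)*a^4 + (98/97)*a^3 + (-177/97)*a^2 + (37/97)*a + (36/97) : K) := by
    have hh := WeierstrassCurve.Affine.nonsingular_add h4 h1 (fun hq => absurd hq.1 hx4)
    rwa [hL4, hX4, hY4] at hh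
  have P5 : (5:ℕ) • P = WeierstrassCurve.Affine.Point.some _ _ h5 := by
    have e : (5:ℕ) • P = (4:ℕ) • P + P := by rw [← succ_nsmul]
    rw [e, P4, hP, WeierstrassCurve.Affine.Point.add_of_X_ne hx4]
    exact some_congr' (by rw [hL4]; exact hX4) (by rw [hL4]; exact hY4)
  -- step 5 -> 6
  have hx5 : ((34/97)*a^9 + (-69/97)*a^8 + (90/97)*a^7 + (-224/97)*a^6 + (256/97)*a^5 + (-115/97)*a^4 + (108/97)*a^3 + (-104/97)*a^2 + (19/97)*a + (8/97) : K) ≠ 0 := fun h => one_ne_zero (α := K)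
    (by linear_combination ((-35/97)*a^9 + (188/97)*a^8 + (-47/97)*a^7 + (145/97)*a^6 + (-623/97)*a^5 + (-107/97)*a^4 + (157/97)*a^3 + (632/97)*a^2 + (-205/97)*a + (-653/97) : K) * h + ((1190/9409)*a^8 + (-6427/9409)*a^7 + (2486/9409)*a^6 + (-9157/9409)*a^5 + (22738/9409)*a^4 + (10889/9409)*a^3 + (-4092/9409)*a^2 + (-14047/9409)*a + (-14633/9409) : K) * hpoly)
  have hL5 : E.slope ((34/97)*a^9 + (-69/97)*a^8 + (90/97)*a^7 + (-224/97)*a^6 + (256/97)*a^5 + (-115/97)*a^4 + (108/97)*a^3 + (-104/97)*a^2 + (19/97)*a + (8/97) : K) 0 ((-41/97)*a^9 + (126/97)*a^8 + (-177/97)*a^7 + (253/97)*a^6 + (-400/97)*a^5 + (307/97)*a^4 + (98/97)*a^3 + (-177/97)*a^2 + (37/97)*a + (36/97) : K) 0 = ((60/97)*a^9 + (-59/97)*a^8 + (39/97)*a^7 + (-207/97)*a^6 + (98/97)*a^5 + (31/97)*a^4 + (105/97)*a^3 + (-155/97)*a^2 + (5/97)*a + (-3/97) : K) := by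
    rw [WeierstrassCurve.Affine.slope_of_X_ne hx5, sub_zero, sub_zero, div_eq_iff hx5]
    linear_combination ((-2040/9409)*a^8 + (2066/9409)*a^7 + (-2585/9409)*a^6 + (8977/9409)*a^5 + (-1967/9409)*a^4 + (-2357/9409)*a^3 + (-1244/9409)*a^2 + (-3606/9409)*a + (-3516/9409) : K) * hpoly
  have hX5 : E.addX ((34/97)*a^9 + (-69/97)*a^8 + (90/97)*a^7 + (-224/97)*a^6 + (256/97)*a^5 + (-115/97)*a^4 + (108/97)*a^3 + (-104/97)*a^2 + (19/97)*a + (8/97) : K) 0 ((60/97)*a^9 + (-59/97)*a^8 + (39/97)*a^7 + (-207/97)*a^6 + (98/97)*a^5 + (31/97)*a^4 + (105/97)*a^3 + (-155/97)*a^2 + (5/97)*a + (-3/97) : K) = ((15/97)*a^9 + (-39/97)*a^8 + (34/97)*a^7 + (-76/97)*a^6 + (73/97)*a^5 + (-65/97)*a^4 + (2/97)*a^3 + (34/97)*a^2 + (-23/97)*a + (-25/97) : K) := by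
    simp only [WeierstrassCurve.Affine.addX, ha1, ha2]
    linear_combination ((60/97)*a^2 + (1/97)*a + (-20/97) : K) * hpoly
  have hY5 : E.addY ((34/97)*a^9 + (-69/97)*a^8 + (90/97)*a^7 + (-224/97)*a^6 + (256/97)*a^5 + (-115/97)*a^4 + (108/97)*a^3 + (-104/97)*a^2 + (19/97)*a + (8/97) : K) 0 ((-41/97)*a^9 + (126/97)*a^8 + (-177/97)*a^7 + (253/97)*a^6 + (-400/97)*a^5 + (307/97)*a^4 + (98/97)*a^3 + (-177/97)*a^2 + (37/97)*a + (36/97) : K) ((60/97)*a^9 + (-59/97)*a^8 + (39/97)*a^7 + (-207/97)*a^6 + (98/97)*a^5 + (31/97)*a^4 + (105/97)*a^3 + (-155/97)*a^2 + (5/97)*a + (-3/97) : K) = ((-41/97)*a^9 + (126/97)*a^8 + (-80/97)*a^7 + (59/97)*a^6 + (-206/97)*a^5 + (210/97)*a^4 + (98/97)*a^3 + (-177/97)*a^2 + (37/97)*a + (36/97) : K) := by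
    simp only [WeierstrassCurve.Affine.addY, WeierstrassCurve.Affine.negAddY,
      WeierstrassCurve.Affine.addX, WeierstrassCurve.Affine.negY, ha1, ha2, ha3]
    linear_combination ((2040/9409)*a^8 + (-2066/9409)*a^7 + (2585/9409)*a^6 + (-14797/9409)*a^5 + (7690/9409)*a^4 + (4394/9409)*a^3 + (-7971/9409)*a^2 + (5837/9409)*a + (5941/9409) : K) * hpoly
  have h6 : E.Nonsingular ((15/97)*a^9 + (-39/97)*a^8 + (34/97)*a^7 + (-76/97)*a^6 + (73/97)*a^5 + (-65/97)*a^4 + (2/97)*a^3 + (34/97)*a^2 + (-23/97)*a + (-25/97) : K) ((-41/97)*a^9 + (126/97)*a^8 + (-80/97)*a^7 + (59/97)*a^6 + (-206/97)*a^5 + (210/97)*a^4 + (98/97)*a^3 + (-177/97)*a^2 + (37/97)*a + (36/97) : K) := by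
    have hh := WeierstrassCurve.Affine.nonsingular_add h5 h1 (fun hq => absurd hq.1 hx5)
    rwa [hL5, hX5, hY5] at hh
  have P6 : (6:ℕ) • P = WeierstrassCurve.Affine.Point.some _ _ h6 := by
    have e : (6:ℕ) • P = (5:ℕ) • P + P := by rw [← succ_nsmul]
    rw [e, P5, hP, WeierstrassCurve.Affine.Point.add_of_X_ne hx5]
    exact some_congr' (by rw [hL5]; exact hX5) (by rw [hL5]; exact hY5)
  -- step 6 -> 7
  have hx6 : ((15/97)*a^9 + (-39/97)*a^8 + (34/97)*a^7 + (-76/97)*a^6 + (73/97)*a^5 + (-65/97)*a^4 + (2/97)*a^3 + (34/97)*a^2 + (-23/97)*a + (-25/97) : K) ≠ 0 := fun h => one_ne_zero (α := K)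
    (by linear_combination ((246/97)*a^9 + (-271/97)*a^8 + (286/97)*a^7 + (-1130/97)*a^6 + (848/97)*a^5 + (-484/97)*a^4 + (1158/97)*a^3 + (-1266/97)*a^2 + (360/97)*a + (-313/97) : K) * h + ((-3690/9409)*a^8 + (6279/9409)*a^7 + (-3285/9409)*a^6 + (18436/9409)*a^5 + (-4401/9409)*a^4 + (15449/9409)*a^3 + (4808/9409)*a^2 + (-1801/9409)*a + (-1584/9409) : K) * hpoly)
  have hL6 : E.slope ((15/97)*a^9 + (-39/97)*a^8 + (34/97)*a^7 + (-76/97)*a^6 + (73/97)*a^5 + (-65/97)*a^4 + (2/97)*a^3 + (34/97)*a^2 + (-23/97)*a + (-25/97) : K) 0 ((-41/97)*a^9 + (126/97)*a^8 + (-80/97)*a^7 + (59/97)*a^6 + (-206/97)*a^5 + (210/97)*a^4 + (98/97)*a^3 + (-177/97)*a^2 + (37/97)*a + (36/97) : K) 0 = ((-10/97)*a^9 + (26/97)*a^8 + (-55/97)*a^7 + (83/97)*a^6 + (-81/97)*a^5 + (108/97)*a^4 + (-163/97)*a^3 + (139/97)*a^2 + (-17/97)*a + (-48/97) : K) := by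
    rw [WeierstrassCurve.Affine.slope_of_X_ne hx6, sub_zero, sub_zero, div_eq_iff hx6]
    linear_combination ((150/9409)*a^8 + (-480/9409)*a^7 + (919/9409)*a^6 + (-1486/9409)*a^5 + (768/9409)*a^4 + (-1266/9409)*a^3 + (993/9409)*a^2 + (-2060/9409)*a + (-2292/9409) : K) * hpoly
  have hX6 : E.addX ((15/97)*a^9 + (-39/97)*a^8 + (34/97)*a^7 + (-76/97)*a^6 + (73/97)*a^5 + (-65/97)*a^4 + (2/97)*a^3 + (34/97)*a^2 + (-23/97)*a + (-25/97) : K) 0 ((-10/97)*a^9 + (26/97)*a^8 + (-55/97)*a^7 + (83/97)*a^6 + (-81/97)*a^5 + (108/97)*a^4 + (-163/97)*a^3 + (139/97)*a^2 + (-17/97)*a + (-48/97) : K) = ((3/97)*a^9 + (-66/97)*a^8 + (162/97)*a^7 + (-151/97)*a^6 + (131/97)*a^5 + (-207/97)*a^4 + (175/97)*a^3 + (-32/97)*a^2 + (-24/97)*a + (-5/97) : K) := by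
    simp only [WeierstrassCurve.Affine.addX, ha1, ha2]
    linear_combination ((700/9409)*a^8 + (-1270/9409)*a^7 + (3060/9409)*a^6 + (-3669/9409)*a^5 + (2517/9409)*a^4 + (-4259/9409)*a^3 + (4634/9409)*a^2 + (-3761/9409)*a + (-996/9409) : K) * hpoly
  have hY6 : E.addY ((15/97)*a^9 + (-39/97)*a^8 + (34/97)*a^7 + (-76/97)*a^6 + (73/97)*a^5 + (-65/97)*a^4 + (2/97)*a^3 + (34/97)*a^2 + (-23/97)*a + (-25/97) : K) 0 ((-41/97)*a^9 + (126/97)*a^8 + (-80/97)*a^7 + (59/97)*a^6 + (-206/97)*a^5 + (210/97)*a^4 + (98/97)*a^3 + (-177/97)*a^2 + (37/97)*a + (36/97) : K) ((-10/97)*a^9 + (26/97)*a^8 + (-55/97)*a^7 + (83/97)*a^6 + (-81/97)*a^5 + (108/97)*a^4 + (-163/97)*a^3 + (139/97)*a^2 + (-17/97)*a + (-48/97) : K) = ((-24/97)*a^9 + (-54/97)*a^8 + (159/97)*a^7 + (44/97)*a^6 + (-272/97)*a^5 + (7/97)*a^4 + (346/97)*a^3 + (-229/97)*a^2 + (-2/97)*a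 + (40/97) : K) := by
    simp only [WeierstrassCurve.Affine.addY, WeierstrassCurve.Affine.negAddY,
      WeierstrassCurve.Affine.addX, WeierstrassCurve.Affine.negY, ha1, ha2, ha3]
    linear_combination ((49000/912673)*a^17 + (-148400/912673)*a^16 + (387950/912673)*a^15 + (-839310/912673)*a^14 + (1269295/912673)*a^13 + (-2025591/912673)*a^12 + (2752233/912673)*a^11 + (-3034877/912673)*a^10 + (3442577/912673)*a^9 + (-3857643/912673)*a^8 + (3055480/912673)*a^7 + (-1527822/912673)*a^6 + (1585004/912673)*a^5 + (-1190498/912673)*a^4 + (639780/912673)*a^3 + (-376885/912673)*a^2 + (338366/912673)*a + (568802/912673) : K) * hpoly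
  have h7 : E.Nonsingular ((3/97)*a^9 + (-66/97)*a^8 + (162/97)*a^7 + (-151/97)*a^6 + (131/97)*a^5 + (-207/97)*a^4 + (175/97)*a^3 + (-32/97)*a^2 + (-24/97)*a + (-5/97) : K) ((-24/97)*a^9 + (-54/97)*a^8 + (159/97)*a^7 + (44/97)*a^6 + (-272/97)*a^5 + (7/97)*a^4 + (346/97)*a^3 + (-229/97)*a^2 + (-2/97)*a + (40/97) : K) := by
    have hh := WeierstrassCurve.Affine.nonsingular_add h6 h1 (fun hq => absurd hq.1 hx6)
    rwa [hL6, hX6, hY6] at hh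
  have P7 : (7:ℕ) • P = WeierstrassCurve.Affine.Point.some _ _ h7 := by
    have e : (7:ℕ) • P = (6:ℕ) • P + P := by rw [← succ_nsmul]
    rw [e, P6, hP, WeierstrassCurve.Affine.Point.add_of_X_ne hx6]
    exact some_congr' (by rw [hL6]; exact hX6) (by rw [hL6]; exact hY6)
  -- step 7 -> 8
  have hx7 : ((3/97)*a^9 + (-66/97)*a^8 + (162/97)*a^7 + (-151/97)*a^6 + (131/97)*a^5 + (-207/97)*a^4 + (175/97)*a^3 + (-32/97)*a^2 + (-24/97)*a + (-5/97) : K) ≠ 0 := fun h => one_ne_zero (α := K)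
    (by linear_combination ((307/97)*a^9 + (-449/97)*a^8 + (379/97)*a^7 + (-1452/97)*a^6 + (1507/97)*a^5 + (-522/97)*a^4 + (1483/97)*a^3 + (-2046/97)*a^2 + (454/97)*a + (-350/97) : K) * h + ((-921/9409)*a^8 + (19767/9409)*a^7 + (-39129/9409)*a^6 + (26068/9409)*a^5 + (-34091/9409)*a^4 + (57833/9409)*a^3 + (-27761/9409)*a^2 + (6130/9409)*a + (-7659/9409) : K) * hpoly)
  have hL7 : E.slope ((3/97)*a^9 + (-66/97)*a^8 + (162/97)*a^7 + (-151/97)*a^6 + (131/97)*a^5 + (-207/97)*a^4 + (175/97)*a^3 + (-32/97)*a^2 + (-24/97)*a + (-5/97) : K) 0 ((-24/97)*a^9 + (-54/97)*a^8 + (159/97)*a^7 + (44/97)*a^6 + (-272/97)*a^5 + (7/97)*a^4 + (346/97)*a^3 + (-229/97)*a^2 + (-2/97)*a + (40/97) : K) 0 = ((4/97)*a^9 + (9/97)*a^8 + (22/97)*a^7 + (25/97)*a^6 + (-84/97)*a^5 + (15/97)*a^4 + (-90/97)*a^3 + (119/97)*a^2 + (-32/97)*a + (-39/97) : K) := by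
    rw [WeierstrassCurve.Affine.slope_of_X_ne hx7, sub_zero, sub_zero, div_eq_iff hx7]
    linear_combination ((-12/9409)*a^8 + (213/9409)*a^7 + (330/9409)*a^6 + (697/9409)*a^5 + (1056/9409)*a^4 + (-5839/9409)*a^3 + (5209/9409)*a^2 + (1290/9409)*a + (-3685/9409) : K) * hpoly
  have hX7 : E.addX ((3/97)*a^9 + (-66/97)*a^8 + (162/97)*a^7 + (-151/97)*a^6 + (131/97)*a^5 + (-207/97)*a^4 + (175/97)*a^3 + (-32/97)*a^2 + (-24/97)*a + (-5/97) : K) 0 ((4/97)*a^9 + (9/97)*a^8 + (22/97)*a^7 + (25/97)*a^6 + (-84/97)*a^5 + (15/97)*a^4 + (-90/97)*a^3 + (119/97)*a^2 + (-32/97)*a + (-39/97) : K) = ((56/97)*a^9 + (-68/97)*a^8 + (114/97)*a^7 + (-232/97)*a^6 + (279/97)*a^5 + (-81/97)*a^4 + (195/97)*a^3 + (-177/97)*a^2 + (37/97)*a + (36/97) : K) := by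
    simp only [WeierstrassCurve.Affine.addX, ha1, ha2]
    linear_combination ((-224/9409)*a^8 + (-680/9409)*a^7 + (-1600/9409)*a^6 + (-2089/9409)*a^5 + (4580/9409)*a^4 + (5627/9409)*a^3 + (9773/9409)*a^2 + (2740/9409)*a + (4804/9409) : K) * hpoly
  have hY7 : E.addY ((3/97)*a^9 + (-66/97)*a^8 + (162/97)*a^7 + (-151/97)*a^6 + (131/97)*a^5 + (-207/97)*a^4 + (175/97)*a^3 + (-32/97)*a^2 + (-24/97)*a + (-5/97) : K) 0 ((-24/97)*a^9 + (-54/97)*a^8 + (159/97)*a^7 + (44/97)*a^6 + (-272/97)*a^5 + (7/97)*a^4 + (346/97)*a^3 + (-229/97)*a^2 + (-2/97)*a + (40/97) : K) ((4/97)*a^9 + (9/97)*a^8 + (22/97)*a^7 + (25/97)*a^6 + (-84/97)*a^5 + (15/97)*a^4 + (-90/97)*a^3 + (119/97)*a^2 + (-32/97)*a + (-39/97) : K) = ((-373/97)*a^9 + (252/97)*a^8 + (-548/97)*a^7 + (1282/97)*a^6 + (-994/97)*a^5 + (323/97)*a^4 + (-1162/97)*a^3 + (1004/97)*a^2 + (-120/97)*a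 + (-219/97) : K) := by
    simp only [WeierstrassCurve.Affine.addY, WeierstrassCurve.Affine.negAddY,
      WeierstrassCurve.Affine.addX, WeierstrassCurve.Affine.negY, ha1, ha2, ha3]
    linear_combination ((-12544/912673)*a^17 + (-22848/912673)*a^16 + (-47168/912673)*a^15 + (32224/912673)*a^14 + (488324/912673)*a^13 + (212015/912673)*a^12 + (403128/912673)*a^11 + (-1910815/912673)*a^10 + (-301211/912673)*a^9 + (-1077696/912673)*a^8 + (1964550/912673)*a^7 + (-439397/912673)*a^6 + (88395/912673)*a^5 + (-1210208/912673)*a^4 + (550373/912673)*a^3 + (-1751899/912673)*a^2 + (-1059787/912673)*a + (-1839612/912673) : K) * hpoly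
  have h8 : E.Nonsingular ((56/97)*a^9 + (-68/97)*a^8 + (114/97)*a^7 + (-232/97)*a^6 + (279/97)*a^5 + (-81/97)*a^4 + (195/97)*a^3 + (-177/97)*a^2 + (37/97)*a + (36/97) : K) ((-373/97)*a^9 + (252/97)*a^8 + (-548/97)*a^7 + (1282/97)*a^6 + (-994/97)*a^5 + (323/97)*a^4 + (-1162/97)*a^3 + (1004/97)*a^2 + (-120/97)*a + (-219/97) : K) := by
    have hh := WeierstrassCurve.Affine.nonsingular_add h7 h1 (fun hq => absurd hq.1 hx7)
    rwa [hL7, hX7, hY7] at hh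
  have P8 : (8:ℕ) • P = WeierstrassCurve.Affine.Point.some _ _ h8 := by
    have e : (8:ℕ) • P = (7:ℕ) • P + P := by rw [← succ_nsmul]
    rw [e, P7, hP, WeierstrassCurve.Affine.Point.add_of_X_ne hx7]
    exact some_congr' (by rw [hL7]; exact hX7) (by rw [hL7]; exact hY7)
  -- step 8 -> 9
  have hx8 : ((56/97)*a^9 + (-68/97)*a^8 + (114/97)*a^7 + (-232/97)*a^6 + (279/97)*a^5 + (-81/97)*a^4 + (195/97)*a^3 + (-177/97)*a^2 + (37/97)*a + (36/97) : K) ≠ 0 := fun h => one_ne_zero (α := K)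
    (by linear_combination ((320/97)*a^9 + (-347/97)*a^8 + (402/97)*a^7 + (-1492/97)*a^6 + (1137/97)*a^5 + (-740/97)*a^4 + (1627/97)*a^3 + (-1732/97)*a^2 + (447/97)*a + (-695/97) : K) * h + ((-17920/9409)*a^8 + (5352/9409)*a^7 + (-36044/9409)*a^6 + (52294/9409)*a^5 + (-51864/9409)*a^4 + (7161/9409)*a^3 + (-94943/9409)*a^2 + (-9623/9409)*a + (-34429/9409) : K) * hpoly)
  have hL8 : E.slope ((56/97)*a^9 + (-68/97)*a^8 + (114/97)*a^7 + (-232/97)*a^6 + (279/97)*a^5 + (-81/97)*a^4 + (195/97)*a^3 + (-177/97)*a^2 + (37/97)*a + (36/97) : K) 0 ((-373/97)*a^9 + (252/97)*a^8 + (-548/97)*a^7 + (1282/97)*a^6 + (-994/97)*a^5 + (323/97)*a^4 + (-1162/97)*a^3 + (1004/97)*a^2 + (-120/97)*a + (-219/97) : K) 0 = ((14/97)*a^9 + (-17/97)*a^8 + (-20/97)*a^7 + (-58/97)*a^6 + (-3/97)*a^5 + (101/97)*a^4 + (-24/97)*a^3 + (-20/97)*a^2 + (-15/97)*a + (9/97)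 : K) := by
    rw [WeierstrassCurve.Affine.slope_of_X_ne hx8, sub_zero, sub_zero, div_eq_iff hx8]
    linear_combination ((-784/9409)*a^8 + (336/9409)*a^7 + (608/9409)*a^6 + (3698/9409)*a^5 + (4002/9409)*a^4 + (149/9409)*a^3 + (7579/9409)*a^2 + (11433/9409)*a + (21567/9409) : K) * hpoly
  have hX8 : E.addX ((56/97)*a^9 + (-68/97)*a^8 + (114/97)*a^7 + (-232/97)*a^6 + (279/97)*a^5 + (-81/97)*a^4 + (195/97)*a^3 + (-177/97)*a^2 + (37/97)*a + (36/97) : K) 0 ((14/97)*a^9 + (-17/97)*a^8 + (-20/97)*a^7 + (-58/97)*a^6 + (-3/97)*a^5 + (101/97)*a^4 + (-24/97)*a^3 + (-20/97)*a^2 + (-15/97)*a + (9/97) : K) = ((3/97)*a^9 + (31/97)*a^8 + (-32/97)*a^7 + (-54/97)*a^6 + (34/97)*a^5 + (84/97)*a^4 + (-116/97)*a^3 + (65/97)*a^2 + (-24/97)*a + (-5/97) : K) := by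
    simp only [WeierstrassCurve.Affine.addX, ha1, ha2]
    linear_combination ((-644/9409)*a^8 + (82/9409)*a^7 + (832/9409)*a^6 + (3197/9409)*a^5 + (4583/9409)*a^4 + (2149/9409)*a^3 + (5460/9409)*a^2 + (4046/9409)*a + (1444/9409) : K) * hpoly
  have hY8 : E.addY ((56/97)*a^9 + (-68/97)*a^8 + (114/97)*a^7 + (-232/97)*a^6 + (279/97)*a^5 + (-81/97)*a^4 + (195/97)*a^3 + (-177/97)*a^2 + (37/97)*a + (36/97) : K) 0 ((-373/97)*a^9 + (252/97)*a^8 + (-548/97)*a^7 + (1282/97)*a^6 + (-994/97)*a^5 + (323/97)*a^4 + (-1162/97)*a^3 + (1004/97)*a^2 + (-120/97)*a + (-219/97) : K) ((14/97)*a^9 + (-17/97)*a^8 + (-20/97)*a^7 + (-58/97)*a^6 + (-3/97)*a^5 + (101/97)*a^4 + (-24/97)*a^3 + (-20/97)*a^2 + (-15/97)*a + (9/97) : K) = ((-28/97)*a^9 + (-63/97)*a^8 + (331/97)*a^7 + (-175/97)*a^6 + (-188/97)*a^5 + (-202/97)*a^4 + (824/97)*a^3 + (-542/97)*a^2 + (30/97)*a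 + (79/97) : K) := by
    simp only [WeierstrassCurve.Affine.addY, WeierstrassCurve.Affine.negAddY,
      WeierstrassCurve.Affine.addX, WeierstrassCurve.Affine.negY, ha1, ha2, ha3]
    linear_combination ((-29624/912673)*a^17 + (30820/912673)*a^16 + (-3168/912673)*a^15 + (212912/912673)*a^14 + (48370/912673)*a^13 + (24385/912673)*a^12 + (12630/912673)*a^11 + (-307527/912673)*a^10 + (148152/912673)*a^9 + (-507277/912673)*a^8 + (36524/912673)*a^7 + (-352757/912673)*a^6 + (-821051/912673)*a^5 + (-959829/912673)*a^4 + (-4728/912673)*a^3 + (-1784696/912673)*a^2 + (-1388827/912673)*a + (-1615403/912673) : K) * hpoly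
  have h9 : E.Nonsingular ((3/97)*a^9 + (31/97)*a^8 + (-32/97)*a^7 + (-54/97)*a^6 + (34/97)*a^5 + (84/97)*a^4 + (-116/97)*a^3 + (65/97)*a^2 + (-24/97)*a + (-5/97) : K) ((-28/97)*a^9 + (-63/97)*a^8 + (331/97)*a^7 + (-175/97)*a^6 + (-188/97)*a^5 + (-202/97)*a^4 + (824/97)*a^3 + (-542/97)*a^2 + (30/97)*a + (79/97) : K) := by
    have hh := WeierstrassCurve.Affine.nonsingular_add h8 h1 (fun hq => absurd hq.1 hx8)
    rwa [hL8, hX8, hY8] at hh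
  have P9 : (9:ℕ) • P = WeierstrassCurve.Affine.Point.some _ _ h9 := by
    have e : (9:ℕ) • P = (8:ℕ) • P + P := by rw [← succ_nsmul]
    rw [e, P8, hP, WeierstrassCurve.Affine.Point.add_of_X_ne hx8]
    exact some_congr' (by rw [hL8]; exact hX8) (by rw [hL8]; exact hY8)
  -- step 9 -> 10
  have hx9 : ((3/97)*a^9 + (31/97)*a^8 + (-32/97)*a^7 + (-54/97)*a^6 + (34/97)*a^5 + (84/97)*a^4 + (-116/97)*a^3 + (65/97)*a^2 + (-24/97)*a + (-5/97) : K) ≠ 0 := fun h => one_ne_zero (α := K)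
    (by linear_combination ((207/97)*a^9 + (102/97)*a^8 + (-171/97)*a^7 + (-622/97)*a^6 + (-758/97)*a^5 + (849/97)*a^4 + (629/97)*a^3 + (314/97)*a^2 + (-1462/97)*a + (43/97) : K) * h + ((-621/9409)*a^8 + (-7965/9409)*a^7 + (-10713/9409)*a^6 + (13008/9409)*a^5 + (26518/9409)*a^4 + (-2317/9409)*a^3 + (-11807/9409)*a^2 + (6278/9409)*a + (-9624/9409) : K) * hpoly)
  have hL9 : E.slope ((3/97)*a^9 + (31/97)*a^8 + (-32/97)*a^7 + (-54/97)*a^6 + (34/97)*a^5 + (84/97)*a^4 + (-116/97)*a^3 + (65/97)*a^2 + (-24/97)*a + (-5/97) : K) 0 ((-28/97)*a^9 + (-63/97)*a^8 + (331/97)*a^7 + (-175/97)*a^6 + (-188/97)*a^5 + (-202/97)*a^4 + (824/97)*a^3 + (-542/97)*a^2 + (30/97)*a + (79/97) : K) 0 = ((48/97)*a^9 + (-86/97)*a^8 + (70/97)*a^7 + (-185/97)*a^6 + (253/97)*a^5 + (-111/97)*a^4 + (84/97)*a^3 + (-221/97)*a^2 + (198/97)*a + (-80/97) : K) := by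
    rw [WeierstrassCurve.Affine.slope_of_X_ne hx9, sub_zero, sub_zero, div_eq_iff hx9]
    linear_combination ((-144/9409)*a^8 + (-1518/9409)*a^7 + (1244/9409)*a^6 + (3029/9409)*a^5 + (-2072/9409)*a^4 + (-4690/9409)*a^3 + (7412/9409)*a^2 + (-1980/9409)*a + (-7263/9409) : K) * hpoly
  have hX9 : E.addX ((3/97)*a^9 + (31/97)*a^8 + (-32/97)*a^7 + (-54/97)*a^6 + (34/97)*a^5 + (84/97)*a^4 + (-116/97)*a^3 + (65/97)*a^2 + (-24/97)*a + (-5/97) : K) 0 ((48/97)*a^9 + (-86/97)*a^8 + (70/97)*a^7 + (-185/97)*a^6 + (253/97)*a^5 + (-111/97)*a^4 + (84/97)*a^3 + (-221/97)*a^2 + (198/97)*a + (-80/97) : K) = ((-18/97)*a^9 + (8/97)*a^8 + (-2/97)*a^7 + (33/97)*a^6 + (-10/97)*a^5 + (-19/97)*a^4 + (-80/97)*a^3 + (192/97)*a^2 + (-147/97)*a + (30/97) : K) := by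
    simp only [WeierstrassCurve.Affine.addX, ha1, ha2]
    linear_combination ((-576/9409)*a^8 + (-1416/9409)*a^7 + (1290/9409)*a^6 + (1252/9409)*a^5 + (6553/9409)*a^4 + (-5180/9409)*a^3 + (2876/9409)*a^2 + (-4137/9409)*a + (3443/9409) : K) * hpoly
  have hY9 : E.addY ((3/97)*a^9 + (31/97)*a^8 + (-32/97)*a^7 + (-54/97)*a^6 + (34/97)*a^5 + (84/97)*a^4 + (-116/97)*a^3 + (65/97)*a^2 + (-24/97)*a + (-5/97) : K) 0 ((-28/97)*a^9 + (-63/97)*a^8 + (331/97)*a^7 + (-175/97)*a^6 + (-188/97)*a^5 + (-202/97)*a^4 + (824/97)*a^3 + (-542/97)*a^2 + (30/97)*a + (79/97) : K) ((48/97)*a^9 + (-86/97)*a^8 + (70/97)*a^7 + (-185/97)*a^6 + (253/97)*a^5 + (-111/97)*a^4 + (84/97)*a^3 + (-221/97)*a^2 + (198/97)*a + (-80/97) : K) = ((-7/97)*a^9 + (57/97)*a^8 + (-87/97)*a^7 + (126/97)*a^6 + (-241/97)*a^5 + (289/97)*a^4 + (-85/97)*a^3 + (10/97)*a^2 + (-41/97)*a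 + (44/97) : K) := by
    simp only [WeierstrassCurve.Affine.addY, WeierstrassCurve.Affine.negAddY,
      WeierstrassCurve.Affine.addX, WeierstrassCurve.Affine.negY, ha1, ha2, ha3]
    linear_combination ((-6912/912673)*a^17 + (-32544/912673)*a^16 + (-4896/912673)*a^15 + (106422/912673)*a^14 + (192882/912673)*a^13 + (185267/912673)*a^12 + (-693281/912673)*a^11 + (47270/912673)*a^10 + (-1101190/912673)*a^9 + (2284304/912673)*a^8 + (-1644149/912673)*a^7 + (2002782/912673)*a^6 + (-3755007/912673)*a^5 + (2538971/912673)*a^4 + (-824576/912673)*a^3 + (636031/912673)*a^2 + (-404928/912673)*a + (1051393/912673) : K) * hpoly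
  have h10 : E.Nonsingular ((-18/97)*a^9 + (8/97)*a^8 + (-2/97)*a^7 + (33/97)*a^6 + (-10/97)*a^5 + (-19/97)*a^4 + (-80/97)*a^3 + (192/97)*a^2 + (-147/97)*a + (30/97) : K) ((-7/97)*a^9 + (57/97)*a^8 + (-87/97)*a^7 + (126/97)*a^6 + (-241/97)*a^5 + (289/97)*a^4 + (-85/97)*a^3 + (10/97)*a^2 + (-41/97)*a + (44/97) : K) := by
    have hh := WeierstrassCurve.Affine.nonsingular_add h9 h1 (fun hq => absurd hq.1 hx9)
    rwa [hL9, hX9, hY9] at hh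
  have P10 : (10:ℕ) • P = WeierstrassCurve.Affine.Point.some _ _ h10 := by
    have e : (10:ℕ) • P = (9:ℕ) • P + P := by rw [← succ_nsmul]
    rw [e, P9, hP, WeierstrassCurve.Affine.Point.add_of_X_ne hx9]
    exact some_congr' (by rw [hL9]; exact hX9) (by rw [hL9]; exact hY9)
  -- step 10 -> 11
  have hx10 : ((-18/97)*a^9 + (8/97)*a^8 + (-2/97)*a^7 + (33/97)*a^6 + (-10/97)*a^5 + (-19/97)*a^4 + (-80/97)*a^3 + (192/97)*a^2 + (-147/97)*a + (30/97) : K) ≠ 0 := fun h => one_ne_zero (α := K)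
    (by linear_combination ((-38/97)*a^9 + (254/97)*a^8 + (-209/97)*a^7 + (296/97)*a^6 + (-948/97)*a^5 + (488/97)*a^4 + (-115/97)*a^3 + (858/97)*a^2 + (-957/97)*a + (-357/97) : K) * h + ((-684/9409)*a^8 + (3508/9409)*a^7 + (2514/9409)*a^6 + (3354/9409)*a^5 + (-4604/9409)*a^4 + (-4963/9409)*a^3 + (-2720/9409)*a^2 + (23769/9409)*a + (-20119/9409) : K) * hpoly)
  have hL10 : E.slope ((-18/97)*a^9 + (8/97)*a^8 + (-2/97)*a^7 + (33/97)*a^6 + (-10/97)*a^5 + (-19/97)*a^4 + (-80/97)*a^3 + (192/97)*a^2 + (-147/97)*a + (30/97) : K) 0 ((-7/97)*a^9 + (57/97)*a^8 + (-87/97)*a^7 + (126/97)*a^6 + (-241/97)*a^5 + (289/97)*a^4 + (-85/97)*a^3 + (10/97)*a^2 + (-41/97)*a + (44/97) : K) 0 = ((3/97)*a^9 + (31/97)*a^8 + (-32/97)*a^7 + (43/97)*a^6 + (-160/97)*a^5 + (84/97)*a^4 + (-116/97)*a^3 + (162/97)*a^2 + (-121/97)*a + (-5/97) : K) := by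
    rw [WeierstrassCurve.Affine.slope_of_X_ne hx10, sub_zero, sub_zero, div_eq_iff hx10]
    linear_combination ((54/9409)*a^8 + (642/9409)*a^7 + (358/9409)*a^6 + (695/9409)*a^5 + (-775/9409)*a^4 + (-1127/9409)*a^3 + (-1373/9409)*a^2 + (1082/9409)*a + (-4418/9409) : K) * hpoly
  have hX10 : E.addX ((-18/97)*a^9 + (8/97)*a^8 + (-2/97)*a^7 + (33/97)*a^6 + (-10/97)*a^5 + (-19/97)*a^4 + (-80/97)*a^3 + (192/97)*a^2 + (-147/97)*a + (30/97) : K) 0 ((3/97)*a^9 + (31/97)*a^8 + (-32/97)*a^7 + (43/97)*a^6 + (-160/97)*a^5 + (84/97)*a^4 + (-116/97)*a^3 + (162/97)*a^2 + (-121/97)*a + (-5/97) : K) = ((-33/97)*a^9 + (47/97)*a^8 + (-36/97)*a^7 + (109/97)*a^6 + (-83/97)*a^5 + (46/97)*a^4 + (-179/97)*a^3 + (158/97)*a^2 + (-27/97)*a + (-42/97) : K) := by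
    simp only [WeierstrassCurve.Affine.addX, ha1, ha2]
    linear_combination ((-171/9409)*a^8 + (-1839/9409)*a^7 + (1065/9409)*a^6 + (-1829/9409)*a^5 + (8452/9409)*a^4 + (-4/9409)*a^3 + (5625/9409)*a^2 + (-5043/9409)*a + (-1271/9409) : K) * hpoly
  have hY10 : E.addY ((-18/97)*a^9 + (8/97)*a^8 + (-2/97)*a^7 + (33/97)*a^6 + (-10/97)*a^5 + (-19/97)*a^4 + (-80/97)*a^3 + (192/97)*a^2 + (-147/97)*a + (30/97) : K) 0 ((-7/97)*a^9 + (57/97)*a^8 + (-87/97)*a^7 + (126/97)*a^6 + (-241/97)*a^5 + (289/97)*a^4 + (-85/97)*a^3 + (10/97)*a^2 + (-41/97)*a + (44/97) : K) ((3/97)*a^9 + (31/97)*a^8 + (-32/97)*a^7 + (43/97)*a^6 + (-160/97)*a^5 + (84/97)*a^4 + (-116/97)*a^3 + (162/97)*a^2 + (-121/97)*a + (-5/97) : K) = ((-9/97)*a^9 + (4/97)*a^8 + (-1/97)*a^7 + (65/97)*a^6 + (-102/97)*a^5 + (-155/97)*a^4 + (251/97)*a^3 + (-98/97)*a^2 +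 (-25/97)*a + (15/97) : K) := by
    simp only [WeierstrassCurve.Affine.addY, WeierstrassCurve.Affine.negAddY,
      WeierstrassCurve.Affine.addX, WeierstrassCurve.Affine.negY, ha1, ha2, ha3]
    linear_combination ((-9747/912673)*a^17 + (-89433/912673)*a^16 + (214074/912673)*a^15 + (-287922/912673)*a^14 + (1137621/912673)*a^13 + (-1622416/912673)*a^12 + (1729360/912673)*a^11 + (-3625728/912673)*a^10 + (3574445/912673)*a^9 + (-2963161/912673)*a^8 + (4502059/912673)*a^7 + (-3613393/912673)*a^6 + (2360284/912673)*a^5 + (-2641593/912673)*a^4 + (1841309/912673)*a^3 + (-1567233/912673)*a^2 + (337369/912673)*a + (246942/912673) : K) * hpoly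
  have h11 : E.Nonsingular ((-33/97)*a^9 + (47/97)*a^8 + (-36/97)*a^7 + (109/97)*a^6 + (-83/97)*a^5 + (46/97)*a^4 + (-179/97)*a^3 + (158/97)*a^2 + (-27/97)*a + (-42/97) : K) ((-9/97)*a^9 + (4/97)*a^8 + (-1/97)*a^7 + (65/97)*a^6 + (-102/97)*a^5 + (-155/97)*a^4 + (251/97)*a^3 + (-98/97)*a^2 + (-25/97)*a + (15/97) : K) := by
    have hh := WeierstrassCurve.Affine.nonsingular_add h10 h1 (fun hq => absurd hq.1 hx10)
    rwa [hL10, hX10, hY10] at hh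
  have P11 : (11:ℕ) • P = WeierstrassCurve.Affine.Point.some _ _ h11 := by
    have e : (11:ℕ) • P = (10:ℕ) • P + P := by rw [← succ_nsmul]
    rw [e, P10, hP, WeierstrassCurve.Affine.Point.add_of_X_ne hx10]
    exact some_congr' (by rw [hL10]; exact hX10) (by rw [hL10]; exact hY10)
  -- step 11 -> 12
  have hx11 : ((-33/97)*a^9 + (47/97)*a^8 + (-36/97)*a^7 + (109/97)*a^6 + (-83/97)*a^5 + (46/97)*a^4 + (-179/97)*a^3 + (158/97)*a^2 + (-27/97)*a + (-42/97) : K) ≠ 0 := fun h => one_ne_zero (α := K)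
    (by linear_combination ((261/97)*a^9 + (-407/97)*a^8 + (514/97)*a^7 + (-1400/97)*a^6 + (1503/97)*a^5 + (-1228/97)*a^4 + (1645/97)*a^3 + (-1911/97)*a^2 + (1210/97)*a + (-920/97) : K) * h + ((8613/9409)*a^8 + (-8472/9409)*a^7 + (11317/9409)*a^6 + (-30816/9409)*a^5 + (13012/9409)*a^4 + (-25381/9409)*a^3 + (48387/9409)*a^2 + (-25980/9409)*a + (29231/9409) : K) * hpoly)
  have hL11 : E.slope ((-33/97)*a^9 + (47/97)*a^8 + (-36/97)*a^7 + (109/97)*a^6 + (-83/97)*a^5 + (46/97)*a^4 + (-179/97)*a^3 + (158/97)*a^2 + (-27/97)*a + (-42/97) : K) 0 ((-9/97)*a^9 + (4/97)*a^8 + (-1/97)*a^7 + (65/97)*a^6 + (-102/97)*a^5 + (-155/97)*a^4 + (251/97)*a^3 + (-98/97)*a^2 + (-25/97)*a + (15/97) : K) 0 = ((23/97)*a^9 + (-21/97)*a^8 + (-19/97)*a^7 + (-26/97)*a^6 + (2/97)*a^5 + (159/97)*a^4 + (-81/97)*a^3 + (-19/97)*a^2 + (10/97)*a + (-6/97) :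 K) := by
    rw [WeierstrassCurve.Affine.slope_of_X_ne hx11, sub_zero, sub_zero, div_eq_iff hx11]
    linear_combination ((759/9409)*a^8 + (-256/9409)*a^7 + (-842/9409)*a^6 + (-605/9409)*a^5 + (-1317/9409)*a^4 + (2681/9409)*a^3 + (3071/9409)*a^2 + (2167/9409)*a + (-1203/9409) : K) * hpoly
  have hX11 : E.addX ((-33/97)*a^9 + (47/97)*a^8 + (-36/97)*a^7 + (109/97)*a^6 + (-83/97)*a^5 + (46/97)*a^4 + (-179/97)*a^3 + (158/97)*a^2 + (-27/97)*a + (-42/97) : K) 0 ((23/97)*a^9 + (-21/97)*a^8 + (-19/97)*a^7 + (-26/97)*a^6 + (2/97)*a^5 + (159/97)*a^4 + (-81/97)*a^3 + (-19/97)*a^2 + (10/97)*a + (-6/97) : K) = ((63/97)*a^9 + (-125/97)*a^8 + (201/97)*a^7 + (-358/97)*a^6 + (423/97)*a^5 + (-273/97)*a^4 + (86/97)*a^3 + (7/97)*a^2 + (-19/97)*a + (-8/97) : K) := by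
    simp only [WeierstrassCurve.Affine.addX, ha1, ha2]
    linear_combination ((-851/9409)*a^8 + (-51/9409)*a^7 + (171/9409)*a^6 + (1810/9409)*a^5 + (3011/9409)*a^4 + (-2568/9409)*a^3 + (1201/9409)*a^2 + (-4402/9409)*a + (-4868/9409) : K) * hpoly
  have hY11 : E.addY ((-33/97)*a^9 + (47/97)*a^8 + (-36/97)*a^7 + (109/97)*a^6 + (-83/97)*a^5 + (46/97)*a^4 + (-179/97)*a^3 + (158/97)*a^2 + (-27/97)*a + (-42/97) : K) 0 ((-9/97)*a^9 + (4/97)*a^8 + (-1/97)*a^7 + (65/97)*a^6 + (-102/97)*a^5 + (-155/97)*a^4 + (251/97)*a^3 + (-98/97)*a^2 + (-25/97)*a + (15/97) : K) ((23/97)*a^9 + (-21/97)*a^8 + (-19/97)*a^7 + (-26/97)*a^6 + (2/97)*a^5 + (159/97)*a^4 + (-81/97)*a^3 + (-19/97)*a^2 + (10/97)*a + (-6/97) : K) = ((-104/97)*a^9 + (154/97)*a^8 + (-475/97)*a^7 + (902/97)*a^6 + (-1211/97)*a^5 + (1453/97)*a^4 + (-1540/97)*a^3 + (689/97)*a^2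 + (56/97)*a + (-150/97) : K) := by
    simp only [WeierstrassCurve.Affine.addY, WeierstrassCurve.Affine.negAddY,
      WeierstrassCurve.Affine.addX, WeierstrassCurve.Affine.negY, ha1, ha2, ha3]
    linear_combination ((-31487/912673)*a^17 + (30451/912673)*a^16 + (-41093/912673)*a^15 + (211545/912673)*a^14 + (-19920/912673)*a^13 + (-31373/912673)*a^12 + (-63746/912673)*a^11 + (-721925/912673)*a^10 + (600465/912673)*a^9 + (-532495/912673)*a^8 + (955949/912673)*a^7 + (642462/912673)*a^6 + (-816427/912673)*a^5 + (825608/912673)*a^4 + (-1120832/912673)*a^3 + (-661609/912673)*a^2 + (671801/912673)*a + (-966465/912673) : K) * hpoly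
  have h12 : E.Nonsingular ((63/97)*a^9 + (-125/97)*a^8 + (201/97)*a^7 + (-358/97)*a^6 + (423/97)*a^5 + (-273/97)*a^4 + (86/97)*a^3 + (7/97)*a^2 + (-19/97)*a + (-8/97) : K) ((-104/97)*a^9 + (154/97)*a^8 + (-475/97)*a^7 + (902/97)*a^6 + (-1211/97)*a^5 + (1453/97)*a^4 + (-1540/97)*a^3 + (689/97)*a^2 + (56/97)*a + (-150/97) : K) := by
    have hh := WeierstrassCurve.Affine.nonsingular_add h11 h1 (fun hq => absurd hq.1 hx11)
    rwa [hL11, hX11, hY11] at hh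
  have P12 : (12:ℕ) • P = WeierstrassCurve.Affine.Point.some _ _ h12 := by
    have e : (12:ℕ) • P = (11:ℕ) • P + P := by rw [← succ_nsmul]
    rw [e, P11, hP, WeierstrassCurve.Affine.Point.add_of_X_ne hx11]
    exact some_congr' (by rw [hL11]; exact hX11) (by rw [hL11]; exact hY11)
  -- step 12 -> 13
  have hx12 : ((63/97)*a^9 + (-125/97)*a^8 + (201/97)*a^7 + (-358/97)*a^6 + (423/97)*a^5 + (-273/97)*a^4 + (86/97)*a^3 + (7/97)*a^2 + (-19/97)*a + (-8/97) : K) ≠ 0 := fun h => one_ne_zero (α := K)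
    (by linear_combination ((363/97)*a^9 + (-420/97)*a^8 + (396/97)*a^7 + (-1684/97)*a^6 + (1301/97)*a^5 + (-603/97)*a^4 + (1775/97)*a^3 + (-1835/97)*a^2 + (491/97)*a + (-411/97) : K) * h + ((-22869/9409)*a^8 + (26097/9409)*a^7 + (-52479/9409)*a^6 + (98469/9409)*a^5 + (-83504/9409)*a^4 + (57129/9409)*a^3 + (-28131/9409)*a^2 + (3881/9409)*a + (-6121/9409) : K) * hpoly)
  have hL12 : E.slope ((63/97)*a^9 + (-125/97)*a^8 + (201/97)*a^7 + (-358/97)*a^6 + (423/97)*a^5 + (-273/97)*a^4 + (86/97)*a^3 + (7/97)*a^2 + (-19/97)*a + (-8/97) : K) 0 ((-104/97)*a^9 + (154/97)*a^8 + (-475/97)*a^7 + (902/97)*a^6 + (-1211/97)*a^5 + (1453/97)*a^4 + (-1540/97)*a^3 + (689/97)*a^2 + (56/97)*a + (-150/97) : K) 0 = ((15/97)*a^9 + (-39/97)*a^8 + (34/97)*a^7 + (-76/97)*a^6 + (73/97)*a^5 + (-65/97)*a^4 + (2/97)*a^3 + (34/97)*a^2 + (-23/97)*a + (-25/97) : K)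 := by
    rw [WeierstrassCurve.Affine.slope_of_X_ne hx12, sub_zero, sub_zero, div_eq_iff hx12]
    linear_combination ((-945/9409)*a^8 + (2442/9409)*a^7 + (-3258/9409)*a^6 + (6122/9409)*a^5 + (-3655/9409)*a^4 + (4542/9409)*a^3 + (6907/9409)*a^2 + (-4773/9409)*a + (14750/9409) : K) * hpoly
  have hX12 : E.addX ((63/97)*a^9 + (-125/97)*a^8 + (201/97)*a^7 + (-358/97)*a^6 + (423/97)*a^5 + (-273/97)*a^4 + (86/97)*a^3 + (7/97)*a^2 + (-19/97)*a + (-8/97) : K) 0 ((15/97)*a^9 + (-39/97)*a^8 + (34/97)*a^7 + (-76/97)*a^6 + (73/97)*a^5 + (-65/97)*a^4 + (2/97)*a^3 + (34/97)*a^2 + (-23/97)*a + (-25/97) : K) = ((23/97)*a^9 + (-21/97)*a^8 + (-19/97)*a^7 + (-26/97)*a^6 + (99/97)*a^5 + (-35/97)*a^4 + (16/97)*a^3 + (-19/97)*a^2 + (10/97)*a + (-6/97) : K) := by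
    simp only [WeierstrassCurve.Affine.addX, ha1, ha2]
    linear_combination ((-675/9409)*a^8 + (705/9409)*a^7 + (375/9409)*a^6 + (2225/9409)*a^5 + (1491/9409)*a^4 + (1526/9409)*a^3 + (5183/9409)*a^2 + (1122/9409)*a + (-65/9409) : K) * hpoly
  have hY12 : E.addY ((63/97)*a^9 + (-125/97)*a^8 + (201/97)*a^7 + (-358/97)*a^6 + (423/97)*a^5 + (-273/97)*a^4 + (86/97)*a^3 + (7/97)*a^2 + (-19/97)*a + (-8/97) : K) 0 ((-104/97)*a^9 + (154/97)*a^8 + (-475/97)*a^7 + (902/97)*a^6 + (-1211/97)*a^5 + (1453/97)*a^4 + (-1540/97)*a^3 + (689/97)*a^2 + (56/97)*a + (-150/97) : K) ((15/97)*a^9 + (-39/97)*a^8 + (34/97)*a^7 + (-76/97)*a^6 + (73/97)*a^5 + (-65/97)*a^4 + (2/97)*a^3 + (34/97)*a^2 + (-23/97)*a + (-25/97) : K) = ((-1)*a^8 + (4)*a^7 + (-4)*a^6 + (1)*a^5 + (-3)*a^4 + (8)*a^3 + (-5)*a^2 + (1) : K) := by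
    simp only [WeierstrassCurve.Affine.addY, WeierstrassCurve.Affine.negAddY,
      WeierstrassCurve.Affine.addX, WeierstrassCurve.Affine.negY, ha1, ha2, ha3]
    linear_combination ((-30375/912673)*a^17 + (45225/912673)*a^16 + (-600/912673)*a^15 + (184575/912673)*a^14 + (-84760/912673)*a^13 + (-46325/912673)*a^12 + (-8300/912673)*a^11 + (-82906/912673)*a^10 + (-29991/912673)*a^9 + (-249502/912673)*a^8 + (-281734/912673)*a^7 + (653498/912673)*a^6 + (-933919/912673)*a^5 + (6974/912673)*a^4 + (-211068/912673)*a^3 + (-1006855/912673)*a^2 + (560147/912673)*a + (-613306/912673) : K) * hpoly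
  have h13 : E.Nonsingular ((23/97)*a^9 + (-21/97)*a^8 + (-19/97)*a^7 + (-26/97)*a^6 + (99/97)*a^5 + (-35/97)*a^4 + (16/97)*a^3 + (-19/97)*a^2 + (10/97)*a + (-6/97) : K) ((-1)*a^8 + (4)*a^7 + (-4)*a^6 + (1)*a^5 + (-3)*a^4 + (8)*a^3 + (-5)*a^2 + (1) : K) := by
    have hh := WeierstrassCurve.Affine.nonsingular_add h12 h1 (fun hq => absurd hq.1 hx12)
    rwa [hL12, hX12, hY12] at hh
  have P13 : (13:ℕ) • P = WeierstrassCurve.Affine.Point.some _ _ h13 := by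
    have e : (13:ℕ) • P = (12:ℕ) • P + P := by rw [← succ_nsmul]
    rw [e, P12, hP, WeierstrassCurve.Affine.Point.add_of_X_ne hx12]
    exact some_congr' (by rw [hL12]; exact hX12) (by rw [hL12]; exact hY12)
  -- step 13 -> 14
  have hx13 : ((23/97)*a^9 + (-21/97)*a^8 + (-19/97)*a^7 + (-26/97)*a^6 + (99/97)*a^5 + (-35/97)*a^4 + (16/97)*a^3 + (-19/97)*a^2 + (10/97)*a + (-6/97) : K) ≠ 0 := fun h => one_ne_zero (α := K)
    (by linear_combination ((187/97)*a^9 + (-137/97)*a^8 + (204/97)*a^7 + (-844/97)*a^6 + (438/97)*a^5 + (-390/97)*a^4 + (982/97)*a^3 + (-863/97)*a^2 + (56/97)*a + (-538/97) : K) * h + ((-4301/9409)*a^8 + (-1524/9409)*a^7 + (1538/9409)*a^6 + (10574/9409)*a^5 + (-5438/9409)*a^4 + (-3326/9409)*a^3 + (-14945/9409)*a^2 + (-5716/9409)*a + (-6181/9409) : K) * hpoly)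
  have hL13 : E.slope ((23/97)*a^9 + (-21/97)*a^8 + (-19/97)*a^7 + (-26/97)*a^6 + (99/97)*a^5 + (-35/97)*a^4 + (16/97)*a^3 + (-19/97)*a^2 + (10/97)*a + (-6/97) : K) 0 ((-1)*a^8 + (4)*a^7 + (-4)*a^6 + (1)*a^5 + (-3)*a^4 + (8)*a^3 + (-5)*a^2 + (1) : K) 0 = ((12/97)*a^9 + (27/97)*a^8 + (-31/97)*a^7 + (-22/97)*a^6 + (-58/97)*a^5 + (45/97)*a^4 + (21/97)*a^3 + (-31/97)*a^2 + (1/97)*a + (-20/97) : K) := by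
    rw [WeierstrassCurve.Affine.slope_of_X_ne hx13, sub_zero, sub_zero, div_eq_iff hx13]
    linear_combination ((-276/9409)*a^8 + (-921/9409)*a^7 + (218/9409)*a^6 + (1578/9409)*a^5 + (-156/9409)*a^4 + (-2765/9409)*a^3 + (1176/9409)*a^2 + (-206/9409)*a + (-9289/9409) : K) * hpoly
  have hX13 : E.addX ((23/97)*a^9 + (-21/97)*a^8 + (-19/97)*a^7 + (-26/97)*a^6 + (99/97)*a^5 + (-35/97)*a^4 + (16/97)*a^3 + (-19/97)*a^2 + (10/97)*a + (-6/97) : K) 0 ((12/97)*a^9 + (27/97)*a^8 + (-31/97)*a^7 + (-22/97)*a^6 + (-58/97)*a^5 + (45/97)*a^4 + (21/97)*a^3 + (-31/97)*a^2 + (1/97)*a + (-20/97) : K) = ((-25/97)*a^9 + (65/97)*a^8 + (-89/97)*a^7 + (159/97)*a^6 + (-251/97)*a^5 + (173/97)*a^4 + (-68/97)*a^3 + (8/97)*a^2 + (6/97)*a + (-23/97) : K) := by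
    simp only [WeierstrassCurve.Affine.addX, ha1, ha2]
    linear_combination ((-576/9409)*a^8 + (-1416/9409)*a^7 + (1290/9409)*a^6 + (1252/9409)*a^5 + (3061/9409)*a^4 + (2289/9409)*a^3 + (548/9409)*a^2 + (2362/9409)*a + (-1795/9409) : K) * hpoly
  have hY13 : E.addY ((23/97)*a^9 + (-21/97)*a^8 + (-19/97)*a^7 + (-26/97)*a^6 + (99/97)*a^5 + (-35/97)*a^4 + (16/97)*a^3 + (-19/97)*a^2 + (10/97)*a + (-6/97) : K) 0 ((-1)*a^8 + (4)*a^7 + (-4)*a^6 + (1)*a^5 + (-3)*a^4 + (8)*a^3 + (-5)*a^2 + (1) : K) ((12/97)*a^9 + (27/97)*a^8 + (-31/97)*a^7 + (-22/97)*a^6 + (-58/97)*a^5 + (45/97)*a^4 + (21/97)*a^3 + (-31/97)*a^2 + (1/97)*a + (-20/97) : K) = ((51/97)*a^9 + (-249/97)*a^8 + (620/97)*a^7 + (-1015/97)*a^6 + (1451/97)*a^5 + (-1773/97)*a^4 + (1423/97)*a^3 + (-447/97)*a^2 + (-117/97)*a + (109/97) : K) := by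
    simp only [WeierstrassCurve.Affine.addY, WeierstrassCurve.Affine.negAddY,
      WeierstrassCurve.Affine.addX, WeierstrassCurve.Affine.negY, ha1, ha2, ha3]
    linear_combination ((-27648/912673)*a^17 + (-18432/912673)*a^16 + (143376/912673)*a^15 + (-43404/912673)*a^14 + (301660/912673)*a^13 + (-517216/912673)*a^12 + (40652/912673)*a^11 + (-128595/912673)*a^10 + (-195251/912673)*a^9 + (432242/912673)*a^8 + (-96608/912673)*a^7 + (124349/912673)*a^6 + (-62628/912673)*a^5 + (-883977/912673)*a^4 + (135399/912673)*a^3 + (380830/912673)*a^2 + (-1127437/912673)*a + (1835280/912673) : K) * hpoly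
  have h14 : E.Nonsingular ((-25/97)*a^9 + (65/97)*a^8 + (-89/97)*a^7 + (159/97)*a^6 + (-251/97)*a^5 + (173/97)*a^4 + (-68/97)*a^3 + (8/97)*a^2 + (6/97)*a + (-23/97) : K) ((51/97)*a^9 + (-249/97)*a^8 + (620/97)*a^7 + (-1015/97)*a^6 + (1451/97)*a^5 + (-1773/97)*a^4 + (1423/97)*a^3 + (-447/97)*a^2 + (-117/97)*a + (109/97) : K) := by
    have hh := WeierstrassCurve.Affine.nonsingular_add h13 h1 (fun hq => absurd hq.1 hx13)
    rwa [hL13, hX13, hY13] at hh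
  have P14 : (14:ℕ) • P = WeierstrassCurve.Affine.Point.some _ _ h14 := by
    have e : (14:ℕ) • P = (13:ℕ) • P + P := by rw [← succ_nsmul]
    rw [e, P13, hP, WeierstrassCurve.Affine.Point.add_of_X_ne hx13]
    exact some_congr' (by rw [hL13]; exact hX13) (by rw [hL13]; exact hY13)
  -- step 14 -> 15
  have hx14 : ((-25/97)*a^9 + (65/97)*a^8 + (-89/97)*a^7 + (159/97)*a^6 + (-251/97)*a^5 + (173/97)*a^4 + (-68/97)*a^3 + (8/97)*a^2 + (6/97)*a + (-23/97) : K) ≠ 0 := fun h => one_ne_zero (α := K)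
    (by linear_combination ((257/97)*a^9 + (-222/97)*a^8 + (201/97)*a^7 + (-1134/97)*a^6 + (617/97)*a^5 + (-176/97)*a^4 + (1250/97)*a^3 + (-1060/97)*a^2 + (-116/97)*a + (-396/97) : K) * h + ((6425/9409)*a^8 + (-9405/9409)*a^7 + (10668/9409)*a^6 + (-29765/9409)*a^5 + (33963/9409)*a^4 + (-5242/9409)*a^3 + (19011/9409)*a^2 + (292/9409)*a + (-301/9409) : K) * hpoly)
  have hL14 : E.slope ((-25/97)*a^9 + (65/97)*a^8 + (-89/97)*a^7 + (159/97)*a^6 + (-251/97)*a^5 + (173/97)*a^4 + (-68/97)*a^3 + (8/97)*a^2 + (6/97)*a + (-23/97) : K) 0 ((51/97)*a^9 + (-249/97)*a^8 + (620/97)*a^7 + (-1015/97)*a^6 + (1451/97)*a^5 + (-1773/97)*a^4 + (1423/97)*a^3 + (-447/97)*a^2 + (-117/97)*a + (109/97) : K) 0 = ((21/97)*a^9 + (-74/97)*a^8 + (67/97)*a^7 + (-87/97)*a^6 + (141/97)*a^5 + (6/97)*a^4 + (-133/97)*a^3 + (67/97)*a^2 + (26/97)*a + (-35/97) : K) :=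 by
    rw [WeierstrassCurve.Affine.slope_of_X_ne hx14, sub_zero, sub_zero, div_eq_iff hx14]
    linear_combination ((525/9409)*a^8 + (-2165/9409)*a^7 + (2974/9409)*a^6 + (-3552/9409)*a^5 + (4628/9409)*a^4 + (-1133/9409)*a^3 + (-7146/9409)*a^2 + (10541/9409)*a + (-9768/9409) : K) * hpoly
  have hX14 : E.addX ((-25/97)*a^9 + (65/97)*a^8 + (-89/97)*a^7 + (159/97)*a^6 + (-251/97)*a^5 + (173/97)*a^4 + (-68/97)*a^3 + (8/97)*a^2 + (6/97)*a + (-23/97) : K) 0 ((21/97)*a^9 + (-74/97)*a^8 + (67/97)*a^7 + (-87/97)*a^6 + (141/97)*a^5 + (6/97)*a^4 + (-133/97)*a^3 + (67/97)*a^2 + (26/97)*a + (-35/97) : K) = ((-25/97)*a^9 + (65/97)*a^8 + (-89/97)*a^7 + (159/97)*a^6 + (-251/97)*a^5 + (173/97)*a^4 + (-68/97)*a^3 + (8/97)*a^2 + (6/97)*a + (-23/97) : K) := by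
    simp only [WeierstrassCurve.Affine.addX, ha1, ha2]
    linear_combination ((-819/9409)*a^8 + (933/9409)*a^7 + (2589/9409)*a^6 + (2053/9409)*a^5 + (-969/9409)*a^4 + (-3358/9409)*a^3 + (-5253/9409)*a^2 + (1179/9409)*a + (-2769/9409) : K) * hpoly
  have hY14 : E.addY ((-25/97)*a^9 + (65/97)*a^8 + (-89/97)*a^7 + (159/97)*a^6 + (-251/97)*a^5 + (173/97)*a^4 + (-68/97)*a^3 + (8/97)*a^2 + (6/97)*a + (-23/97) : K) 0 ((51/97)*a^9 + (-249/97)*a^8 + (620/97)*a^7 + (-1015/97)*a^6 + (1451/97)*a^5 + (-1773/97)*a^4 + (1423/97)*a^3 + (-447/97)*a^2 + (-117/97)*a + (109/97) : K) ((21/97)*a^9 + (-74/97)*a^8 + (67/97)*a^7 + (-87/97)*a^6 + (141/97)*a^5 + (6/97)*a^4 + (-133/97)*a^3 + (67/97)*a^2 + (26/97)*a + (-35/97) : K) = ((-1/97)*a^9 + (22/97)*a^8 + (-151/97)*a^7 + (212/97)*a^6 + (-173/97)*a^5 + (360/97)*a^4 + (-608/97)*a^3 + (334/97)*a^2 + (8/97)*a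 + (-63/97) : K) := by
    simp only [WeierstrassCurve.Affine.addY, WeierstrassCurve.Affine.negAddY,
      WeierstrassCurve.Affine.addX, WeierstrassCurve.Affine.negY, ha1, ha2, ha3]
    linear_combination ((-31941/912673)*a^17 + (24102/912673)*a^16 + (137898/912673)*a^15 + (191058/912673)*a^14 + (-156231/912673)*a^13 + (-574255/912673)*a^12 + (-677946/912673)*a^11 + (387864/912673)*a^10 + (818353/912673)*a^9 + (529972/912673)*a^8 + (-199912/912673)*a^7 + (-646293/912673)*a^6 + (243270/912673)*a^5 + (330362/912673)*a^4 + (-364324/912673)*a^3 + (1045088/912673)*a^2 + (-880622/912673)*a + (333245/912673) : K) * hpoly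
  have h15 : E.Nonsingular ((-25/97)*a^9 + (65/97)*a^8 + (-89/97)*a^7 + (159/97)*a^6 + (-251/97)*a^5 + (173/97)*a^4 + (-68/97)*a^3 + (8/97)*a^2 + (6/97)*a + (-23/97) : K) ((-1/97)*a^9 + (22/97)*a^8 + (-151/97)*a^7 + (212/97)*a^6 + (-173/97)*a^5 + (360/97)*a^4 + (-608/97)*a^3 + (334/97)*a^2 + (8/97)*a + (-63/97) : K) := by
    have hh := WeierstrassCurve.Affine.nonsingular_add h14 h1 (fun hq => absurd hq.1 hx14)
    rwa [hL14, hX14, hY14] at hh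
  have P15 : (15:ℕ) • P = WeierstrassCurve.Affine.Point.some _ _ h15 := by
    have e : (15:ℕ) • P = (14:ℕ) • P + P := by rw [← succ_nsmul]
    rw [e, P14, hP, WeierstrassCurve.Affine.Point.add_of_X_ne hx14]
    exact some_congr' (by rw [hL14]; exact hX14) (by rw [hL14]; exact hY14)
  have hyfin : ((51/97)*a^9 + (-249/97)*a^8 + (620/97)*a^7 + (-1015/97)*a^6 + (1451/97)*a^5 + (-1773/97)*a^4 + (1423/97)*a^3 + (-447/97)*a^2 + (-117/97)*a + (109/97) : K) = E.negY ((-25/97)*a^9 + (65/97)*a^8 + (-89/97)*a^7 + (159/97)*a^6 + (-251/97)*a^5 + (173/97)*a^4 + (-68/97)*a^3 + (8/97)*a^2 + (6/97)*a + (-23/97) : K) ((-1/97)*a^9 + (22/97)*a^8 + (-151/97)*a^7 + (212/97)*a^6 + (-173/97)*a^5 + (360/97)*a^4 + (-608/97)*a^3 + (334/97)*a^2 + (8/97)*a + (-63/97) : K) := by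
    simp only [WeierstrassCurve.Affine.negY, ha1, ha3]
    linear_combination ((1500/9409)*a^8 + (-2375/9409)*a^7 + (2400/9409)*a^6 + (-5451/9409)*a^5 + (5740/9409)*a^4 + (1599/9409)*a^3 + (-3941/9409)*a^2 + (8888/9409)*a + (-1580/9409) : K) * hpoly
  have hsum : (14:ℕ) • P + (15:ℕ) • P = 0 := by
    rw [P14, P15]
    exact WeierstrassCurve.Affine.Point.add_of_Y_eq rfl hyfin
  have h29 : (29:ℕ) • P = 0 := by
    rw [show (29:ℕ) = 14 + 15 by norm_num, add_nsmul, hsum]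
  have hPne : P ≠ 0 := by rw [hP]; exact WeierstrassCurve.Affine.Point.some_ne_zero h1
  exact addOrderOf_eq_prime h29 hPne

open Classical in
/-- The Tate normal form curve E_{b,c} over K = ℚ(a), where a is a root of the stated
polynomial, has the point (0,0) of order exactly 29. -/
theorem stmt_10 (K : Type) [Field K] [CharZero K] (a b c : K)
    (hpoly : a^10 - 2*a^9 + 2*a^8 - 5*a^7 + 7*a^6 - 4*a^5 + 4*a^4 - 8*a^3 + 5*a^2 - 1 = 0)
    (hgen : IntermediateField.adjoin ℚ {a} = ⊤)
    (hb : b = (-23*a^9 + 21*a^8 + 19*a^7 - 71*a^6 + 95*a^5 - 159*a^4 + 178*a^3 - 78*a^2 - 10*a + 6)/97)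
    (hc : c = (60*a^9 - 59*a^8 + 39*a^7 - 207*a^6 + 98*a^5 + 31*a^4 + 8*a^3 - 58*a^2 + 5*a - 3)/97) :
    ∃ h : ({ a₁ := 1 - c, a₂ := -b, a₃ := -b, a₄ := 0, a₆ := 0 } :
        WeierstrassCurve K).toAffine.Nonsingular 0 0,
      addOrderOf (WeierstrassCurve.Affine.Point.some _ _ h) = 29 := by
  subst hb hc
  exact aux29 K a hpoly
end
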